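/- arXiv:math/0603745 — 7 statements merged into one kernel-verified Lean document; each statement's English description precedes it below -/
import Mathlib

section
/- For every integer n > 1 and every probability distribution (q(n:k), 1 ≤ k ≤ n) on {1,…,n} (nonnegative entries summing to 1), there exists a unique triangular array (q(b:k), 1 ≤ k ≤ b ≤ n) of nonnegative real numbers with ∑_{k=1}^b q(b:k) = 1 for every 1 ≤ b ≤ n, whose n-th row is the given distribution and which satisfies the consistency recursion for all 1 ≤ b < n. -/
open Finset MeasureTheory

/-- A composition of a positive integer: a nonempty list of positive parts. -/
def IsComposition (c : List ℕ) : Prop := c ≠ [] ∧ ∀ x ∈ c, 0 < x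

/-- An infinite decrement matrix: nonnegative triangular array with rows summing to 1. -/
def IsDecrementMatrix (q : ℕ → ℕ → ℝ) : Prop :=
  (∀ b k, 1 ≤ k → k ≤ b → 0 ≤ q b k) ∧
  ∀ b, 1 ≤ b → ∑ k ∈ Finset.Icc 1 b, q b k = 1

/-- Right-hand side of Möhle's recursion for `p` at the composition `c`, with coefficients
from the decrement matrix `q`. -/
noncomputable def mohleRHS (q : ℕ → ℕ → ℝ) (p : List ℕ → ℝ) (c : List ℕ) : ℝ :=
  q c.sum 1 / (c.sum : ℝ) *
      ∑ j ∈ Finset.range c.length, (if c.getD j 0 = 1 then p (c.eraseIdx j) else 0) +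
    ∑ k ∈ Finset.Icc 2 c.sum, q c.sum k *
      ∑ j ∈ Finset.range c.length,
        (if k ≤ c.getD j 0 then
            ((c.getD j 0).choose k : ℝ) / (c.sum.choose k : ℝ) * p (c.set j (c.getD j 0 - k + 1))
          else 0)

/-- Möhle's recursion holds for `p` at the composition `c`. -/
def MohleRec (q : ℕ → ℕ → ℝ) (p : List ℕ → ℝ) (c : List ℕ) : Prop := p c = mohleRHS q p c

/-- The (backward) consistency recursion for a decrement matrix, at level `b`. -/
def ConsistencyRec (q : ℕ → ℕ → ℝ) (b : ℕ) : Prop :=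
  (∀ k, 2 ≤ k → k ≤ b →
    q b k = ((k : ℝ) + 1) / ((b : ℝ) + 1) * q (b + 1) (k + 1)
      + ((b : ℝ) + 1 - (k : ℝ)) / ((b : ℝ) + 1) * q (b + 1) k
      + 1 / ((b : ℝ) + 1) * q (b + 1) 1 * q b k
      + 2 / ((b : ℝ) + 1) * q (b + 1) 2 * q b k) ∧
  q b 1 = (b : ℝ) / ((b : ℝ) + 1) * q (b + 1) 1
    + 1 / ((b : ℝ) + 1) * q (b + 1) 1 * q b 1
    + 2 / ((b : ℝ) + 1) * q (b + 1) 2 * q b 1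

/-- A finite EPPF on compositions of `m ≤ n`: nonnegative, symmetric, normalized,
satisfying the addition rule below level `n` (with the convention `p(∅) = 1`). -/
def IsFiniteEPPF (n : ℕ) (p : List ℕ → ℝ) : Prop :=
  p [] = 1 ∧ p [1] = 1 ∧
  (∀ c, IsComposition c → c.sum ≤ n → 0 ≤ p c) ∧
  (∀ c c', IsComposition c → c.sum ≤ n → List.Perm c c' → p c = p c') ∧
  ∀ c, IsComposition c → c.sum < n →
    p c = p (c ++ [1]) + ∑ i ∈ Finset.range c.length, p (c.set i (c.getD i 0 + 1))

/-- An infinite EPPF: nonnegative, symmetric, normalized, satisfying the addition rule. -/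
def IsInfEPPF (p : List ℕ → ℝ) : Prop :=
  p [1] = 1 ∧
  (∀ c, IsComposition c → 0 ≤ p c) ∧
  (∀ c c', IsComposition c → List.Perm c c' → p c = p c') ∧
  ∀ c, IsComposition c →
    p c = p (c ++ [1]) + ∑ i ∈ Finset.range c.length, p (c.set i (c.getD i 0 + 1))

/-- `Φ(b:k)` for the `(Λ, ρ)`-coalescent with freeze. -/
noncomputable def coalPhiK (Λ : Measure (Set.Icc (0:ℝ) 1)) (ρ : ℝ) (b k : ℕ) : ℝ :=
  if k = 1 then ρ * b
  else (b.choose k : ℝ) * ∫ x, (x : ℝ) ^ (k - 2) * (1 - (x : ℝ)) ^ (b - k) ∂Λ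

/-- `Φ(b) = ∑_{k=1}^b Φ(b:k)`, the total rate. -/
noncomputable def coalPhi (Λ : Measure (Set.Icc (0:ℝ) 1)) (ρ : ℝ) (b : ℕ) : ℝ :=
  ∑ k ∈ Finset.Icc 1 b, coalPhiK Λ ρ b k

/-- Iterated backward difference `∇^j c (n) = ∑_{i=0}^j (-1)^i C(j,i) c(n+i)`. -/
def nablaIter (c : ℕ → ℝ) (j n : ℕ) : ℝ :=
  ∑ i ∈ Finset.range (j + 1), (-1 : ℝ) ^ i * (j.choose i : ℝ) * c (n + i)

/-- `Φ̄(n) = Φ(n) - ρ n`. -/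
noncomputable def phiBar (Φ : ℕ → ℝ) (ρ : ℝ) (n : ℕ) : ℝ := Φ n - ρ * n

/-- `Ψ(n) = ∇Φ̄(n) / n`. -/
noncomputable def psiOf (Φ : ℕ → ℝ) (ρ : ℝ) (n : ℕ) : ℝ :=
  (phiBar Φ ρ n - phiBar Φ ρ (n + 1)) / n

/-- `Φ(n:1) = ρ n` and `Φ(n:m) = -C(n,m) ∇^{m-2} Ψ (n-m+1)` for `m ≥ 2`. -/
noncomputable def phiNM (Φ : ℕ → ℝ) (ρ : ℝ) (n m : ℕ) : ℝ :=
  if m = 1 then ρ * n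
  else -(n.choose m : ℝ) * nablaIter (psiOf Φ ρ) (m - 2) (n - m + 1)

noncomputable def stepRow (b : ℕ) (f : ℕ → ℝ) : ℕ → ℝ := fun k =>
  if b = 1 then 1
  else (if k = 1 then (b:ℝ) * f 1 else ((k:ℝ)+1) * f (k+1) + ((b:ℝ)+1-(k:ℝ)) * f k)
    / (((b:ℝ)+1) - f 1 - 2 * f 2)

noncomputable def buildRow (n : ℕ) (r : ℕ → ℝ) : ℕ → ℕ → ℝ
  | 0 => r
  | j+1 => stepRow (n - (j+1)) (buildRow n r j)

lemma dm_Epos {b : ℕ} (hb : 2 ≤ b) {f : ℕ → ℝ} (h0 : ∀ k, 1 ≤ k → k ≤ b+1 → 0 ≤ f k)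
    (h1 : ∑ k ∈ Finset.Icc 1 (b+1), f k = 1) : 0 < ((b:ℝ)+1) - f 1 - 2 * f 2 := by
  have hsub : Finset.Icc 1 2 ⊆ Finset.Icc 1 (b+1) := by
    intro x hx; simp only [Finset.mem_Icc] at *; omega
  have hle : ∑ k ∈ Finset.Icc 1 2, f k ≤ ∑ k ∈ Finset.Icc 1 (b+1), f k := by
    apply Finset.sum_le_sum_of_subset_of_nonneg hsub
    intro k hk _; simp only [Finset.mem_Icc] at hk; exact h0 k hk.1 hk.2
  have h2 : Finset.Icc 1 2 = {1, 2} := rfl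
  rw [h2] at hle; simp at hle
  rw [h1] at hle
  have hf1 : 0 ≤ f 1 := h0 1 le_rfl (by omega)
  have hf2 : 0 ≤ f 2 := h0 2 (by omega) (by omega)
  have hcast : (2:ℝ) ≤ (b:ℝ) := by exact_mod_cast hb
  linarith

lemma dm_icc_range (f : ℕ → ℝ) (a m : ℕ) :
    ∑ k ∈ Finset.Icc a (a+m), f k = ∑ i ∈ Finset.range (m+1), f (a+i) := by
  rw [← Finset.Ico_add_one_right_eq_Icc, Finset.sum_Ico_eq_sum_range]
  have : (a+m) + 1 - a = m+1 := by omega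
  rw [this]

lemma dm_key_sum (m : ℕ) (f : ℕ → ℝ) :
    ∑ k ∈ Finset.Icc 2 (m+2), (((k:ℝ)+1) * f (k+1) + ((m:ℝ)+3-(k:ℝ)) * f k)
      = ((m:ℝ)+3) * (∑ k ∈ Finset.Icc 1 (m+3), f k) - ((m:ℝ)+3) * f 1 - 2 * f 2 := by
  have h1 : ∑ k ∈ Finset.Icc 2 (m+2), (((k:ℝ)+1) * f (k+1) + ((m:ℝ)+3-(k:ℝ)) * f k)
      = ∑ i ∈ Finset.range (m+1), ((((2+i:ℕ):ℝ)+1) * f (2+i+1) + ((m:ℝ)+3-((2+i:ℕ):ℝ)) * f (2+i)) := by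
    rw [show m+2 = 2+m by ring]; exact dm_icc_range _ 2 m
  have h2 : ∑ k ∈ Finset.Icc 1 (m+3), f k = ∑ i ∈ Finset.range (m+3), f (1+i) := by
    have := dm_icc_range f 1 (m+2)
    rwa [show 1+(m+2) = m+3 by ring, show (m+2)+1 = m+3 by ring] at this
  rw [h1, h2]
  rw [Finset.sum_add_distrib]
  rw [Finset.sum_range_succ (fun i => (((2+i:ℕ):ℝ)+1) * f (2+i+1))]
  rw [Finset.sum_range_succ' (fun i => ((m:ℝ)+3-((2+i:ℕ):ℝ)) * f (2+i)) m]
  rw [Finset.sum_range_succ' (fun i => f (1+i)) (m+2)]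
  rw [Finset.sum_range_succ' (fun i => f (1+(i+1))) (m+1)]
  rw [Finset.sum_range_succ (fun i => f (1+(i+1+1))) m]
  have e1 : ∀ i, f (2+i+1) = f (1+(i+1+1)) := fun i => by ring_nf
  have e2 : ∀ i, f (2+(i+1)) = f (1+(i+1+1)) := fun i => by ring_nf
  simp only [e1, e2]
  push_cast
  have : ∑ i ∈ Finset.range m, (((2:ℝ)+i)+1) * f (1+(i+1+1))
        + ∑ i ∈ Finset.range m, ((m:ℝ)+3-(2+(i+1))) * f (1+(i+1+1))
      = ((m:ℝ)+3) * ∑ i ∈ Finset.range m, f (1+(i+1+1)) := by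
    rw [Finset.mul_sum, ← Finset.sum_add_distrib]
    apply Finset.sum_congr rfl; intro i _; ring
  linarith [this]

lemma dm_step_sum {b : ℕ} (hb : 2 ≤ b) {f : ℕ → ℝ} (h0 : ∀ k, 1 ≤ k → k ≤ b+1 → 0 ≤ f k)
    (h1 : ∑ k ∈ Finset.Icc 1 (b+1), f k = 1) :
    ∑ k ∈ Finset.Icc 1 b, stepRow b f k = 1 := by
  obtain ⟨m, rfl⟩ : ∃ m, b = m+2 := ⟨b-2, by omega⟩
  have hE := dm_Epos hb h0 h1
  have hb1 : m+2 ≠ 1 := by omega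
  have hins : Finset.Icc 1 (m+2) = insert 1 (Finset.Icc 2 (m+2)) := by
    ext x; simp only [Finset.mem_Icc, Finset.mem_insert]; omega
  have hnot : (1:ℕ) ∉ Finset.Icc 2 (m+2) := by simp
  rw [hins, Finset.sum_insert hnot]
  simp only [stepRow, if_neg hb1, if_pos rfl]
  have hcong : ∑ k ∈ Finset.Icc 2 (m+2),
      (if k = 1 then ((m+2:ℕ):ℝ) * f 1 else ((k:ℝ)+1) * f (k+1) + (((m+2:ℕ):ℝ)+1-(k:ℝ)) * f k)
        / ((((m+2:ℕ):ℝ)+1) - f 1 - 2 * f 2)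
      = (∑ k ∈ Finset.Icc 2 (m+2), (((k:ℝ)+1) * f (k+1) + ((m:ℝ)+3-(k:ℝ)) * f k))
        / ((((m+2:ℕ):ℝ)+1) - f 1 - 2 * f 2) := by
    rw [Finset.sum_div]
    apply Finset.sum_congr rfl
    intro k hk; simp only [Finset.mem_Icc] at hk
    have : k ≠ 1 := by omega
    rw [if_neg this]
    push_cast
    ring_nf
  rw [hcong, dm_key_sum]
  rw [show ((m:ℕ)+2+1 : ℕ) = m+3 by ring] at h1
  rw [h1]
  push_cast at hE ⊢
  field_simp
  ring

lemma dm_step_nonneg {b : ℕ} (hb : 2 ≤ b) {f : ℕ → ℝ} (h0 : ∀ k, 1 ≤ k → k ≤ b+1 → 0 ≤ f k)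
    (h1 : ∑ k ∈ Finset.Icc 1 (b+1), f k = 1) {k : ℕ} (hk1 : 1 ≤ k) (hkb : k ≤ b) :
    0 ≤ stepRow b f k := by
  have hE := dm_Epos hb h0 h1
  have hb1 : b ≠ 1 := by omega
  simp only [stepRow, if_neg hb1]
  apply div_nonneg _ (le_of_lt hE)
  by_cases hk : k = 1
  · rw [if_pos hk]
    exact mul_nonneg (Nat.cast_nonneg b) (h0 1 le_rfl (by omega))
  · rw [if_neg hk]
    have c1 : (0:ℝ) ≤ (k:ℝ)+1 := by positivity
    have c2 : (0:ℝ) ≤ (b:ℝ)+1-(k:ℝ) := by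
      have : (k:ℝ) ≤ (b:ℝ) := by exact_mod_cast hkb
      linarith
    have d1 := h0 (k+1) (by omega) (by omega)
    have d2 := h0 k hk1 (by omega)
    nlinarith [d1, d2]

lemma dm_step_rec_k {b : ℕ} (hb : 2 ≤ b) {f : ℕ → ℝ} (h0 : ∀ k, 1 ≤ k → k ≤ b+1 → 0 ≤ f k)
    (h1 : ∑ k ∈ Finset.Icc 1 (b+1), f k = 1) {k : ℕ} (hk1 : 2 ≤ k) :
    stepRow b f k = ((k:ℝ)+1)/((b:ℝ)+1) * f (k+1) + ((b:ℝ)+1-(k:ℝ))/((b:ℝ)+1) * f k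
      + 1/((b:ℝ)+1) * f 1 * stepRow b f k + 2/((b:ℝ)+1) * f 2 * stepRow b f k := by
  have hE := dm_Epos hb h0 h1
  have hb1 : b ≠ 1 := by omega
  have hk1' : k ≠ 1 := by omega
  have hEne : ((b:ℝ)+1) - f 1 - 2 * f 2 ≠ 0 := ne_of_gt hE
  have hbne : ((b:ℝ)+1) ≠ 0 := by positivity
  simp only [stepRow, if_neg hb1, if_neg hk1']
  field_simp
  ring

lemma dm_step_rec_1 {b : ℕ} (hb : 2 ≤ b) {f : ℕ → ℝ} (h0 : ∀ k, 1 ≤ k → k ≤ b+1 → 0 ≤ f k)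
    (h1 : ∑ k ∈ Finset.Icc 1 (b+1), f k = 1) :
    stepRow b f 1 = (b:ℝ)/((b:ℝ)+1) * f 1
      + 1/((b:ℝ)+1) * f 1 * stepRow b f 1 + 2/((b:ℝ)+1) * f 2 * stepRow b f 1 := by
  have hE := dm_Epos hb h0 h1
  have hb1 : b ≠ 1 := by omega
  have hEne : ((b:ℝ)+1) - f 1 - 2 * f 2 ≠ 0 := ne_of_gt hE
  have hbne : ((b:ℝ)+1) ≠ 0 := by positivity
  simp only [stepRow, if_neg hb1, if_pos rfl, ↓reduceIte]
  field_simp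
  ring

lemma dm_key_of (p : ℕ → ℕ → ℝ) (b : ℕ) (hp : ConsistencyRec p b) :
    (∀ k, 2 ≤ k → k ≤ b →
      p b k * (((b:ℝ)+1) - p (b+1) 1 - 2 * p (b+1) 2)
        = ((k:ℝ)+1) * p (b+1) (k+1) + ((b:ℝ)+1-(k:ℝ)) * p (b+1) k) ∧
    p b 1 * (((b:ℝ)+1) - p (b+1) 1 - 2 * p (b+1) 2) = (b:ℝ) * p (b+1) 1 := by
  have hbne : ((b:ℝ)+1) ≠ 0 := by positivity
  obtain ⟨h2, h1⟩ := hp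
  constructor
  · intro k hk2 hkb
    have hh := h2 k hk2 hkb
    field_simp at hh
    linarith [hh]
  · field_simp at h1
    linarith [h1]

/-- For every `n > 1` and every probability distribution `q(n:·)` on `{1,…,n}`
there is a unique finite decrement matrix with this `n`-th row satisfying the consistency
recursion for all `1 ≤ b < n`. -/
theorem unique_consistent_finite_decrement_matrix (n : ℕ) (hn : 1 < n) (r : ℕ → ℝ)
    (hr0 : ∀ k, 1 ≤ k → k ≤ n → 0 ≤ r k) (hr1 : ∑ k ∈ Finset.Icc 1 n, r k = 1) :
    ∃ q : ℕ → ℕ → ℝ,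
      ((∀ b k, 1 ≤ k → k ≤ b → b ≤ n → 0 ≤ q b k) ∧
        (∀ b, 1 ≤ b → b ≤ n → ∑ k ∈ Finset.Icc 1 b, q b k = 1) ∧
        (∀ k, 1 ≤ k → k ≤ n → q n k = r k) ∧
        (∀ b, 1 ≤ b → b < n → ConsistencyRec q b)) ∧
      ∀ q' : ℕ → ℕ → ℝ,
        ((∀ b k, 1 ≤ k → k ≤ b → b ≤ n → 0 ≤ q' b k) ∧
          (∀ b, 1 ≤ b → b ≤ n → ∑ k ∈ Finset.Icc 1 b, q' b k = 1) ∧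
          (∀ k, 1 ≤ k → k ≤ n → q' n k = r k) ∧
          (∀ b, 1 ≤ b → b < n → ConsistencyRec q' b)) →
        ∀ b k, 1 ≤ k → k ≤ b → b ≤ n → q' b k = q b k := by
  -- the candidate matrix
  refine ⟨fun b k => buildRow n r (n - b) k, ?_⟩
  -- rows are good, by induction going down
  have good : ∀ j, j < n → (∀ k, 1 ≤ k → k ≤ n - j → 0 ≤ buildRow n r j k) ∧
      (∑ k ∈ Finset.Icc 1 (n - j), buildRow n r j k = 1) := by
    intro j
    induction j with
    | zero =>
      intro _
      constructor
      · intro k h1 h2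
        exact hr0 k h1 (by simpa using h2)
      · simpa [buildRow] using hr1
    | succ j ih =>
      intro hj
      obtain ⟨ih0, ih1⟩ := ih (by omega)
      have hstep : buildRow n r (j+1) = stepRow (n - (j+1)) (buildRow n r j) := rfl
      have hb1 : (n - (j+1)) + 1 = n - j := by omega
      rw [hstep]
      by_cases hb : n - (j+1) = 1
      · rw [hb, Finset.Icc_self]
        constructor
        · intro k _ _; simp [stepRow]
        · simp [stepRow]
      · have hb2 : 2 ≤ n - (j+1) := by omega
        have h0' : ∀ k, 1 ≤ k → k ≤ (n - (j+1)) + 1 → 0 ≤ buildRow n r j k := by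
          intro k hk1 hk2; exact ih0 k hk1 (by omega)
        have h1' : ∑ k ∈ Finset.Icc 1 ((n - (j+1)) + 1), buildRow n r j k = 1 := by
          rw [hb1]; exact ih1
        exact ⟨fun k hk1 hk2 => dm_step_nonneg hb2 h0' h1' hk1 hk2, dm_step_sum hb2 h0' h1'⟩
  have qrow : ∀ b, 1 ≤ b → b ≤ n →
      (∀ k, 1 ≤ k → k ≤ b → 0 ≤ buildRow n r (n - b) k) ∧
      (∑ k ∈ Finset.Icc 1 b, buildRow n r (n - b) k = 1) := by
    intro b hb1 hbn
    have := good (n - b) (by omega)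
    rwa [show n - (n - b) = b by omega] at this
  -- identification of row b with the step applied to row b+1
  have hQstep : ∀ b, 1 ≤ b → b < n → ∀ k,
      buildRow n r (n - b) k = stepRow b (buildRow n r (n - (b+1))) k := by
    intro b hb1 hbn k
    rw [show n - b = (n - (b+1)) + 1 by omega]
    show stepRow (n - ((n - (b+1)) + 1)) (buildRow n r (n - (b+1))) k = _
    rw [show n - ((n - (b+1)) + 1) = b by omega]
  -- consistency of the candidate
  have hcons : ∀ b, 1 ≤ b → b < n → ConsistencyRec (fun b k => buildRow n r (n - b) k) b := by
    intro b hb1 hbn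
    by_cases hb : b = 1
    · subst hb
      constructor
      · intro k hk2 hkb; omega
      · have h2n : 2 ≤ n := by omega
        obtain ⟨_, hsum2⟩ := qrow 2 (by omega) h2n
        have hpair : Finset.Icc 1 2 = {1, 2} := rfl
        rw [hpair, Finset.sum_pair (by omega : (1:ℕ) ≠ 2)] at hsum2
        have h11 : buildRow n r (n - 1) 1 = 1 := by
          rw [hQstep 1 le_rfl (by omega)]
          simp [stepRow]
        simp only []
        rw [h11]
        push_cast
        linarith [hsum2]
    · have hb2 : 2 ≤ b := by omega
      obtain ⟨h0', h1'⟩ := qrow (b+1) (by omega) (by omega)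
      rw [show n - (b+1) = n - (b+1) from rfl] at h0' h1'
      constructor
      · intro k hk2 hkb
        simp only []
        rw [hQstep b (by omega) hbn k]
        exact dm_step_rec_k hb2 h0' h1' hk2
      · simp only []
        rw [hQstep b (by omega) hbn 1]
        exact dm_step_rec_1 hb2 h0' h1'
  refine ⟨⟨?_, ?_, ?_, hcons⟩, ?_⟩
  · intro b k hk1 hkb hbn
    exact (qrow b (by omega) hbn).1 k hk1 hkb
  · intro b hb1 hbn
    exact (qrow b hb1 hbn).2
  · intro k hk1 hkn
    simp [buildRow]
  -- uniqueness
  · rintro q' ⟨hq'0, hq'1, hq'n, hq'c⟩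
    have claim : ∀ j, j < n → ∀ k, 1 ≤ k → k ≤ n - j → q' (n - j) k = buildRow n r j k := by
      intro j
      induction j with
      | zero =>
        intro _ k hk1 hk2
        simp only [Nat.sub_zero] at hk2 ⊢
        rw [hq'n k hk1 hk2]
        rfl
      | succ j ih =>
        intro hj k hk1 hk2
        have ihj := ih (by omega)
        set b := n - (j+1) with hbdef
        have hbn : b < n := by omega
        have hb1 : 1 ≤ b := by omega
        have hbsucc : b + 1 = n - j := by omega
        have hrows : ∀ k', 1 ≤ k' → k' ≤ b + 1 →
            q' (b+1) k' = buildRow n r (n - (b+1)) k' := by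
          intro k' h1 h2
          rw [show n - (b+1) = j by omega]
          rw [hbsucc]
          exact ihj k' h1 (by omega)
        have hQb : ∀ k', buildRow n r (j+1) k' = stepRow b (buildRow n r (n - (b+1))) k' := by
          intro k'
          have := hQstep b hb1 hbn k'
          rwa [show n - b = j + 1 by omega] at this
        by_cases hb : b = 1
        · -- forced by normalization
          have hkk : k = 1 := by omega
          subst hkk
          have hsingle : Finset.Icc 1 b = {1} := by rw [hb, Finset.Icc_self]
          have hsq' := hq'1 b hb1 (le_of_lt hbn)
          rw [hsingle, Finset.sum_singleton] at hsq'
          obtain ⟨_, hsumQ⟩ := qrow b hb1 (le_of_lt hbn)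
          rw [hsingle, Finset.sum_singleton] at hsumQ
          rw [hsq', show j + 1 = n - b by omega]
          exact hsumQ.symm
        · have hb2 : 2 ≤ b := by omega
          obtain ⟨hr0', hr1'⟩ := qrow (b+1) (by omega) (by omega)
          have hE := dm_Epos hb2 hr0' hr1'
          have hEne : ((b:ℝ)+1) - buildRow n r (n - (b+1)) 1 - 2 * buildRow n r (n - (b+1)) 2 ≠ 0 :=
            ne_of_gt hE
          -- key equations for q'
          have hk'c := dm_key_of q' b (hq'c b hb1 hbn)
          have hkQc := dm_key_of (fun b k => buildRow n r (n - b) k) b (hcons b hb1 hbn)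
          -- rewrite q' (b+1) entries
          have r1 := hrows 1 le_rfl (by omega)
          have r2 := hrows 2 (by omega) (by omega)
          have rk := hrows k hk1 (by omega)
          have goal' : q' b k = buildRow n r (n - b) k := by
            by_cases hk : k = 1
            · subst hk
              have A := hk'c.2
              rw [r1, r2] at A
              have B := hkQc.2
              exact mul_right_cancel₀ hEne (A.trans B.symm)
            · have hk2' : 2 ≤ k := by omega
              have hkb : k ≤ b := by omega
              have rk1 := hrows (k+1) (by omega) (by omega)
              have A := hk'c.1 k hk2' hkb
              rw [r1, r2, rk, rk1] at A
              have B := hkQc.1 k hk2' hkb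
              exact mul_right_cancel₀ hEne (A.trans B.symm)
          rw [goal']
          rw [show n - b = j + 1 by omega]
    intro b k hk1 hkb hbn
    have := claim (n - b) (by omega) k hk1 (by omega)
    rwa [show n - (n - b) = b by omega] at this
end

section
/- Let n ≥ 1, let p be a finite EPPF on compositions of m ≤ n, and let (q(n:k), 1 ≤ k ≤ n) be a probability distribution on {1,…,n}. Define a function p' on compositions of n by p'(n_1,…,n_ℓ) = (q(n:1)/n)·∑_{j: n_j=1} p(…,n̂_j,…) + ∑_{k=2}^n q(n:k)·∑_{j: n_j ≥ k} (C(n_j,k)/C(n,k))·p(…, n_j−k+1, …). Then p' is nonnegative, invariant under permutation of the parts, and ∑_π p'(|A_1|,…,|A_ℓ|) = 1, where the sum extends over all set partitions π = {A_1,…,A_ℓ} of {1,…,n}; consequently p' is the exchangeable partition probability function of an exchangeable random partition of {1,…,n}. -/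
open Finset MeasureTheory

lemma coe_eraseIdx (c : List ℕ) (j : ℕ) (hj : j < c.length) :
    (↑c : Multiset ℕ) = c.getD j 0 ::ₘ (↑(c.eraseIdx j) : Multiset ℕ) := by
  induction c generalizing j with
  | nil => simp at hj
  | cons x xs ih =>
    cases j with
    | zero => simp [List.eraseIdx]
    | succ j =>
      simp only [List.length_cons, Nat.succ_lt_succ_iff] at hj
      have h := ih j hj
      simp only [List.getD_cons_succ, List.eraseIdx_cons_succ]
      show (x ::ₘ ↑xs : Multiset ℕ) = _
      rw [h]
      show _ = xs.getD j 0 ::ₘ x ::ₘ ↑(xs.eraseIdx j)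
      exact Multiset.cons_swap _ _ _

lemma coe_set (c : List ℕ) (j : ℕ) (v : ℕ) (hj : j < c.length) :
    (↑(c.set j v) : Multiset ℕ) = v ::ₘ (↑(c.eraseIdx j) : Multiset ℕ) := by
  induction c generalizing j with
  | nil => simp at hj
  | cons x xs ih =>
    cases j with
    | zero => simp [List.set]
    | succ j =>
      simp only [List.length_cons, Nat.succ_lt_succ_iff] at hj
      have h := ih j hj
      show (x ::ₘ ↑(xs.set j v) : Multiset ℕ) = _
      rw [h]
      show _ = v ::ₘ x ::ₘ ↑(xs.eraseIdx j)
      exact Multiset.cons_swap _ _ _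

lemma sum_range_getD (l : List ℕ) (H : ℕ → ℝ) :
    ∑ j ∈ Finset.range l.length, H (l.getD j 0) = (l.map H).sum := by
  induction l with
  | nil => simp
  | cons x xs ih =>
    rw [List.length_cons, Finset.sum_range_succ']
    simp only [List.getD_cons_succ, List.getD_cons_zero, List.map_cons, List.sum_cons, ih]
    ring


variable {α : Type*} [DecidableEq α]

/-- glue: add `a` to block `C` (or as a new singleton if `C = ∅`) of a partition of `t`. -/
def glueP (a : α) {t : Finset α} (ha : a ∉ t) (σ : Finpartition t) (C : Finset α)
    (hC : C = ∅ ∨ C ∈ σ.parts) : Finpartition (insert a t) where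
  parts := insert (insert a C) (σ.parts.erase C)
  supIndep := by
    rw [Finset.supIndep_iff_pairwiseDisjoint, coe_insert]
    have hCt : C ⊆ t := by
      rcases hC with rfl | hC
      · simp
      · exact σ.le hC
    refine (σ.supIndep.pairwiseDisjoint.subset ?_).insert ?_
    · intro B hB; simp only [coe_erase, Set.mem_diff] at hB; exact hB.1
    · intro D hD hne
      simp only [coe_erase, Set.mem_diff, mem_coe, Set.mem_singleton_iff] at hD
      obtain ⟨hDparts, hDC⟩ := hD
      have haD : a ∉ D := fun h => ha (σ.le hDparts h)
      simp only [id]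
      rw [Finset.disjoint_insert_left]
      refine ⟨haD, ?_⟩
      rcases hC with rfl | hC
      · simp
      · exact σ.disjoint hC hDparts (Ne.symm hDC)
  sup_parts := by
    rw [Finset.sup_insert]
    have h2 : C ⊔ (σ.parts.erase C).sup id = t := by
      rcases hC with rfl | hC
      · rw [show ((∅ : Finset α)) = ⊥ from rfl, Finset.erase_eq_of_notMem σ.bot_notMem,
          σ.sup_parts]
        simp
      · have h3 := σ.sup_parts
        rw [← Finset.insert_erase hC, Finset.sup_insert] at h3
        simpa using h3
    rw [id, Finset.sup_eq_union, Finset.insert_union, ← Finset.sup_eq_union, h2]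
  bot_notMem := by
    simp only [bot_eq_empty, mem_insert, not_or]
    constructor
    · exact fun h => by simpa using congrArg (a ∈ ·) h
    · exact fun h => σ.bot_notMem (Finset.mem_of_mem_erase h)

@[simp] lemma glueP_parts (a : α) {t : Finset α} (ha : a ∉ t) (σ : Finpartition t)
    (C : Finset α) (hC : C = ∅ ∨ C ∈ σ.parts) :
    (glueP a ha σ C hC).parts = insert (insert a C) (σ.parts.erase C) := rfl

/-- total version landing in `Finpartition s` for `insert a t = s`. -/
noncomputable def glueC (a : α) {t s : Finset α} (ha : a ∉ t) (hs : insert a t = s)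
    (σ : Finpartition t) (C : Finset α) : Finpartition s :=
  if hC : C = ∅ ∨ C ∈ σ.parts then (glueP a ha σ C hC).copy hs else
    (⊥ : Finpartition s)

lemma glueC_parts (a : α) {t s : Finset α} (ha : a ∉ t) (hs : insert a t = s)
    (σ : Finpartition t) (C : Finset α) (hC : C = ∅ ∨ C ∈ σ.parts) :
    (glueC a ha hs σ C).parts = insert (insert a C) (σ.parts.erase C) := by
  rw [glueC, dif_pos hC]; rfl


section scaffold
variable (a : α) {t s : Finset α}

/-- restrict a partition of `s = insert a t` to `t` by deleting `a`. -/
def resP (ha : a ∉ t) (hs : insert a t = s) (π : Finpartition s) : Finpartition t :=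
  (π.avoid {a}).copy (by
    rw [← hs]; ext x
    simp only [mem_sdiff, mem_insert, mem_singleton]
    constructor
    · rintro ⟨h1 | h1, h2⟩
      · exact absurd h1 h2
      · exact h1
    · exact fun hx => ⟨Or.inr hx, fun h => ha (h ▸ hx)⟩)

lemma mem_resP (ha : a ∉ t) (hs : insert a t = s) (π : Finpartition s) (D : Finset α) :
    D ∈ (resP a ha hs π).parts ↔ ∃ B ∈ π.parts, ¬B ⊆ {a} ∧ B \ {a} = D := by
  show D ∈ (π.avoid {a}).parts ↔ _
  rw [Finpartition.mem_avoid]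
end scaffold

section keylemmas
variable {α : Type*} [DecidableEq α] (a : α) {t s : Finset α}

lemma part_glueC (ha : a ∉ t) (hs : insert a t = s) (σ : Finpartition t) (C : Finset α)
    (hC : C = ∅ ∨ C ∈ σ.parts) : (glueC a ha hs σ C).part a = insert a C := by
  refine Finpartition.part_eq_of_mem _ ?_ (mem_insert_self a C)
  rw [glueC_parts a ha hs σ C hC]
  exact mem_insert_self _ _

lemma not_mem_of_subset_t (ha : a ∉ t) {C : Finset α} (hCt : C ⊆ t) : a ∉ C :=
  fun h => ha (hCt h)

lemma res_glueC (ha : a ∉ t) (hs : insert a t = s) (σ : Finpartition t) (C : Finset α)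
    (hC : C = ∅ ∨ C ∈ σ.parts) : resP a ha hs (glueC a ha hs σ C) = σ := by
  have hCt : C ⊆ t := by
    rcases hC with rfl | hC
    · simp
    · exact σ.le hC
  have haC : a ∉ C := not_mem_of_subset_t a ha hCt
  apply Finpartition.ext
  ext D
  rw [mem_resP, glueC_parts a ha hs σ C hC]
  constructor
  · rintro ⟨B, hB, hBa, rfl⟩
    rcases mem_insert.1 hB with rfl | hB
    · have hCne : C ∈ σ.parts := by
        rcases hC with rfl | h
        · exact absurd (by simp : insert a (∅ : Finset α) ⊆ {a}) hBa
        · exact h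
      have : insert a C \ {a} = C := by
        rw [insert_eq, union_sdiff_distrib]
        simp [Finset.sdiff_singleton_eq_erase, Finset.erase_eq_of_notMem haC]
      rw [this]; exact hCne
    · have hBt : B ⊆ t := σ.le (mem_of_mem_erase hB)
      have : B \ {a} = B := by
        rw [sdiff_singleton_eq_erase, Finset.erase_eq_of_notMem (not_mem_of_subset_t a ha hBt)]
      rw [this]; exact mem_of_mem_erase hB
  · intro hD
    have hDne : D.Nonempty := σ.nonempty_of_mem_parts hD
    have hDt : D ⊆ t := σ.le hD
    have haD : a ∉ D := not_mem_of_subset_t a ha hDt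
    by_cases hDC : D = C
    · subst hDC
      refine ⟨insert a D, mem_insert_self _ _, ?_, ?_⟩
      · intro hsub
        obtain ⟨x, hx⟩ := hDne
        have := hsub (mem_insert_of_mem hx)
        rw [mem_singleton] at this
        exact haD (this ▸ hx)
      · rw [insert_eq, union_sdiff_distrib]
        simp [Finset.sdiff_singleton_eq_erase, Finset.erase_eq_of_notMem haD]
    · refine ⟨D, mem_insert_of_mem (mem_erase.2 ⟨hDC, hD⟩), ?_, ?_⟩
      · intro hsub
        rcases Finset.subset_singleton_iff.1 hsub with rfl | rfl
        · exact hDne.ne_empty rfl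
        · exact haD (mem_singleton_self a)
      · rw [sdiff_singleton_eq_erase, Finset.erase_eq_of_notMem haD]

lemma part_erase_mem (ha : a ∉ t) (hs : insert a t = s) (π : Finpartition s) :
    (π.part a).erase a = ∅ ∨ (π.part a).erase a ∈ (resP a ha hs π).parts := by
  have has : a ∈ s := hs ▸ mem_insert_self a t
  have hP : π.part a ∈ π.parts := π.part_mem.2 has
  have haP : a ∈ π.part a := π.mem_part has
  by_cases h1 : π.part a = {a}
  · left; rw [h1]; simp
  · right
    rw [mem_resP]
    refine ⟨π.part a, hP, ?_, ?_⟩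
    · intro hsub
      rcases Finset.subset_singleton_iff.1 hsub with h | h
      · exact absurd (h ▸ haP) (notMem_empty a)
      · exact h1 h
    · rw [sdiff_singleton_eq_erase]

lemma glueC_resP (ha : a ∉ t) (hs : insert a t = s) (π : Finpartition s) :
    glueC a ha hs (resP a ha hs π) ((π.part a).erase a) = π := by
  have has : a ∈ s := hs ▸ mem_insert_self a t
  have hP : π.part a ∈ π.parts := π.part_mem.2 has
  have haP : a ∈ π.part a := π.mem_part has
  apply Finpartition.ext
  rw [glueC_parts a ha hs _ _ (part_erase_mem a ha hs π)]
  have h1 : insert a ((π.part a).erase a) = π.part a := insert_erase haP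
  have h2 : (resP a ha hs π).parts.erase ((π.part a).erase a) = π.parts.erase (π.part a) := by
    ext D
    rw [mem_erase, mem_resP, mem_erase]
    constructor
    · rintro ⟨hne, B, hB, hBa, rfl⟩
      have hBP : B ≠ π.part a := by
        rintro rfl
        exact hne (by rw [sdiff_singleton_eq_erase])
      have haB : a ∉ B := fun h => hBP (π.part_eq_of_mem hB h).symm
      rw [sdiff_singleton_eq_erase, Finset.erase_eq_of_notMem haB]
      refine ⟨?_, hB⟩
      intro hDP
      exact haB (hDP ▸ haP)
    · rintro ⟨hne, hD⟩
      have hDne : D.Nonempty := π.nonempty_of_mem_parts hD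
      have haD : a ∉ D := fun h => hne (π.part_eq_of_mem hD h).symm
      constructor
      · intro hDC
        have hsub : D ⊆ π.part a := hDC ▸ (erase_subset a (π.part a))
        obtain ⟨x, hx⟩ := hDne
        have := Finpartition.eq_of_mem_parts π hD hP hx (hsub hx)
        exact hne this
      · refine ⟨D, hD, ?_, ?_⟩
        · intro hsub
          rcases Finset.subset_singleton_iff.1 hsub with rfl | rfl
          · exact hDne.ne_empty rfl
          · exact haD (mem_singleton_self a)
        · rw [sdiff_singleton_eq_erase, Finset.erase_eq_of_notMem haD]
  rw [h1, h2, insert_erase hP]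

end keylemmas

section bell
variable {α : Type*} [DecidableEq α]

lemma bell_sum (a : α) {t s : Finset α} (ha : a ∉ t) (hs : insert a t = s)
    (f : Finpartition s → ℝ) :
    ∑ π : Finpartition s, f π =
      ∑ σ : Finpartition t,
        (f (glueC a ha hs σ ∅) + ∑ C ∈ σ.parts, f (glueC a ha hs σ C)) := by
  have hstep : ∀ σ : Finpartition t,
      f (glueC a ha hs σ ∅) + ∑ C ∈ σ.parts, f (glueC a ha hs σ C)
        = ∑ C ∈ insert ∅ σ.parts, f (glueC a ha hs σ C) :=
    fun σ => (Finset.sum_insert (f := fun C => f (glueC a ha hs σ C)) (by simpa using σ.not_bot_mem)).symm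
  simp_rw [hstep]
  rw [← Finset.sum_sigma (Finset.univ : Finset (Finpartition t)) (fun σ => insert ∅ σ.parts)
    (fun x => f (glueC a ha hs x.1 x.2))]
  refine Finset.sum_bij' (fun π _ => ⟨resP a ha hs π, (π.part a).erase a⟩)
    (fun x _ => glueC a ha hs x.1 x.2) ?_ ?_ ?_ ?_ ?_
  · intro π _
    rw [Finset.mem_sigma]
    refine ⟨Finset.mem_univ _, ?_⟩
    dsimp only
    rcases part_erase_mem a ha hs π with h | h
    · rw [h]; exact mem_insert_self _ _
    · exact mem_insert_of_mem h
  · intro x _; exact Finset.mem_univ _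
  · intro π _
    exact glueC_resP a ha hs π
  · rintro ⟨σ, C⟩ hx
    rw [Finset.mem_sigma] at hx
    have hC : C = ∅ ∨ C ∈ σ.parts := by
      rcases mem_insert.1 hx.2 with h | h
      · exact Or.inl h
      · exact Or.inr h
    have hres := res_glueC a ha hs σ C hC
    have hpart := part_glueC a ha hs σ C hC
    have hCt : C ⊆ t := by
      rcases hC with rfl | h
      · simp
      · exact σ.le h
    have haC : a ∉ C := fun h => ha (hCt h)
    have : ((glueC a ha hs σ C).part a).erase a = C := by
      rw [hpart, erase_insert haC]
    dsimp only
    rw [hres, this]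
  · intro π _
    conv_lhs => rw [← glueC_resP a ha hs π]

end bell

/-! ### EPPF layer -/

noncomputable def Fm (p : List ℕ → ℝ) (M : Multiset ℕ) : ℝ := p M.toList

def SizesM {β : Type*} [DecidableEq β] {s : Finset β} (π : Finpartition s) : Multiset ℕ :=
  π.parts.val.map Finset.card

section eppf
variable {n : ℕ} {p : List ℕ → ℝ}
  (hp0 : p [] = 1) (hp1 : p [1] = 1)
  (hpnn : ∀ c, IsComposition c → c.sum ≤ n → 0 ≤ p c)
  (hpsym : ∀ c c', IsComposition c → c.sum ≤ n → List.Perm c c' → p c = p c')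
  (hpadd : ∀ c, IsComposition c → c.sum < n →
    p c = p (c ++ [1]) + ∑ i ∈ Finset.range c.length, p (c.set i (c.getD i 0 + 1)))

include hpsym in
lemma Fm_eq {c : List ℕ} (hpos : ∀ x ∈ c, 0 < x) (hsum : c.sum ≤ n) :
    p c = Fm p ↑c := by
  rcases eq_or_ne c [] with rfl | hne
  · show p [] = p (Multiset.toList 0)
    rw [Multiset.toList_zero]
  · exact hpsym c _ ⟨hne, hpos⟩ hsum
      (Multiset.coe_eq_coe.1 (Multiset.coe_toList (↑c : Multiset ℕ)).symm)

include hp0 hpnn in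
lemma Fm_nonneg {M : Multiset ℕ} (hpos : ∀ x ∈ M, 0 < x) (hsum : M.sum ≤ n) :
    0 ≤ Fm p M := by
  rcases eq_or_ne M 0 with rfl | hne
  · rw [Fm, Multiset.toList_zero, hp0]; norm_num
  · refine hpnn _ ⟨?_, ?_⟩ ?_
    · rw [Ne, Multiset.toList_eq_nil]; exact hne
    · intro x hx; exact hpos x (Multiset.mem_toList.1 hx)
    · rw [Multiset.sum_toList]; exact hsum

end eppf

/-- The multiset form of the Möhle RHS. -/
noncomputable def mohleM (r : ℕ → ℝ) (p : List ℕ → ℝ) (M : Multiset ℕ) : ℝ :=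
  r 1 / (M.sum : ℝ) * ((M.map fun v => if v = 1 then Fm p (M.erase 1) else 0).sum) +
  ∑ k ∈ Finset.Icc 2 M.sum, r k *
    ((M.map fun v => if k ≤ v then
        ((v.choose k : ℝ) / ((M.sum.choose k : ℝ))) * Fm p ((v - k + 1) ::ₘ M.erase v)
      else 0).sum)

section conv
variable {n : ℕ} {p : List ℕ → ℝ} {r : ℕ → ℝ}
  (hpsym : ∀ c c', IsComposition c → c.sum ≤ n → List.Perm c c' → p c = p c')

include hpsym in
lemma mohleRHS_eq_mohleM {c : List ℕ} (hpos : ∀ x ∈ c, 0 < x) (hsum : c.sum ≤ n) :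
    mohleRHS (fun _ k => r k) p c = mohleM r p ↑c := by
  rw [mohleRHS, mohleM, Multiset.sum_coe]
  congr 1
  · -- first term
    congr 1
    rw [Multiset.map_coe, Multiset.sum_coe, ← sum_range_getD]
    refine Finset.sum_congr rfl fun j hj => ?_
    rw [Finset.mem_range] at hj
    have hco := coe_eraseIdx c j hj
    by_cases h1 : c.getD j 0 = 1
    · rw [if_pos h1, if_pos h1]
      have herase : (↑c : Multiset ℕ).erase 1 = ↑(c.eraseIdx j) := by
        rw [← h1, hco, Multiset.erase_cons_head]
      rw [herase]
      have hsub : (c.eraseIdx j).Sublist c := List.eraseIdx_sublist c j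
      refine Fm_eq hpsym (fun x hx => hpos x (hsub.mem hx)) ?_
      have : c.getD j 0 + (c.eraseIdx j).sum = c.sum := by
        have := congrArg Multiset.sum hco
        simpa [Multiset.sum_coe] using this.symm
      omega
    · rw [if_neg h1, if_neg h1]
  · -- second term
    refine Finset.sum_congr rfl fun k hk => ?_
    rw [Finset.mem_Icc] at hk
    congr 1
    rw [Multiset.map_coe, Multiset.sum_coe, ← sum_range_getD]
    refine Finset.sum_congr rfl fun j hj => ?_
    rw [Finset.mem_range] at hj
    set d := c.getD j 0 with hd
    have hco := coe_eraseIdx c j hj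
    by_cases h1 : k ≤ d
    · rw [if_pos h1, if_pos h1]
      congr 1
      have herase : (↑c : Multiset ℕ).erase d = ↑(c.eraseIdx j) := by
        rw [hco, Multiset.erase_cons_head]
      have hcs : (↑(c.set j (d - k + 1)) : Multiset ℕ) = (d - k + 1) ::ₘ ↑(c.eraseIdx j) :=
        coe_set c j _ hj
      have hsum2 : d + (c.eraseIdx j).sum = c.sum := by
        have h5 := congrArg Multiset.sum hco
        rw [Multiset.sum_coe, Multiset.sum_cons, Multiset.sum_coe] at h5
        exact h5.symm
      rw [herase, ← hcs]
      refine Fm_eq hpsym ?_ ?_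
      · intro x hx
        have : x ∈ (↑(c.set j (d - k + 1)) : Multiset ℕ) := by
          rwa [Multiset.mem_coe]
        rw [hcs, Multiset.mem_cons] at this
        rcases this with rfl | hmem
        · omega
        · exact hpos x ((List.eraseIdx_sublist c j).mem (Multiset.mem_coe.1 hmem))
      · have h6 := congrArg Multiset.sum hcs
        rw [Multiset.sum_coe, Multiset.sum_cons, Multiset.sum_coe] at h6
        rw [h6]
        omega
    · rw [if_neg h1, if_neg h1]

end conv

section nonneg
variable {n : ℕ} {p : List ℕ → ℝ} {r : ℕ → ℝ}

lemma mohleM_nonneg (hn : 1 ≤ n)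
    (hp0 : p [] = 1)
    (hpnn : ∀ c, IsComposition c → c.sum ≤ n → 0 ≤ p c)
    (hr0 : ∀ k, 1 ≤ k → k ≤ n → 0 ≤ r k)
    {M : Multiset ℕ} (hpos : ∀ x ∈ M, 0 < x) (hsum : M.sum = n) :
    0 ≤ mohleM r p M := by
  have hsum_erase : ∀ v ∈ M, v + (M.erase v).sum = M.sum := by
    intro v hv
    conv_rhs => rw [← Multiset.cons_erase hv]
    rw [Multiset.sum_cons]
  rw [mohleM]
  have h1 : 0 ≤ r 1 / (M.sum : ℝ) := by
    apply div_nonneg (hr0 1 le_rfl hn)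
    positivity
  refine add_nonneg (mul_nonneg h1 ?_) (Finset.sum_nonneg fun k hk => ?_)
  · refine Multiset.sum_nonneg fun x hx => ?_
    rw [Multiset.mem_map] at hx
    obtain ⟨v, hv, rfl⟩ := hx
    by_cases hv1 : v = 1
    · rw [if_pos hv1]
      refine Fm_nonneg hp0 hpnn (fun x hx => hpos x (Multiset.mem_of_mem_erase hx)) ?_
      have := hsum_erase 1 (hv1 ▸ hv)
      omega
    · rw [if_neg hv1]
  · rw [Finset.mem_Icc, hsum] at hk
    refine mul_nonneg (hr0 k (by omega) hk.2) (Multiset.sum_nonneg fun x hx => ?_)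
    rw [Multiset.mem_map] at hx
    obtain ⟨v, hv, rfl⟩ := hx
    by_cases hkv : k ≤ v
    · rw [if_pos hkv]
      refine mul_nonneg (by positivity) ?_
      refine Fm_nonneg hp0 hpnn ?_ ?_
      · intro x hx
        rw [Multiset.mem_cons] at hx
        rcases hx with rfl | hx
        · omega
        · exact hpos x (Multiset.mem_of_mem_erase hx)
      · rw [Multiset.sum_cons]
        have := hsum_erase v hv
        omega
    · rw [if_neg hkv]

end nonneg

section sizes
variable {β : Type*} [DecidableEq β] {t s : Finset β}

lemma SizesM_sum (π : Finpartition s) : (SizesM π).sum = s.card := by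
  rw [SizesM]
  exact π.sum_card_parts

lemma SizesM_pos (π : Finpartition s) : ∀ x ∈ SizesM π, 0 < x := by
  intro x hx
  rw [SizesM, Multiset.mem_map] at hx
  obtain ⟨B, hB, rfl⟩ := hx
  exact Finset.card_pos.2 (π.nonempty_of_mem_parts hB)

lemma sum_parts_card (π : Finpartition s) (H : ℕ → ℝ) :
    ∑ B ∈ π.parts, H B.card = ((SizesM π).map H).sum := by
  rw [SizesM, Multiset.map_map]
  rfl

lemma glueC_parts_val (a : β) (ha : a ∉ t) (hs : insert a t = s)
    (σ : Finpartition t) (C : Finset β) (hC : C = ∅ ∨ C ∈ σ.parts) :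
    (glueC a ha hs σ C).parts.val = (insert a C) ::ₘ (σ.parts.erase C).val := by
  rw [glueC_parts a ha hs σ C hC]
  refine Finset.insert_val_of_notMem ?_
  intro h
  exact ha (σ.le (Finset.mem_of_mem_erase h) (Finset.mem_insert_self a C))

lemma SizesM_glueC_empty (a : β) (ha : a ∉ t) (hs : insert a t = s) (σ : Finpartition t) :
    SizesM (glueC a ha hs σ ∅) = 1 ::ₘ SizesM σ := by
  rw [SizesM, glueC_parts_val a ha hs σ ∅ (Or.inl rfl), Multiset.map_cons,
    Finset.erase_val, Multiset.erase_of_notMem (by simpa using σ.not_bot_mem)]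
  simp [SizesM]

lemma SizesM_glueC_mem (a : β) (ha : a ∉ t) (hs : insert a t = s) (σ : Finpartition t)
    {C : Finset β} (hC : C ∈ σ.parts) :
    SizesM (glueC a ha hs σ C) = (C.card + 1) ::ₘ (SizesM σ).erase C.card := by
  rw [SizesM, glueC_parts_val a ha hs σ C (Or.inr hC), Multiset.map_cons]
  have haC : a ∉ C := fun h => ha (σ.le hC h)
  congr 1
  · rw [Finset.card_insert_of_notMem haC]
  · rw [Finset.erase_val]
    have h2 : σ.parts.val = C ::ₘ σ.parts.val.erase C := (Multiset.cons_erase hC).symm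
    have h3 : SizesM σ = C.card ::ₘ (σ.parts.val.erase C).map Finset.card := by
      rw [SizesM]
      conv_lhs => rw [h2]
      rw [Multiset.map_cons]
    rw [h3, Multiset.erase_cons_head]

end sizes

section sone
variable {β : Type*} [DecidableEq β] [Fintype β] {n : ℕ} {p : List ℕ → ℝ}

lemma parts_of_empty (π : Finpartition (∅ : Finset β)) : π.parts = ∅ := by
  rw [Finset.eq_empty_iff_forall_notMem]
  intro B hB
  have h1 : B ⊆ ∅ := π.le hB
  have h2 := π.nonempty_of_mem_parts hB
  obtain ⟨x, hx⟩ := h2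
  exact absurd (h1 hx) (Finset.notMem_empty x)

lemma univ_finpartition_empty :
    (Finset.univ : Finset (Finpartition (∅ : Finset β))) = {⊥} := by
  ext π
  simp only [Finset.mem_univ, Finset.mem_singleton, true_iff]
  exact Finpartition.ext (by rw [parts_of_empty, parts_of_empty])

lemma S_one
    (hn : 1 ≤ n) (hcard : Fintype.card β ≤ n)
    (hp0 : p [] = 1) (hp1 : p [1] = 1)
    (hpsym : ∀ c c', IsComposition c → c.sum ≤ n → List.Perm c c' → p c = p c')
    (hpadd : ∀ c, IsComposition c → c.sum < n →
      p c = p (c ++ [1]) + ∑ i ∈ Finset.range c.length, p (c.set i (c.getD i 0 + 1)))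
    (s : Finset β) :
    ∑ σ : Finpartition s, Fm p (SizesM σ) = 1 := by
  induction s using Finset.strongInduction with
  | _ s ih =>
  rcases s.eq_empty_or_nonempty with rfl | ⟨a, ha⟩
  · rw [univ_finpartition_empty, Finset.sum_singleton]
    have h0 : SizesM (⊥ : Finpartition (∅ : Finset β)) = 0 := by
      rw [SizesM, parts_of_empty]
      rfl
    rw [h0]
    show p (Multiset.toList 0) = 1
    rw [Multiset.toList_zero, hp0]
  · have hane : a ∉ s.erase a := Finset.notMem_erase a s
    have hs : insert a (s.erase a) = s := Finset.insert_erase ha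
    rw [bell_sum a hane hs]
    have key : ∀ σ : Finpartition (s.erase a),
        Fm p (SizesM (glueC a hane hs σ ∅)) + ∑ C ∈ σ.parts, Fm p (SizesM (glueC a hane hs σ C))
          = Fm p (SizesM σ) := by
      intro σ
      have hsz : (SizesM σ).sum = (s.erase a).card := SizesM_sum σ
      have hsltn : (s.erase a).card < n := by
        have h1 : s.card ≤ Fintype.card β := Finset.card_le_univ s
        have h2 : (s.erase a).card = s.card - 1 := Finset.card_erase_of_mem ha
        have h3 : 0 < s.card := Finset.card_pos.2 ⟨a, ha⟩
        omega
      rw [SizesM_glueC_empty a hane hs σ]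
      have hCsum : ∀ C ∈ σ.parts, Fm p (SizesM (glueC a hane hs σ C))
          = Fm p ((C.card + 1) ::ₘ (SizesM σ).erase C.card) := fun C hC => by
        rw [SizesM_glueC_mem a hane hs σ hC]
      rw [Finset.sum_congr rfl hCsum]
      rcases eq_or_ne (SizesM σ) 0 with hM0 | hMne
      · -- σ has no parts
        have hparts : σ.parts = ∅ := by
          rw [SizesM, Multiset.map_eq_zero, Finset.val_eq_zero] at hM0
          exact hM0
        rw [hM0, hparts, Finset.sum_empty, add_zero]
        have h1 : Fm p ((1:ℕ) ::ₘ 0) = p [1] :=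
          (Fm_eq hpsym (by simp) (by simpa using hn)).symm
        have h2 : Fm p (0 : Multiset ℕ) = p [] := by rw [Fm, Multiset.toList_zero]
        rw [h1, h2, hp1, hp0]
      · -- apply the addition rule to c := (SizesM σ).toList
        set M := SizesM σ with hMdef
        set c := M.toList with hc
        have hcoe : (↑c : Multiset ℕ) = M := Multiset.coe_toList M
        have hcpos : ∀ x ∈ c, 0 < x := fun x hx => SizesM_pos σ x (Multiset.mem_toList.1 hx)
        have hcsum : c.sum = M.sum := Multiset.sum_toList M
        have hcomp : IsComposition c := ⟨by rw [Ne, Multiset.toList_eq_nil]; exact hMne, hcpos⟩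
        have hadd := hpadd c hcomp (by omega)
        have hFc : Fm p M = p c := rfl
        rw [hFc, hadd]
        congr 1
        · -- p (c ++ [1]) = Fm p (1 ::ₘ M)
          have h1 : ((c ++ [1] : List ℕ) : Multiset ℕ) = 1 ::ₘ M := by
            rw [Multiset.coe_eq_coe.2 (List.perm_append_singleton 1 c), ← Multiset.cons_coe, hcoe]
          rw [← h1]
          refine (Fm_eq hpsym ?_ ?_).symm
          · intro x hx
            rw [List.mem_append] at hx
            rcases hx with hx | hx
            · exact hcpos x hx
            · simp at hx; omega
          · rw [List.sum_append]
            simp only [List.sum_cons, List.sum_nil]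
            omega
        · -- position sum
          have hterm : ∀ j ∈ Finset.range c.length,
              p (c.set j (c.getD j 0 + 1))
                = (fun v => Fm p ((v + 1) ::ₘ M.erase v)) (c.getD j 0) := by
            intro j hj
            rw [Finset.mem_range] at hj
            have hco := coe_eraseIdx c j hj
            have hcs := coe_set c j (c.getD j 0 + 1) hj
            have herase : M.erase (c.getD j 0) = ↑(c.eraseIdx j) := by
              rw [← hcoe, hco, Multiset.erase_cons_head]
            have hsum2 : c.getD j 0 + (c.eraseIdx j).sum = c.sum := by
              have h5 := congrArg Multiset.sum hco
              rw [Multiset.sum_coe, Multiset.sum_cons, Multiset.sum_coe] at h5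
              exact h5.symm
            show _ = Fm p ((c.getD j 0 + 1) ::ₘ M.erase (c.getD j 0))
            rw [herase, ← hcs]
            refine Fm_eq hpsym ?_ ?_
            · intro x hx
              have hx' : x ∈ (↑(c.set j (c.getD j 0 + 1)) : Multiset ℕ) := Multiset.mem_coe.2 hx
              rw [hcs, Multiset.mem_cons] at hx'
              rcases hx' with rfl | hx'
              · omega
              · exact hcpos x ((List.eraseIdx_sublist c j).mem (Multiset.mem_coe.1 hx'))
            · have h6 := congrArg Multiset.sum hcs
              rw [Multiset.sum_coe, Multiset.sum_cons, Multiset.sum_coe] at h6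
              rw [h6]
              omega
          rw [Finset.sum_congr rfl hterm]
          have e1 : ∑ j ∈ Finset.range c.length,
              (fun v => Fm p ((v + 1) ::ₘ M.erase v)) (c.getD j 0)
                = (List.map (fun v => Fm p ((v + 1) ::ₘ M.erase v)) c).sum :=
            sum_range_getD c (fun v => Fm p ((v + 1) ::ₘ M.erase v))
          have e2 : (List.map (fun v => Fm p ((v + 1) ::ₘ M.erase v)) c).sum
              = (M.map (fun v => Fm p ((v + 1) ::ₘ M.erase v))).sum := by
            rw [← hcoe, Multiset.map_coe, Multiset.sum_coe]
          have e3 : ∑ C ∈ σ.parts, (fun v => Fm p ((v + 1) ::ₘ M.erase v)) C.card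
              = (M.map (fun v => Fm p ((v + 1) ::ₘ M.erase v))).sum :=
            sum_parts_card σ (fun v => Fm p ((v + 1) ::ₘ M.erase v))
          exact e3.trans (e2.symm.trans e1.symm)
    rw [Finset.sum_congr rfl (fun σ _ => key σ)]
    exact ih (s.erase a) (Finset.erase_ssubset ha)

section merge
variable {β : Type*} [DecidableEq β] [Fintype β] {n : ℕ} {p : List ℕ → ℝ}

lemma merge_sum (J : Finset β) :
    ∀ (t : Finset β) (a : β), a ∈ t → Disjoint J t → ∀ (s : Finset β), t ∪ J = s →
    ∑ π : Finpartition s, ∑ B ∈ π.parts.filter (fun B => insert a J ⊆ B),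
        Fm p ((B.card - J.card) ::ₘ (SizesM π).erase B.card)
      = ∑ σ : Finpartition t, Fm p (SizesM σ) := by
  induction J using Finset.induction_on with
  | empty =>
    intro t a hat _ s hsEq
    rw [Finset.union_empty] at hsEq
    subst hsEq
    refine Finset.sum_congr rfl fun π _ => ?_
    have hfilter : π.parts.filter (fun B => insert a ∅ ⊆ B) = {π.part a} := by
      ext B
      simp only [Finset.mem_filter, Finset.mem_singleton, Finset.insert_subset_iff,
        Finset.empty_subset, and_true]
      constructor
      · rintro ⟨hB, haB⟩
        exact (π.part_eq_of_mem hB haB).symm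
      · rintro rfl
        exact ⟨π.part_mem.2 hat, π.mem_part hat⟩
    rw [hfilter, Finset.sum_singleton]
    have hmem : (π.part a).card ∈ SizesM π :=
      Multiset.mem_map_of_mem Finset.card (π.part_mem.2 hat)
    rw [Finset.card_empty, Nat.sub_zero, Multiset.cons_erase hmem]
  | @insert x J hxJ ihJ =>
    intro t a hat hdisj s hsEq
    have hxt : x ∉ t := Finset.disjoint_left.1 hdisj (Finset.mem_insert_self x J)
    have hJt : Disjoint J t := hdisj.mono_left (Finset.subset_insert x J)
    have hax : a ≠ x := fun h => hxt (h ▸ hat)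
    have haJ : a ∉ J := fun h => Finset.disjoint_left.1 hJt h hat
    have hxtJ : x ∉ t ∪ J := by simp [hxt, hxJ]
    have hs2 : insert x (t ∪ J) = s := by
      rw [← hsEq]
      ext y
      simp only [Finset.mem_insert, Finset.mem_union]
      tauto
    rw [bell_sum x hxtJ hs2 (fun π => ∑ B ∈ π.parts.filter (fun B => insert a (insert x J) ⊆ B),
        Fm p ((B.card - (insert x J).card) ::ₘ (SizesM π).erase B.card))]
    have key : ∀ σ : Finpartition (t ∪ J),
        (∑ B ∈ (glueC x hxtJ hs2 σ ∅).parts.filter (fun B => insert a (insert x J) ⊆ B),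
            Fm p ((B.card - (insert x J).card) ::ₘ (SizesM (glueC x hxtJ hs2 σ ∅)).erase B.card))
          + ∑ C ∈ σ.parts,
            ∑ B ∈ (glueC x hxtJ hs2 σ C).parts.filter (fun B => insert a (insert x J) ⊆ B),
              Fm p ((B.card - (insert x J).card) ::ₘ (SizesM (glueC x hxtJ hs2 σ C)).erase B.card)
        = ∑ B ∈ σ.parts.filter (fun B => insert a J ⊆ B),
            Fm p ((B.card - J.card) ::ₘ (SizesM σ).erase B.card) := by
      intro σ
      have hterm0 : (glueC x hxtJ hs2 σ ∅).parts.filter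
          (fun B => insert a (insert x J) ⊆ B) = ∅ := by
        rw [Finset.filter_eq_empty_iff]
        intro B hB
        rw [glueC_parts x hxtJ hs2 σ ∅ (Or.inl rfl)] at hB
        rcases Finset.mem_insert.1 hB with rfl | hB
        · intro hsub
          have h7 := hsub (Finset.mem_insert_self a _)
          rcases Finset.mem_insert.1 h7 with h7 | h7
          · exact hax h7
          · exact absurd h7 (Finset.notMem_empty a)
        · intro hsub
          have hx' := hsub (Finset.mem_insert_of_mem (Finset.mem_insert_self x J))
          exact hxtJ (σ.le (Finset.mem_of_mem_erase hB) hx')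
      rw [hterm0, Finset.sum_empty, zero_add]
      have hterm : ∀ C ∈ σ.parts,
          (∑ B ∈ (glueC x hxtJ hs2 σ C).parts.filter (fun B => insert a (insert x J) ⊆ B),
            Fm p ((B.card - (insert x J).card) ::ₘ (SizesM (glueC x hxtJ hs2 σ C)).erase B.card))
          = if insert a J ⊆ C then
              Fm p ((C.card - J.card) ::ₘ (SizesM σ).erase C.card) else 0 := by
        intro C hC
        have hCt : C ⊆ t ∪ J := σ.le hC
        have hxC : x ∉ C := fun h => hxtJ (hCt h)
        have hfilt : (glueC x hxtJ hs2 σ C).parts.filter (fun B => insert a (insert x J) ⊆ B)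
            = if insert a J ⊆ C then {insert x C} else ∅ := by
          ext B
          rw [Finset.mem_filter, glueC_parts x hxtJ hs2 σ C (Or.inr hC)]
          constructor
          · rintro ⟨hB, hsub⟩
            rcases Finset.mem_insert.1 hB with rfl | hB
            · have hsub2 : insert a J ⊆ C := by
                intro y hy
                have hy2 : y ∈ insert x C := by
                  apply hsub
                  rcases Finset.mem_insert.1 hy with rfl | hy
                  · exact Finset.mem_insert_self _ _
                  · exact Finset.mem_insert_of_mem (Finset.mem_insert_of_mem hy)
                have hyx : y ≠ x := by
                  rcases Finset.mem_insert.1 hy with rfl | hy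
                  · exact hax
                  · exact fun h => hxJ (h ▸ hy)
                rcases Finset.mem_insert.1 hy2 with rfl | hy2
                · exact absurd rfl hyx
                · exact hy2
              rw [if_pos hsub2]
              exact Finset.mem_singleton_self _
            · exfalso
              have hx' := hsub (Finset.mem_insert_of_mem (Finset.mem_insert_self x J))
              exact hxtJ (σ.le (Finset.mem_of_mem_erase hB) hx')
          · intro hB
            by_cases hsub : insert a J ⊆ C
            · rw [if_pos hsub, Finset.mem_singleton] at hB
              subst hB
              refine ⟨Finset.mem_insert_self _ _, ?_⟩
              intro y hy
              rcases Finset.mem_insert.1 hy with rfl | hy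
              · exact Finset.mem_insert_of_mem (hsub (Finset.mem_insert_self _ J))
              · rcases Finset.mem_insert.1 hy with rfl | hy
                · exact Finset.mem_insert_self _ _
                · exact Finset.mem_insert_of_mem (hsub (Finset.mem_insert_of_mem hy))
            · rw [if_neg hsub] at hB
              exact absurd hB (Finset.notMem_empty B)
        rw [hfilt]
        by_cases hsub : insert a J ⊆ C
        · rw [if_pos hsub, if_pos hsub, Finset.sum_singleton]
          rw [SizesM_glueC_mem x hxtJ hs2 σ hC]
          rw [Finset.card_insert_of_notMem hxC, Finset.card_insert_of_notMem hxJ]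
          rw [Multiset.erase_cons_head, Nat.succ_sub_succ]
        · rw [if_neg hsub, if_neg hsub, Finset.sum_empty]
      rw [Finset.sum_congr rfl hterm]
      rw [← Finset.sum_filter]
    rw [Finset.sum_congr rfl (fun σ _ => key σ)]
    exact ihJ t a hat hJt (t ∪ J) rfl

end merge

section kone
variable {β : Type*} [DecidableEq β] [Fintype β] {p : List ℕ → ℝ}

lemma singleton_sum (s : Finset β) (a : β) (ha : a ∈ s) :
    ∑ π : Finpartition s, (if {a} ∈ π.parts then Fm p ((SizesM π).erase 1) else 0)
      = ∑ σ : Finpartition (s.erase a), Fm p (SizesM σ) := by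
  have hane : a ∉ s.erase a := Finset.notMem_erase a s
  have hs : insert a (s.erase a) = s := Finset.insert_erase ha
  rw [bell_sum a hane hs (fun π => if {a} ∈ π.parts then Fm p ((SizesM π).erase 1) else 0)]
  refine Finset.sum_congr rfl fun σ _ => ?_
  have h1 : ({a} : Finset β) ∈ (glueC a hane hs σ ∅).parts := by
    rw [glueC_parts a hane hs σ ∅ (Or.inl rfl)]
    have : insert a (∅ : Finset β) = {a} := rfl
    rw [← this]
    exact Finset.mem_insert_self _ _
  have h2 : ∀ C ∈ σ.parts,
      (if {a} ∈ (glueC a hane hs σ C).parts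
        then Fm p ((SizesM (glueC a hane hs σ C)).erase 1) else 0) = 0 := by
    intro C hC
    rw [if_neg]
    rw [glueC_parts a hane hs σ C (Or.inr hC)]
    intro hmem
    rcases Finset.mem_insert.1 hmem with h | h
    · obtain ⟨y, hy⟩ := σ.nonempty_of_mem_parts hC
      have hy2 : y ∈ ({a} : Finset β) := by
        rw [h]
        exact Finset.mem_insert_of_mem hy
      rw [Finset.mem_singleton] at hy2
      exact hane (hy2 ▸ (σ.le hC hy))
    · exact hane (σ.le (Finset.mem_of_mem_erase h) (Finset.mem_singleton_self a))
  show (if _ then _ else _) + _ = _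
  rw [if_pos h1, SizesM_glueC_empty a hane hs σ, Multiset.erase_cons_head,
    Finset.sum_congr rfl h2, Finset.sum_const, smul_zero, add_zero]

lemma filter_card_one (s : Finset β) (π : Finpartition s) (X : ℝ) :
    ∑ _B ∈ π.parts.filter (fun B => B.card = 1), X
      = ∑ a ∈ s, (if {a} ∈ π.parts then X else 0) := by
  rw [← Finset.sum_filter]
  have himg : π.parts.filter (fun B => B.card = 1)
      = (s.filter fun a => {a} ∈ π.parts).image (fun a => ({a} : Finset β)) := by
    ext B
    simp only [Finset.mem_filter, Finset.mem_image]
    constructor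
    · rintro ⟨hB, hcard⟩
      obtain ⟨b, rfl⟩ := Finset.card_eq_one.1 hcard
      exact ⟨b, ⟨π.le hB (Finset.mem_singleton_self b), hB⟩, rfl⟩
    · rintro ⟨b, ⟨hbs, hbp⟩, rfl⟩
      exact ⟨hbp, Finset.card_singleton b⟩
  rw [himg, Finset.sum_image]
  intro x _ y _ h
  exact Finset.singleton_injective h

end kone

section total
variable {n : ℕ} {p : List ℕ → ℝ} {r : ℕ → ℝ}

set_option maxHeartbeats 2000000 in
lemma total_one (hn : 1 ≤ n)
    (hp0 : p [] = 1) (hp1 : p [1] = 1)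
    (hpsym : ∀ c c', IsComposition c → c.sum ≤ n → List.Perm c c' → p c = p c')
    (hpadd : ∀ c, IsComposition c → c.sum < n →
      p c = p (c ++ [1]) + ∑ i ∈ Finset.range c.length, p (c.set i (c.getD i 0 + 1)))
    (hr1 : ∑ k ∈ Finset.Icc 1 n, r k = 1) :
    ∑ π : Finpartition (Finset.univ : Finset (Fin n)), mohleM r p (SizesM π) = 1 := by
  haveI : NeZero n := ⟨by omega⟩
  have hcard : Fintype.card (Fin n) ≤ n := by simp
  have Sone := S_one (β := Fin n) hn hcard hp0 hp1 hpsym hpadd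
  have hnR : (n : ℝ) ≠ 0 := Nat.cast_ne_zero.2 (by omega)
  have hcardu : (Finset.univ : Finset (Fin n)).card = n := by simp
  have hexp : ∀ π : Finpartition (Finset.univ : Finset (Fin n)),
      mohleM r p (SizesM π)
        = r 1 / (n : ℝ) * (∑ _B ∈ π.parts.filter (fun B => B.card = 1),
            Fm p ((SizesM π).erase 1))
          + ∑ k ∈ Finset.Icc 2 n, r k * ∑ B ∈ π.parts,
              (if k ≤ B.card then
                ((B.card.choose k : ℝ) / (n.choose k : ℝ)) *
                  Fm p ((B.card - k + 1) ::ₘ (SizesM π).erase B.card)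
              else 0) := by
    intro π
    have hsz : (SizesM π).sum = n := by rw [SizesM_sum, hcardu]
    rw [mohleM, hsz]
    congr 1
    · congr 1
      rw [← sum_parts_card π (fun v => if v = 1 then Fm p ((SizesM π).erase 1) else 0),
        Finset.sum_filter]
    · refine Finset.sum_congr rfl fun k _ => ?_
      congr 1
      rw [← sum_parts_card π (fun v => if k ≤ v then
        ((v.choose k : ℝ) / (n.choose k : ℝ)) *
          Fm p ((v - k + 1) ::ₘ (SizesM π).erase v) else 0)]
  rw [Finset.sum_congr rfl (fun π _ => hexp π), Finset.sum_add_distrib]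
  have hT1 : ∑ π : Finpartition (Finset.univ : Finset (Fin n)),
      r 1 / (n : ℝ) * (∑ _B ∈ π.parts.filter (fun B => B.card = 1),
        Fm p ((SizesM π).erase 1)) = r 1 := by
    rw [← Finset.mul_sum]
    have h1 : ∀ π : Finpartition (Finset.univ : Finset (Fin n)),
        (∑ _B ∈ π.parts.filter (fun B => B.card = 1), Fm p ((SizesM π).erase 1))
          = ∑ a ∈ (Finset.univ : Finset (Fin n)),
              (if {a} ∈ π.parts then Fm p ((SizesM π).erase 1) else 0) :=
      fun π => filter_card_one _ π _
    rw [Finset.sum_congr rfl (fun π _ => h1 π), Finset.sum_comm]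
    have h2 : ∀ a ∈ (Finset.univ : Finset (Fin n)),
        (∑ π : Finpartition (Finset.univ : Finset (Fin n)),
          (if {a} ∈ π.parts then Fm p ((SizesM π).erase 1) else 0)) = 1 := by
      intro a ha
      rw [singleton_sum Finset.univ a ha]
      exact Sone _
    rw [Finset.sum_congr rfl h2, Finset.sum_const, hcardu, nsmul_eq_mul, mul_one]
    field_simp
  have hT2 : ∑ π : Finpartition (Finset.univ : Finset (Fin n)),
      ∑ k ∈ Finset.Icc 2 n, r k * ∑ B ∈ π.parts,
        (if k ≤ B.card then
          ((B.card.choose k : ℝ) / (n.choose k : ℝ)) *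
            Fm p ((B.card - k + 1) ::ₘ (SizesM π).erase B.card)
        else 0) = ∑ k ∈ Finset.Icc 2 n, r k := by
    rw [Finset.sum_comm]
    refine Finset.sum_congr rfl fun k hk => ?_
    rw [Finset.mem_Icc] at hk
    have hnck : (n.choose k : ℝ) ≠ 0 :=
      Nat.cast_ne_zero.2 (Nat.choose_pos hk.2).ne'
    rw [← Finset.mul_sum]
    have hinner : ∀ π : Finpartition (Finset.univ : Finset (Fin n)),
        (∑ B ∈ π.parts, (if k ≤ B.card then
            ((B.card.choose k : ℝ) / (n.choose k : ℝ)) *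
              Fm p ((B.card - k + 1) ::ₘ (SizesM π).erase B.card) else 0))
          = ∑ K ∈ Finset.powersetCard k (Finset.univ : Finset (Fin n)),
              ∑ B ∈ π.parts.filter (fun B => K ⊆ B),
                ((n.choose k : ℝ))⁻¹ *
                  Fm p ((B.card - k + 1) ::ₘ (SizesM π).erase B.card) := by
      intro π
      have hB1 : ∀ B ∈ π.parts,
          (if k ≤ B.card then
            ((B.card.choose k : ℝ) / (n.choose k : ℝ)) *
              Fm p ((B.card - k + 1) ::ₘ (SizesM π).erase B.card) else 0)
          = ∑ _K ∈ Finset.powersetCard k B,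
              ((n.choose k : ℝ))⁻¹ *
                Fm p ((B.card - k + 1) ::ₘ (SizesM π).erase B.card) := by
        intro B _
        by_cases hkB : k ≤ B.card
        · rw [if_pos hkB, Finset.sum_const, Finset.card_powersetCard, nsmul_eq_mul,
            div_eq_mul_inv]
          ring
        · rw [if_neg hkB, Finset.sum_const, Finset.powersetCard_eq_empty.2 (by omega),
            Finset.card_empty, zero_smul]
      rw [Finset.sum_congr rfl hB1]
      have hB2 : ∀ B ∈ π.parts, Finset.powersetCard k B
          = (Finset.powersetCard k (Finset.univ : Finset (Fin n))).filter
              (fun K => K ⊆ B) := by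
        intro B _
        ext K
        simp only [Finset.mem_powersetCard, Finset.mem_filter, Finset.subset_univ,
          true_and]
        tauto
      rw [Finset.sum_congr rfl (fun B hB => by rw [hB2 B hB])]
      have : ∀ B ∈ π.parts,
          (∑ _K ∈ (Finset.powersetCard k (Finset.univ : Finset (Fin n))).filter
            (fun K => K ⊆ B), ((n.choose k : ℝ))⁻¹ *
              Fm p ((B.card - k + 1) ::ₘ (SizesM π).erase B.card))
          = ∑ K ∈ Finset.powersetCard k (Finset.univ : Finset (Fin n)),
              (if K ⊆ B then ((n.choose k : ℝ))⁻¹ *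
                Fm p ((B.card - k + 1) ::ₘ (SizesM π).erase B.card) else 0) :=
        fun B _ => Finset.sum_filter _ _
      rw [Finset.sum_congr rfl this, Finset.sum_comm]
      refine Finset.sum_congr rfl fun K _ => ?_
      rw [← Finset.sum_filter]
    rw [Finset.sum_congr rfl (fun π _ => hinner π), Finset.sum_comm]
    have hKval : ∀ K ∈ Finset.powersetCard k (Finset.univ : Finset (Fin n)),
        (∑ π : Finpartition (Finset.univ : Finset (Fin n)),
          ∑ B ∈ π.parts.filter (fun B => K ⊆ B),
            ((n.choose k : ℝ))⁻¹ *
              Fm p ((B.card - k + 1) ::ₘ (SizesM π).erase B.card))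
          = ((n.choose k : ℝ))⁻¹ := by
      intro K hK
      rw [Finset.mem_powersetCard] at hK
      have hKne : K.Nonempty := by
        rw [← Finset.card_pos, hK.2]; omega
      obtain ⟨a, ha⟩ := hKne
      have hins : insert a (K.erase a) = K := Finset.insert_erase ha
      have hJcard : (K.erase a).card = k - 1 := by
        rw [Finset.card_erase_of_mem ha, hK.2]
      have hat : a ∈ (Finset.univ : Finset (Fin n)) \ K.erase a := by
        rw [Finset.mem_sdiff]
        exact ⟨Finset.mem_univ a, Finset.notMem_erase a K⟩
      have hd : Disjoint (K.erase a) ((Finset.univ : Finset (Fin n)) \ K.erase a) :=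
        Finset.sdiff_disjoint.symm
      have hun : ((Finset.univ : Finset (Fin n)) \ K.erase a) ∪ K.erase a
          = (Finset.univ : Finset (Fin n)) :=
        Finset.sdiff_union_of_subset (Finset.subset_univ _)
      have hmerge := merge_sum (p := p) (K.erase a) _ a hat hd _ hun
      rw [Sone _] at hmerge
      have hconv : ∀ π : Finpartition (Finset.univ : Finset (Fin n)),
          (∑ B ∈ π.parts.filter (fun B => K ⊆ B),
            Fm p ((B.card - k + 1) ::ₘ (SizesM π).erase B.card))
          = ∑ B ∈ π.parts.filter (fun B => insert a (K.erase a) ⊆ B),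
              Fm p ((B.card - (K.erase a).card) ::ₘ (SizesM π).erase B.card) := by
        intro π
        refine Finset.sum_congr (by rw [hins]) fun B hB => ?_
        rw [Finset.mem_filter] at hB
        have hKB : K ⊆ B := hins ▸ hB.2
        have hkB : k ≤ B.card := hK.2 ▸ Finset.card_le_card hKB
        rw [hJcard]
        congr 2
        omega
      calc ∑ π : Finpartition (Finset.univ : Finset (Fin n)),
            ∑ B ∈ π.parts.filter (fun B => K ⊆ B),
              ((n.choose k : ℝ))⁻¹ *
                Fm p ((B.card - k + 1) ::ₘ (SizesM π).erase B.card)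
          = ((n.choose k : ℝ))⁻¹ * ∑ π : Finpartition (Finset.univ : Finset (Fin n)),
              ∑ B ∈ π.parts.filter (fun B => K ⊆ B),
                Fm p ((B.card - k + 1) ::ₘ (SizesM π).erase B.card) := by
            rw [Finset.mul_sum]
            refine Finset.sum_congr rfl fun π _ => ?_
            rw [Finset.mul_sum]
        _ = ((n.choose k : ℝ))⁻¹ * 1 := by
            rw [Finset.sum_congr rfl (fun π _ => hconv π), hmerge]
        _ = ((n.choose k : ℝ))⁻¹ := mul_one _
    rw [Finset.sum_congr rfl hKval, Finset.sum_const, Finset.card_powersetCard,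
      hcardu, nsmul_eq_mul]
    rw [mul_inv_cancel₀ hnck, mul_one]
  rw [hT1, hT2]
  have hsplit : Finset.Icc 1 n = insert 1 (Finset.Icc 2 n) := by
    ext m
    simp only [Finset.mem_Icc, Finset.mem_insert]
    omega
  rw [hsplit, Finset.sum_insert (by simp)] at hr1
  linarith

end total

/-- The sample-and-add operation applied to an exchangeable partition with
finite EPPF `p` produces an exchangeable random partition of `{1,…,n}`: the function `p'`
given by the right side of Möhle's recursion is nonnegative, symmetric, and its values on the
block-size sequences of all set partitions of `{1,…,n}` sum to `1`. -/
theorem sample_and_add_gives_eppf (n : ℕ) (hn : 1 ≤ n)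
    (p : List ℕ → ℝ) (hp : IsFiniteEPPF n p)
    (r : ℕ → ℝ) (hr0 : ∀ k, 1 ≤ k → k ≤ n → 0 ≤ r k)
    (hr1 : ∑ k ∈ Finset.Icc 1 n, r k = 1)
    (p' : List ℕ → ℝ)
    (hp' : ∀ c, IsComposition c → c.sum = n → p' c = mohleRHS (fun _ k => r k) p c) :
    (∀ c, IsComposition c → c.sum = n → 0 ≤ p' c) ∧
    (∀ c c', IsComposition c → c.sum = n → List.Perm c c' → p' c = p' c') ∧
    ∑ π : Finpartition (Finset.univ : Finset (Fin n)),
      p' (π.parts.toList.map Finset.card) = 1 := by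
  obtain ⟨hp0, hp1, hpnn, hpsym, hpadd⟩ := hp
  have heval : ∀ c, IsComposition c → c.sum = n → p' c = mohleM r p ↑c := by
    intro c hc hsum
    rw [hp' c hc hsum, mohleRHS_eq_mohleM (r := r) hpsym hc.2 (le_of_eq hsum)]
  refine ⟨?_, ?_, ?_⟩
  · intro c hc hsum
    rw [heval c hc hsum]
    refine mohleM_nonneg hn hp0 hpnn hr0 ?_ ?_
    · intro x hx
      exact hc.2 x (Multiset.mem_coe.1 hx)
    · rw [Multiset.sum_coe, hsum]
  · intro c c' hc hsum hperm
    have hc' : IsComposition c' := by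
      refine ⟨?_, fun x hx => hc.2 x (hperm.mem_iff.2 hx)⟩
      intro h
      exact hc.1 (List.Perm.eq_nil (h ▸ hperm))
    have hsum' : c'.sum = n := by rw [← hperm.sum_eq]; exact hsum
    rw [heval c hc hsum, heval c' hc' hsum', Multiset.coe_eq_coe.2 hperm]
  · have hstep : ∀ π : Finpartition (Finset.univ : Finset (Fin n)),
        p' (π.parts.toList.map Finset.card) = mohleM r p (SizesM π) := by
      intro π
      have huniv : (Finset.univ : Finset (Fin n)).Nonempty :=
        ⟨⟨0, by omega⟩, Finset.mem_univ _⟩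
      have hpartsne : π.parts.Nonempty := π.parts_nonempty (by
        rw [Finset.bot_eq_empty]
        exact huniv.ne_empty)
      have hne : π.parts.toList.map Finset.card ≠ [] := by
        intro h
        rcases List.map_eq_nil_iff.1 h with h2
        rw [Finset.toList_eq_nil] at h2
        exact hpartsne.ne_empty h2
      have hpos : ∀ x ∈ π.parts.toList.map Finset.card, 0 < x := by
        intro x hx
        rw [List.mem_map] at hx
        obtain ⟨B, hB, rfl⟩ := hx
        exact Finset.card_pos.2 (π.nonempty_of_mem_parts (Finset.mem_toList.1 hB))
      have hcomp : IsComposition (π.parts.toList.map Finset.card) := ⟨hne, hpos⟩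
      have hsum : (π.parts.toList.map Finset.card).sum = n := by
        rw [Finset.sum_map_toList, π.sum_card_parts, Finset.card_univ, Fintype.card_fin]
      rw [heval _ hcomp hsum]
      congr 1
      rw [← Multiset.map_coe, Finset.coe_toList]
      rfl
    rw [Finset.sum_congr rfl (fun π _ => hstep π)]
    exact total_one hn hp0 hp1 hpsym hpadd hr1
end sone
end

section
/- Let Λ be a finite Borel measure on [0,1] and let ρ > 0. Define Φ(b:1) = ρ·b, Φ(b:k) = C(b,k)·∫₀¹ x^{k−2}(1−x)^{b−k} Λ(dx) for 2 ≤ k ≤ b, Φ(b) = ∑_{k=1}^b Φ(b:k), and q(n:k) = Φ(n:k)/Φ(n) for 1 ≤ k ≤ n. Then the unique function p on compositions with p(1) = 1 satisfying Möhle's recursion with coefficients from q is an infinite EPPF: it is nonnegative, invariant under permutation of the parts, and satisfies the addition rule p(n_1,…,n_ℓ) = p(n_1,…,n_ℓ,1) + ∑_{i=1}^ℓ p(n_1,…,n_i+1,…,n_ℓ). -/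
open Finset MeasureTheory

open Finset

namespace MohleAux

lemma sum_range_getD (f : ℕ → ℝ) : ∀ (l : List ℕ),
    ∑ j ∈ Finset.range l.length, f (l.getD j 0) = (l.map f).sum := by
  intro l
  induction l with
  | nil => simp
  | cons x t ih =>
      rw [List.length_cons, Finset.sum_range_succ']
      simp only [List.getD_cons_succ, List.getD_cons_zero, List.map_cons, List.sum_cons, ih]
      ring

lemma getD_mem (l : List ℕ) (j : ℕ) (h : j < l.length) : l.getD j 0 ∈ l := by
  rw [List.getD_eq_getElem l 0 h]
  exact List.getElem_mem h

lemma erase_cons_mem {α : Type*} [DecidableEq α] (y a : α) (X : Multiset α) (h : a ∈ X) :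
    (y ::ₘ X).erase a = y ::ₘ X.erase a := by
  by_cases hya : a = y
  · subst hya
    rw [Multiset.erase_cons_head]
    exact (Multiset.cons_erase h).symm
  · exact Multiset.erase_cons_tail X (Ne.symm hya)

lemma coe_eraseIdx : ∀ (l : List ℕ) (j : ℕ), j < l.length →
    ((l.eraseIdx j : List ℕ) : Multiset ℕ) = (l : Multiset ℕ).erase (l.getD j 0) := by
  intro l
  induction l with
  | nil => simp
  | cons x t ih =>
      intro j hj
      cases j with
      | zero => simp
      | succ j =>
          simp only [List.eraseIdx_cons_succ, List.getD_cons_succ]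
          show ((x ::ₘ (t.eraseIdx j : Multiset ℕ)) = (x ::ₘ (t : Multiset ℕ)).erase (t.getD j 0))
          rw [erase_cons_mem x _ _ (getD_mem t j (by simpa using hj)),
            ih j (by simpa using hj)]

lemma coe_set : ∀ (l : List ℕ) (j : ℕ) (v : ℕ), j < l.length →
    ((l.set j v : List ℕ) : Multiset ℕ) = v ::ₘ (l : Multiset ℕ).erase (l.getD j 0) := by
  intro l
  induction l with
  | nil => simp
  | cons x t ih =>
      intro j v hj
      cases j with
      | zero => simp
      | succ j =>
          simp only [List.set_cons_succ, List.getD_cons_succ]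
          show ((x ::ₘ (t.set j v : Multiset ℕ)) = v ::ₘ (x ::ₘ (t : Multiset ℕ)).erase (t.getD j 0))
          rw [erase_cons_mem x _ _ (getD_mem t j (by simpa using hj)),
            ih j v (by simpa using hj), Multiset.cons_swap]

lemma DS (M : Multiset ℕ) (f : ℕ → ℕ → ℝ) :
    (M.map (fun b => ((M.erase b).map (f b)).sum)).sum
      = (M.map (fun a => ((M.erase a).map (fun b => f b a)).sum)).sum := by
  induction M using Multiset.induction with
  | empty => simp
  | cons x s ih =>
      have h1 : ∀ g : ℕ → ℕ → ℝ,
          ((x ::ₘ s).map (fun b => (((x ::ₘ s).erase b).map (g b)).sum)).sum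
            = ((s.map (g x)).sum + ((s.map (fun b => g b x)).sum
                + (s.map (fun b => ((s.erase b).map (g b)).sum)).sum)) := by
        intro g
        rw [Multiset.map_cons, Multiset.sum_cons, Multiset.erase_cons_head]
        congr 1
        rw [show (fun b => (((x ::ₘ s).erase b).map (g b)).sum)
            = (fun b => (((x ::ₘ s).erase b).map (g b)).sum) from rfl]
        have : (s.map (fun b => (((x ::ₘ s).erase b).map (g b)).sum)).sum
            = (s.map (fun b => g b x + ((s.erase b).map (g b)).sum)).sum := by
          apply congrArg
          apply Multiset.map_congr rfl
          intro b hb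
          rw [erase_cons_mem x b s hb, Multiset.map_cons, Multiset.sum_cons]
        rw [this, Multiset.sum_map_add]
      rw [h1 (fun b a => f b a), h1 (fun b a => f a b), ih]
      ring

lemma ICount (m : Multiset ℕ) (a₀ : ℕ) (C : ℝ) :
    (m.map (fun a => if a = a₀ then C else 0)).sum = (m.count a₀ : ℝ) * C := by
  induction m using Multiset.induction with
  | empty => simp
  | cons x s ih =>
      rw [Multiset.map_cons, Multiset.sum_cons, ih, Multiset.count_cons]
      by_cases h : x = a₀
      · simp [h]; ring
      · simp [h, Ne.symm h]

lemma sum_map_cast (m : Multiset ℕ) : (m.map (fun a => (a : ℝ))).sum = (m.sum : ℝ) := by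
  induction m using Multiset.induction with
  | empty => simp
  | cons x s ih => simp [ih]

lemma comp_sum_pos {c : List ℕ} (hc : IsComposition c) : 1 ≤ c.sum := by
  obtain ⟨hne, hpos⟩ := hc
  cases c with
  | nil => exact absurd rfl hne
  | cons x t =>
      have := hpos x List.mem_cons_self
      simp only [List.sum_cons]
      omega

lemma comp_of_sum_one {c : List ℕ} (hc : IsComposition c) (h : c.sum = 1) : c = [1] := by
  obtain ⟨hne, hpos⟩ := hc
  cases c with
  | nil => exact absurd rfl hne
  | cons x t =>
      have hx := hpos x List.mem_cons_self
      simp only [List.sum_cons] at h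
      have hx1 : x = 1 := by omega
      have ht : t.sum = 0 := by omega
      have : t = [] := by
        cases t with
        | nil => rfl
        | cons y u =>
            have := hpos y (by simp)
            simp only [List.sum_cons] at ht
            omega
      subst this; subst hx1; rfl

end MohleAux
namespace MohleAux
set_option linter.unusedSectionVars false

noncomputable def coalLam (Λ : Measure (Set.Icc (0:ℝ) 1)) (n k : ℕ) : ℝ :=
  ∫ x, (x : ℝ) ^ (k - 2) * (1 - (x : ℝ)) ^ (n - k) ∂Λ

variable (Λ : Measure (Set.Icc (0:ℝ) 1)) [IsFiniteMeasure Λ]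

lemma coal_integrable (a b : ℕ) :
    MeasureTheory.Integrable (fun x : Set.Icc (0:ℝ) 1 => (x:ℝ)^a*(1-(x:ℝ))^b) Λ := by
  have hc : Continuous (fun x : Set.Icc (0:ℝ) 1 => (x:ℝ)^a*(1-(x:ℝ))^b) := by fun_prop
  exact hc.integrable_of_hasCompactSupport (HasCompactSupport.of_compactSpace _)

lemma coalLam_nonneg (n k : ℕ) : 0 ≤ coalLam Λ n k := by
  apply MeasureTheory.integral_nonneg
  intro x
  have h1 : (0:ℝ) ≤ (x:ℝ) := x.2.1
  have h2 : (x:ℝ) ≤ 1 := x.2.2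
  exact mul_nonneg (pow_nonneg h1 _) (pow_nonneg (by linarith) _)

lemma coalLam_consistency {n k : ℕ} (h2 : 2 ≤ k) (hkn : k ≤ n) :
    coalLam Λ n k = coalLam Λ (n+1) k + coalLam Λ (n+1) (k+1) := by
  unfold coalLam
  rw [← MeasureTheory.integral_add (coal_integrable Λ _ _) (coal_integrable Λ _ _)]
  apply MeasureTheory.integral_congr_ae
  filter_upwards with x
  have e1 : (n+1) - k = (n - k) + 1 := by omega
  have e2 : (k+1) - 2 = (k - 2) + 1 := by omega
  have e3 : (n+1) - (k+1) = n - k := by omega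
  rw [e1, e2, e3, pow_succ, pow_succ]
  ring

variable (ρ : ℝ)

lemma coalPhiK_one (b : ℕ) : coalPhiK Λ ρ b 1 = ρ * b := by simp [coalPhiK]

lemma coalPhiK_ge2 (b k : ℕ) (h : k ≠ 1) :
    coalPhiK Λ ρ b k = (b.choose k : ℝ) * coalLam Λ b k := by simp [coalPhiK, coalLam, h]

lemma coalPhiK_nonneg (hρ : 0 ≤ ρ) (b k : ℕ) : 0 ≤ coalPhiK Λ ρ b k := by
  by_cases h : k = 1
  · rw [h, coalPhiK_one]; positivity
  · rw [coalPhiK_ge2 Λ ρ b k h]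
    exact mul_nonneg (by positivity) (coalLam_nonneg Λ b k)

lemma coalPhi_pos (hρ : 0 < ρ) (n : ℕ) (hn : 1 ≤ n) : 0 < coalPhi Λ ρ n := by
  unfold coalPhi
  have h1 : (1:ℕ) ∈ Finset.Icc 1 n := by simp [hn]
  have hle : coalPhiK Λ ρ n 1 ≤ ∑ k ∈ Finset.Icc 1 n, coalPhiK Λ ρ n k :=
    Finset.single_le_sum (fun k _ => coalPhiK_nonneg Λ ρ hρ.le n k) h1
  have : (0:ℝ) < coalPhiK Λ ρ n 1 := by
    rw [coalPhiK_one]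
    have : (0:ℝ) < (n:ℝ) := by exact_mod_cast hn
    positivity
  linarith

lemma coalPhi_expand (n : ℕ) (hn : 1 ≤ n) :
    coalPhi Λ ρ n = ρ * n + ∑ k ∈ Finset.Icc 2 n, (n.choose k : ℝ) * coalLam Λ n k := by
  unfold coalPhi
  have hins : Finset.Icc 1 n = insert 1 (Finset.Icc 2 n) := by
    ext k; simp only [Finset.mem_Icc, Finset.mem_insert]; omega
  rw [hins, Finset.sum_insert (by simp), coalPhiK_one]
  congr 1
  exact Finset.sum_congr rfl (fun k hk => coalPhiK_ge2 Λ ρ n k (by simp at hk; omega))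

lemma coalPhi_rec (n : ℕ) (hn : 1 ≤ n) :
    coalPhi Λ ρ (n+1) = coalPhi Λ ρ n + ρ + (n : ℝ) * coalLam Λ (n+1) 2 := by
  rw [coalPhi_expand Λ ρ n hn, coalPhi_expand Λ ρ (n+1) (by omega)]
  have e3 : ∑ k ∈ Finset.Icc 2 n, (n.choose k : ℝ) * coalLam Λ n k
      = ∑ k ∈ Finset.Icc 2 n, (n.choose k : ℝ) * coalLam Λ (n+1) k
        + ∑ k ∈ Finset.Icc 2 n, (n.choose k : ℝ) * coalLam Λ (n+1) (k+1) := by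
    rw [← Finset.sum_add_distrib]
    apply Finset.sum_congr rfl
    intro k hk
    simp only [Finset.mem_Icc] at hk
    rw [coalLam_consistency Λ hk.1 hk.2]
    ring
  have e4 : ∑ k ∈ Finset.Icc 2 n, (n.choose k : ℝ) * coalLam Λ (n+1) (k+1)
      = ∑ k ∈ Finset.Icc 3 (n+1), (n.choose (k-1) : ℝ) * coalLam Λ (n+1) k := by
    apply Finset.sum_nbij' (fun k => k + 1) (fun k => k - 1)
    · intro a ha; simp only [Finset.mem_Icc] at *; omega
    · intro a ha; simp only [Finset.mem_Icc] at *; omega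
    · intro a ha; omega
    · intro a ha; simp only [Finset.mem_Icc] at ha; omega
    · intro a ha; simp
  have e5 : ∑ k ∈ Finset.Icc 2 (n+1), ((n+1).choose k : ℝ) * coalLam Λ (n+1) k
      = ∑ k ∈ Finset.Icc 2 (n+1), (n.choose k : ℝ) * coalLam Λ (n+1) k
        + ∑ k ∈ Finset.Icc 2 (n+1), (n.choose (k-1) : ℝ) * coalLam Λ (n+1) k := by
    rw [← Finset.sum_add_distrib]
    apply Finset.sum_congr rfl
    intro k hk
    simp only [Finset.mem_Icc] at hk
    have : (n+1).choose k = n.choose (k-1) + n.choose k := by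
      obtain ⟨j, rfl⟩ : ∃ j, k = j + 2 := ⟨k-2, by omega⟩
      show (n+1).choose ((j+1)+1) = n.choose (j + 2 - 1) + n.choose (j+2)
      rw [Nat.choose_succ_succ n (j+1)]
      congr 1
    rw [this]
    push_cast
    ring
  have e6 : ∑ k ∈ Finset.Icc 2 (n+1), (n.choose k : ℝ) * coalLam Λ (n+1) k
      = ∑ k ∈ Finset.Icc 2 n, (n.choose k : ℝ) * coalLam Λ (n+1) k := by
    have : Finset.Icc 2 (n+1) = insert (n+1) (Finset.Icc 2 n) := by
      ext k; simp only [Finset.mem_Icc, Finset.mem_insert]; omega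
    rw [this, Finset.sum_insert (by simp)]
    simp [Nat.choose_eq_zero_of_lt (by omega : n < n+1)]
  have e7 : ∑ k ∈ Finset.Icc 2 (n+1), (n.choose (k-1) : ℝ) * coalLam Λ (n+1) k
      = (n : ℝ) * coalLam Λ (n+1) 2 + ∑ k ∈ Finset.Icc 3 (n+1), (n.choose (k-1) : ℝ) * coalLam Λ (n+1) k := by
    have : Finset.Icc 2 (n+1) = insert 2 (Finset.Icc 3 (n+1)) := by
      ext k; simp only [Finset.mem_Icc, Finset.mem_insert]; omega
    rw [this, Finset.sum_insert (by simp)]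
    simp [Nat.choose_one_right]
  rw [e5, e6, e7, e3, e4]
  push_cast
  ring

end MohleAux
namespace MohleAux
set_option linter.unusedSectionVars false

variable (Λ : Measure (Set.Icc (0:ℝ) 1)) [IsFiniteMeasure Λ] (ρ : ℝ)

lemma Q1 (hρ : 0 < ρ) :
    coalPhiK Λ ρ 2 1 / coalPhi Λ ρ 2 + coalPhiK Λ ρ 2 2 / coalPhi Λ ρ 2 = 1 := by
  have hpos := coalPhi_pos Λ ρ hρ 2 (by omega)
  have h2 : coalPhi Λ ρ 2 = coalPhiK Λ ρ 2 1 + coalPhiK Λ ρ 2 2 := by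
    unfold coalPhi
    rw [show Finset.Icc 1 2 = {1, 2} from rfl]
    simp
  field_simp
  linarith [h2]

lemma Q4 (hρ : 0 < ρ) (n : ℕ) (hn : 1 ≤ n) :
    coalPhiK Λ ρ (n+1) 1 / coalPhi Λ ρ (n+1) / ((n:ℝ)+1)
      = (coalPhi Λ ρ n / coalPhi Λ ρ (n+1)) * (coalPhiK Λ ρ n 1 / coalPhi Λ ρ n) / n := by
  have h1 := (coalPhi_pos Λ ρ hρ n hn).ne'
  have h2 := (coalPhi_pos Λ ρ hρ (n+1) (by omega)).ne'
  have hn' : (n:ℝ) ≠ 0 := by exact_mod_cast Nat.one_le_iff_ne_zero.mp hn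
  rw [coalPhiK_one, coalPhiK_one]
  field_simp
  push_cast
  ring

lemma Q2 (hρ : 0 < ρ) (n : ℕ) (hn : 1 ≤ n) :
    coalPhiK Λ ρ (n+1) 1 / coalPhi Λ ρ (n+1) / ((n:ℝ)+1)
      + coalPhiK Λ ρ (n+1) 2 / coalPhi Λ ρ (n+1) * (n:ℝ) / (((n+1).choose 2 : ℕ) : ℝ)
      = 1 - coalPhi Λ ρ n / coalPhi Λ ρ (n+1) := by
  have h1 := (coalPhi_pos Λ ρ hρ n hn).ne'
  have h2 := (coalPhi_pos Λ ρ hρ (n+1) (by omega)).ne'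
  have hch : (0:ℝ) < (((n+1).choose 2 : ℕ) : ℝ) := by
    exact_mod_cast Nat.choose_pos (by omega : 2 ≤ n+1)
  have hn1 : ((n:ℝ)+1) ≠ 0 := by positivity
  have hF := coalPhi_rec Λ ρ n hn
  rw [coalPhiK_one, coalPhiK_ge2 Λ ρ (n+1) 2 (by omega)]
  push_cast
  have t1 : ρ * ((n:ℝ)+1) / coalPhi Λ ρ (n+1) / ((n:ℝ)+1) = ρ / coalPhi Λ ρ (n+1) := by
    field_simp
  have t2 : (((n+1).choose 2 : ℕ) : ℝ) * coalLam Λ (n+1) 2 / coalPhi Λ ρ (n+1) * (n:ℝ)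
      / (((n+1).choose 2 : ℕ) : ℝ) = (n:ℝ) * coalLam Λ (n+1) 2 / coalPhi Λ ρ (n+1) := by
    field_simp
  have t3 : 1 - coalPhi Λ ρ n / coalPhi Λ ρ (n+1)
      = (ρ + (n:ℝ) * coalLam Λ (n+1) 2) / coalPhi Λ ρ (n+1) := by
    have h2' : coalPhi Λ ρ n + ρ + (n:ℝ) * coalLam Λ (n+1) 2 ≠ 0 := hF ▸ h2
    rw [hF, eq_div_iff h2', sub_mul, one_mul]
    field_simp
    ring
  rw [t1, t2, t3, ← add_div]

lemma Q3 (hρ : 0 < ρ) (n k : ℕ) (h2 : 2 ≤ k) (hkn : k ≤ n) :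
    coalPhiK Λ ρ (n+1) k / coalPhi Λ ρ (n+1) / (((n+1).choose k : ℕ) : ℝ)
      + coalPhiK Λ ρ (n+1) (k+1) / coalPhi Λ ρ (n+1) / (((n+1).choose (k+1) : ℕ) : ℝ)
      = (coalPhi Λ ρ n / coalPhi Λ ρ (n+1)) * (coalPhiK Λ ρ n k / coalPhi Λ ρ n) / ((n.choose k : ℕ) : ℝ) := by
  have h1 := (coalPhi_pos Λ ρ hρ n (by omega)).ne'
  have hP2 := (coalPhi_pos Λ ρ hρ (n+1) (by omega)).ne'
  have c1 : (0:ℝ) < (((n+1).choose k : ℕ) : ℝ) := by exact_mod_cast Nat.choose_pos (by omega)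
  have c2 : (0:ℝ) < (((n+1).choose (k+1) : ℕ) : ℝ) := by exact_mod_cast Nat.choose_pos (by omega)
  have c3 : (0:ℝ) < ((n.choose k : ℕ) : ℝ) := by exact_mod_cast Nat.choose_pos hkn
  rw [coalPhiK_ge2 Λ ρ (n+1) k (by omega), coalPhiK_ge2 Λ ρ (n+1) (k+1) (by omega),
    coalPhiK_ge2 Λ ρ n k (by omega), coalLam_consistency Λ h2 hkn]
  field_simp

end MohleAux
namespace MohleAux
set_option linter.unusedSectionVars false
set_option maxHeartbeats 1000000

/-- `p` evaluated on a canonical list of a multiset. -/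
noncomputable def PtP (p : List ℕ → ℝ) (m : Multiset ℕ) : ℝ := p m.toList

/-- Multiset form of the inner replacement sum. -/
noncomputable def F2P (p : List ℕ → ℝ) (s k : ℕ) (m : Multiset ℕ) : ℝ :=
  (m.map (fun a => if k ≤ a then (a.choose k : ℝ) / ((s.choose k : ℕ) : ℝ)
      * PtP p ((a - k + 1) ::ₘ m.erase a) else 0)).sum

/-- Numerator form. -/
noncomputable def GP (p : List ℕ → ℝ) (j : ℕ) (M : Multiset ℕ) : ℝ :=
  (M.map (fun a => if j ≤ a then (a.choose j : ℝ) * PtP p ((a - j + 1) ::ₘ M.erase a) else 0)).sum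

lemma erase_sum (M : Multiset ℕ) (a : ℕ) (h : a ∈ M) : a + (M.erase a).sum = M.sum := by
  conv_rhs => rw [← Multiset.cons_erase h]
  rw [Multiset.sum_cons]

lemma coe_append_singleton (l : List ℕ) (v : ℕ) :
    ((l ++ [v] : List ℕ) : Multiset ℕ) = v ::ₘ (l : Multiset ℕ) := by
  have : ((l ++ [v] : List ℕ) : Multiset ℕ) = (l : Multiset ℕ) + ([v] : List ℕ) := by
    exact_mod_cast rfl
  rw [this]
  have : (([v] : List ℕ) : Multiset ℕ) = {v} := rfl
  rw [this, add_comm, Multiset.singleton_add]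

lemma toList_comp (m : Multiset ℕ) (h0 : m ≠ 0) (hp : ∀ a ∈ m, 0 < a) :
    IsComposition m.toList := by
  constructor
  · rw [Ne, Multiset.toList_eq_nil]; exact h0
  · intro x hx
    exact hp x (by rwa [← Multiset.mem_toList])

lemma map_sum_exchange (M : Multiset ℕ) (s : Finset ℕ) (h : ℕ → ℕ → ℝ) :
    (M.map (fun b => ∑ k ∈ s, h k b)).sum = ∑ k ∈ s, (M.map (h k)).sum := by
  induction M using Multiset.induction with
  | empty => simp
  | cons x t ih =>
      simp only [Multiset.map_cons, Multiset.sum_cons, ih, ← Finset.sum_add_distrib]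

lemma F2_as_G (p : List ℕ → ℝ) (s k : ℕ) (M : Multiset ℕ) :
    F2P p s k M = GP p k M / ((s.choose k : ℕ) : ℝ) := by
  unfold F2P GP
  rw [div_eq_mul_inv, ← Multiset.sum_map_mul_right]
  apply congrArg
  apply Multiset.map_congr rfl
  intro a _
  by_cases h : k ≤ a
  · simp only [if_pos h]; ring
  · simp only [if_neg h, zero_mul]

lemma GP_one (p : List ℕ → ℝ) (M : Multiset ℕ) (hparts : ∀ a ∈ M, 1 ≤ a) :
    GP p 1 M = (M.sum : ℝ) * PtP p M := by
  unfold GP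
  have : (M.map (fun a => if 1 ≤ a then (a.choose 1 : ℝ) * PtP p ((a - 1 + 1) ::ₘ M.erase a) else 0))
      = M.map (fun a : ℕ => (a : ℝ) * PtP p M) := by
    apply Multiset.map_congr rfl
    intro a ha
    have h1 := hparts a ha
    rw [if_pos h1, Nat.choose_one_right, show a - 1 + 1 = a by omega, Multiset.cons_erase ha]
  rw [this, Multiset.sum_map_mul_right]
  congr 1
  simp

lemma GP_top (p : List ℕ → ℝ) (j : ℕ) (M : Multiset ℕ) (hj : M.sum < j) : GP p j M = 0 := by
  unfold GP
  have : (M.map (fun a => if j ≤ a then (a.choose j : ℝ) * PtP p ((a - j + 1) ::ₘ M.erase a) else 0))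
      = M.map (fun _ => (0:ℝ)) := by
    apply Multiset.map_congr rfl
    intro a ha
    have : a ≤ M.sum := Multiset.single_le_sum (fun x _ => Nat.zero_le x) a ha
    rw [if_neg (by omega)]
  rw [this]
  simp

end MohleAux
namespace MohleAux
set_option linter.unusedSectionVars false
set_option maxHeartbeats 1000000

lemma list_ne_nil_of_sum_pos {l : List ℕ} (h : 0 < l.sum) : l ≠ [] := by
  intro hl; subst hl; simp at h

lemma conv_lemma (q : ℕ → ℕ → ℝ) (p : List ℕ → ℝ) (d : List ℕ)
    (hd : IsComposition d) (hs : 2 ≤ d.sum)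
    (hrec : MohleRec q p d)
    (hsym : ∀ e, IsComposition e → e.sum < d.sum → ∀ e', List.Perm e e' → p e = p e') :
    p d = q d.sum 1 / (d.sum : ℝ)
        * (((d : Multiset ℕ).count 1 : ℝ) * PtP p ((d : Multiset ℕ).erase 1))
      + ∑ k ∈ Finset.Icc 2 d.sum, q d.sum k * F2P p d.sum k (d : Multiset ℕ) := by
  have hsum_coe : (d : Multiset ℕ).sum = d.sum := Multiset.sum_coe d
  have hPt : ∀ (e : List ℕ) (m : Multiset ℕ), IsComposition e → e.sum < d.sum →
      (e : Multiset ℕ) = m → p e = PtP p m := by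
    intro e m he hlt hm
    apply hsym e he hlt
    rw [← Multiset.coe_eq_coe, hm, Multiset.coe_toList]
  rw [hrec]
  unfold mohleRHS
  congr 1
  · -- first term
    congr 1
    have h1 : ∀ j ∈ Finset.range d.length,
        (if d.getD j 0 = 1 then p (d.eraseIdx j) else 0)
          = (if d.getD j 0 = 1 then PtP p ((d : Multiset ℕ).erase 1) else 0) := by
      intro j hj
      rw [Finset.mem_range] at hj
      by_cases h : d.getD j 0 = 1
      · rw [if_pos h, if_pos h]
        have hmem : (1:ℕ) ∈ (d : Multiset ℕ) := by
          rw [← h]; exact_mod_cast getD_mem d j hj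
        have hcoe : ((d.eraseIdx j : List ℕ) : Multiset ℕ) = (d : Multiset ℕ).erase 1 := by
          rw [coe_eraseIdx d j hj, h]
        have hsum : (d.eraseIdx j).sum + 1 = d.sum := by
          have := erase_sum (d : Multiset ℕ) 1 hmem
          have h2 : ((d.eraseIdx j : List ℕ) : Multiset ℕ).sum = ((d:Multiset ℕ).erase 1).sum := by
            rw [hcoe]
          rw [Multiset.sum_coe] at h2
          omega
        apply hPt _ _ _ _ hcoe
        · constructor
          · exact list_ne_nil_of_sum_pos (by omega)
          · intro x hx
            exact hd.2 x (List.mem_of_mem_eraseIdx hx)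
        · omega
      · rw [if_neg h, if_neg h]
    calc ∑ j ∈ Finset.range d.length, (if d.getD j 0 = 1 then p (d.eraseIdx j) else 0)
        = ∑ j ∈ Finset.range d.length,
            (if d.getD j 0 = 1 then PtP p ((d : Multiset ℕ).erase 1) else 0) :=
          Finset.sum_congr rfl h1
      _ = (d.map (fun a => if a = 1 then PtP p ((d : Multiset ℕ).erase 1) else 0)).sum :=
          sum_range_getD (fun a => if a = 1 then PtP p ((d : Multiset ℕ).erase 1) else 0) d
      _ = ((d : Multiset ℕ).map
            (fun a => if a = 1 then PtP p ((d : Multiset ℕ).erase 1) else 0)).sum := rfl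
      _ = ((d : Multiset ℕ).count 1 : ℝ) * PtP p ((d : Multiset ℕ).erase 1) :=
          ICount _ 1 _
  · -- second term
    apply Finset.sum_congr rfl
    intro k hk
    rw [Finset.mem_Icc] at hk
    congr 1
    have h1 : ∀ j ∈ Finset.range d.length,
        (if k ≤ d.getD j 0 then ((d.getD j 0).choose k : ℝ) / (d.sum.choose k : ℝ)
            * p (d.set j (d.getD j 0 - k + 1)) else 0)
          = (if k ≤ d.getD j 0 then ((d.getD j 0).choose k : ℝ) / ((d.sum.choose k : ℕ) : ℝ)
              * PtP p ((d.getD j 0 - k + 1) ::ₘ (d : Multiset ℕ).erase (d.getD j 0)) else 0) := by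
      intro j hj
      rw [Finset.mem_range] at hj
      by_cases h : k ≤ d.getD j 0
      · rw [if_pos h, if_pos h]
        congr 1
        set a := d.getD j 0 with ha
        have hmem : a ∈ (d : Multiset ℕ) := by exact_mod_cast getD_mem d j hj
        have hcoe : ((d.set j (a - k + 1) : List ℕ) : Multiset ℕ)
            = (a - k + 1) ::ₘ (d : Multiset ℕ).erase a := coe_set d j _ hj
        have hasum : a ≤ d.sum := by
          have := Multiset.single_le_sum (fun x _ => Nat.zero_le x) a hmem
          rwa [hsum_coe] at this
        have hsum2 : (d.set j (a - k + 1)).sum = (a - k + 1) + (d.sum - a) := by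
          have h2 : ((d.set j (a - k + 1) : List ℕ) : Multiset ℕ).sum
              = ((a - k + 1) ::ₘ (d : Multiset ℕ).erase a).sum := by rw [hcoe]
          rw [Multiset.sum_coe, Multiset.sum_cons] at h2
          have h3 := erase_sum (d : Multiset ℕ) a hmem
          rw [hsum_coe] at h3
          omega
        apply hPt _ _ _ _ hcoe
        · constructor
          · have : d ≠ [] := hd.1
            intro hnil
            have : (d.set j (a - k + 1)).length = d.length := List.length_set
            rw [hnil] at this
            simp at this
            exact hd.1 (List.length_eq_zero_iff.mp this.symm)
          · intro x hx
            rcases List.mem_or_eq_of_mem_set hx with h' | h'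
            · exact hd.2 x h'
            · omega
        · omega
      · rw [if_neg h, if_neg h]
    calc ∑ j ∈ Finset.range d.length, (if k ≤ d.getD j 0 then ((d.getD j 0).choose k : ℝ)
            / (d.sum.choose k : ℝ) * p (d.set j (d.getD j 0 - k + 1)) else 0)
        = ∑ j ∈ Finset.range d.length, (if k ≤ d.getD j 0 then ((d.getD j 0).choose k : ℝ)
            / ((d.sum.choose k : ℕ) : ℝ)
            * PtP p ((d.getD j 0 - k + 1) ::ₘ (d : Multiset ℕ).erase (d.getD j 0)) else 0) :=
          Finset.sum_congr rfl h1
      _ = (d.map (fun a => if k ≤ a then (a.choose k : ℝ) / ((d.sum.choose k : ℕ) : ℝ)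
            * PtP p ((a - k + 1) ::ₘ (d : Multiset ℕ).erase a) else 0)).sum :=
          sum_range_getD (fun a => if k ≤ a then (a.choose k : ℝ) / ((d.sum.choose k : ℕ) : ℝ)
            * PtP p ((a - k + 1) ::ₘ (d : Multiset ℕ).erase a) else 0) d
      _ = F2P p d.sum k (d : Multiset ℕ) := rfl

end MohleAux
namespace MohleAux
set_option linter.unusedSectionVars false
set_option maxHeartbeats 1000000

lemma sum_map_sub (m : Multiset ℕ) (f g : ℕ → ℝ) :
    (m.map (fun b => f b - g b)).sum = (m.map f).sum - (m.map g).sum := by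
  induction m using Multiset.induction with
  | empty => simp
  | cons x t ih => simp only [Multiset.map_cons, Multiset.sum_cons, ih]; ring

lemma sum_map_cons_erase (M : Multiset ℕ) (a : ℕ) (h : a ∈ M) (f : ℕ → ℝ) :
    (M.map f).sum = f a + ((M.erase a).map f).sum := by
  conv_lhs => rw [← Multiset.cons_erase h]
  rw [Multiset.map_cons, Multiset.sum_cons]

lemma groupA (p : List ℕ → ℝ) (M : Multiset ℕ)
    (IHP : ∀ m : Multiset ℕ, m ≠ 0 → (∀ a ∈ m, 1 ≤ a) → m.sum < M.sum →
      PtP p m = PtP p (1 ::ₘ m) + (m.map (fun b => PtP p ((b+1) ::ₘ m.erase b))).sum)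
    (hparts : ∀ a ∈ M, 1 ≤ a) (hs : 2 ≤ M.sum) :
    (((1 ::ₘ M).count 1 : ℕ) : ℝ) * PtP p ((1 ::ₘ M).erase 1)
      + (M.map (fun b => ((((b+1) ::ₘ M.erase b).count 1 : ℕ) : ℝ)
          * PtP p (((b+1) ::ₘ M.erase b).erase 1))).sum
    = PtP p M + ((M.count 1 : ℕ) : ℝ) * PtP p (M.erase 1) := by
  have e0 : (1 ::ₘ M).erase 1 = M := Multiset.erase_cons_head 1 M
  have ecnt : (1 ::ₘ M).count 1 = M.count 1 + 1 := by
    rw [Multiset.count_cons_self]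
  have estep : (M.map (fun b => ((((b+1) ::ₘ M.erase b).count 1 : ℕ) : ℝ)
        * PtP p (((b+1) ::ₘ M.erase b).erase 1))).sum
      = (M.map (fun b => (((M.erase b).count 1 : ℕ) : ℝ)
        * PtP p ((b+1) ::ₘ (M.erase 1).erase b))).sum := by
    apply congrArg
    apply Multiset.map_congr rfl
    intro b hb
    have hb1 := hparts b hb
    have h1 : ((b+1) ::ₘ M.erase b).count 1 = (M.erase b).count 1 :=
      Multiset.count_cons_of_ne (by omega) _
    have h2 : ((b+1) ::ₘ M.erase b).erase 1 = (b+1) ::ₘ ((M.erase b).erase 1) :=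
      Multiset.erase_cons_tail _ (by omega)
    rw [h1, h2, Multiset.erase_comm]
  rw [e0, ecnt, estep]
  by_cases hu : M.count 1 = 0
  · have hz : (M.map (fun b => (((M.erase b).count 1 : ℕ) : ℝ)
        * PtP p ((b+1) ::ₘ (M.erase 1).erase b))).sum = 0 := by
      have : (M.map (fun b => (((M.erase b).count 1 : ℕ) : ℝ)
          * PtP p ((b+1) ::ₘ (M.erase 1).erase b))) = M.map (fun _ => (0:ℝ)) := by
        apply Multiset.map_congr rfl
        intro b hb
        have : (M.erase b).count 1 = 0 :=
          Nat.le_zero.mp (hu ▸ Multiset.count_le_of_le 1 (Multiset.erase_le b M))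
        rw [this]
        simp
      rw [this]; simp
    rw [hz, hu]
    simp
  · have h1M : (1:ℕ) ∈ M := Multiset.count_pos.mp (by omega)
    have hsum1 := erase_sum M 1 h1M
    have hM1 : 1 ::ₘ (M.erase 1) = M := Multiset.cons_erase h1M
    have hm'0 : M.erase 1 ≠ 0 := by
      intro h
      rw [h] at hsum1
      simp at hsum1
      omega
    have hIH := IHP (M.erase 1) hm'0
      (fun a ha => hparts a (Multiset.mem_of_mem_erase ha)) (by omega)
    rw [hM1] at hIH
    -- split the sum over M = 1 ::ₘ M.erase 1
    have hsplit : (M.map (fun b => (((M.erase b).count 1 : ℕ) : ℝ)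
          * PtP p ((b+1) ::ₘ (M.erase 1).erase b))).sum
        = (((M.erase 1).count 1 : ℕ) : ℝ) * PtP p (2 ::ₘ (M.erase 1).erase 1)
          + ((M.erase 1).map (fun b => (((M.erase b).count 1 : ℕ) : ℝ)
              * PtP p ((b+1) ::ₘ (M.erase 1).erase b))).sum :=
      sum_map_cons_erase M 1 h1M _
    have hcnt1 : (M.erase 1).count 1 = M.count 1 - 1 := Multiset.count_erase_self 1 M
    have hrest : ((M.erase 1).map (fun b => (((M.erase b).count 1 : ℕ) : ℝ)
          * PtP p ((b+1) ::ₘ (M.erase 1).erase b))).sum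
        = ((M.count 1 : ℕ) : ℝ) * ((M.erase 1).map
            (fun b => PtP p ((b+1) ::ₘ (M.erase 1).erase b))).sum
          - (((M.count 1 - 1 : ℕ)) : ℝ) * PtP p (2 ::ₘ (M.erase 1).erase 1) := by
      have hcongr : ((M.erase 1).map (fun b => (((M.erase b).count 1 : ℕ) : ℝ)
            * PtP p ((b+1) ::ₘ (M.erase 1).erase b)))
          = ((M.erase 1).map (fun b =>
              ((M.count 1 : ℕ) : ℝ) * PtP p ((b+1) ::ₘ (M.erase 1).erase b)
              - (if b = 1 then PtP p (2 ::ₘ (M.erase 1).erase 1) else 0))) := by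
        apply Multiset.map_congr rfl
        intro b hb
        by_cases hb1 : b = 1
        · subst hb1
          rw [if_pos rfl, Multiset.count_erase_self]
          have : (1:ℕ) ≤ M.count 1 := by omega
          push_cast [Nat.cast_sub this]
          ring
        · rw [if_neg hb1, Multiset.count_erase_of_ne (fun h => hb1 h.symm) M]
          ring
      rw [hcongr, sum_map_sub, Multiset.sum_map_mul_left, ICount, hcnt1]
    rw [hsplit, hrest, hIH, hcnt1]
    have h1le : (1:ℕ) ≤ M.count 1 := by omega
    push_cast [Nat.cast_sub h1le]
    ring

end MohleAux
namespace MohleAux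
set_option linter.unusedSectionVars false
set_option maxHeartbeats 1600000

lemma G_div (p : List ℕ → ℝ) (j : ℕ) (M : Multiset ℕ) (C : ℝ) :
    (M.map (fun a => if j ≤ a then (a.choose j : ℝ) / C
        * PtP p ((a - j + 1) ::ₘ M.erase a) else 0)).sum = GP p j M / C := by
  unfold GP
  rw [div_eq_mul_inv, mul_comm, ← Multiset.sum_map_mul_left]
  apply congrArg
  apply Multiset.map_congr rfl
  intro a _
  by_cases h : j ≤ a
  · simp only [if_pos h]; ring
  · simp only [if_neg h, mul_zero]

lemma groupB (p : List ℕ → ℝ) (M : Multiset ℕ)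
    (IHP : ∀ m : Multiset ℕ, m ≠ 0 → (∀ a ∈ m, 1 ≤ a) → m.sum < M.sum →
      PtP p m = PtP p (1 ::ₘ m) + (m.map (fun b => PtP p ((b+1) ::ₘ m.erase b))).sum)
    (hparts : ∀ a ∈ M, 1 ≤ a) (hs : 2 ≤ M.sum) (k : ℕ) (hk2 : 2 ≤ k) :
    F2P p (M.sum + 1) k (1 ::ₘ M)
      + (M.map (fun b => F2P p (M.sum + 1) k ((b+1) ::ₘ M.erase b))).sum
    = (GP p k M + GP p (k-1) M) / (((M.sum + 1).choose k : ℕ) : ℝ) := by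
  set N := M.sum + 1 with hN
  set C : ℝ := ((N.choose k : ℕ) : ℝ) with hC
  -- b1 : expand F2P on 1 ::ₘ M
  have b1 : F2P p N k (1 ::ₘ M)
      = (M.map (fun a => if k ≤ a then (a.choose k : ℝ) / C
          * PtP p (1 ::ₘ ((a - k + 1) ::ₘ M.erase a)) else 0)).sum := by
    unfold F2P
    rw [Multiset.map_cons, Multiset.sum_cons, if_neg (by omega : ¬ k ≤ 1), zero_add]
    apply congrArg
    apply Multiset.map_congr rfl
    intro a ha
    by_cases h : k ≤ a
    · rw [if_pos h, if_pos h, erase_cons_mem 1 a M ha, Multiset.cons_swap]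
    · rw [if_neg h, if_neg h]
  -- b2 : expand F2P on (b+1) ::ₘ M.erase b pointwise, and split into head and tail by linearity
  have b2 : (M.map (fun b => F2P p N k ((b+1) ::ₘ M.erase b))).sum
      = (M.map (fun b => if k ≤ b + 1 then ((b+1).choose k : ℝ) / C
            * PtP p ((b + 1 - k + 1) ::ₘ M.erase b) else 0)).sum
        + (M.map (fun b => ((M.erase b).map (fun a => if k ≤ a then (a.choose k : ℝ) / C
            * PtP p ((b+1) ::ₘ ((a - k + 1) ::ₘ ((M.erase a).erase b))) else 0)).sum)).sum := by
    rw [← Multiset.sum_map_add]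
    apply congrArg
    apply Multiset.map_congr rfl
    intro b hb
    unfold F2P
    rw [Multiset.map_cons, Multiset.sum_cons, Multiset.erase_cons_head]
    congr 1
    apply congrArg
    apply Multiset.map_congr rfl
    intro a ha
    by_cases h : k ≤ a
    · rw [if_pos h, if_pos h, erase_cons_mem (b+1) a (M.erase b) ha, Multiset.cons_swap,
        Multiset.erase_comm]
    · rw [if_neg h, if_neg h]
  -- b3 : exchange the double sum
  have b3 : (M.map (fun b => ((M.erase b).map (fun a => if k ≤ a then (a.choose k : ℝ) / C
          * PtP p ((b+1) ::ₘ ((a - k + 1) ::ₘ ((M.erase a).erase b))) else 0)).sum)).sum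
      = (M.map (fun a => ((M.erase a).map (fun b => if k ≤ a then (a.choose k : ℝ) / C
          * PtP p ((b+1) ::ₘ ((a - k + 1) ::ₘ ((M.erase a).erase b))) else 0)).sum)).sum :=
    DS M (fun b a => if k ≤ a then (a.choose k : ℝ) / C
          * PtP p ((b+1) ::ₘ ((a - k + 1) ::ₘ ((M.erase a).erase b))) else 0)
  -- b4 : inner sum evaluation via IHP
  have b4 : ∀ a ∈ M, k ≤ a →
      ((M.erase a).map (fun b => PtP p ((b+1) ::ₘ ((a - k + 1) ::ₘ ((M.erase a).erase b))))).sum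
        = PtP p ((a - k + 1) ::ₘ M.erase a) - PtP p (1 ::ₘ ((a - k + 1) ::ₘ M.erase a))
          - PtP p ((a - k + 2) ::ₘ M.erase a) := by
    intro a ha hka
    have hasum := erase_sum M a ha
    have haS : a ≤ M.sum := Multiset.single_le_sum (fun x _ => Nat.zero_le x) a ha
    have hIHe := IHP ((a - k + 1) ::ₘ M.erase a) (Multiset.cons_ne_zero)
      (by
        intro x hx
        rcases Multiset.mem_cons.mp hx with h | h
        · omega
        · exact hparts x (Multiset.mem_of_mem_erase h))
      (by
        rw [Multiset.sum_cons]
        omega)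
    have hsplit := sum_map_cons_erase ((a - k + 1) ::ₘ M.erase a) (a - k + 1)
      (Multiset.mem_cons_self _ _)
      (fun b => PtP p ((b+1) ::ₘ ((a - k + 1) ::ₘ M.erase a).erase b))
    rw [Multiset.erase_cons_head] at hsplit
    have hcongr : ((M.erase a).map
          (fun b => PtP p ((b+1) ::ₘ ((a - k + 1) ::ₘ M.erase a).erase b))).sum
        = ((M.erase a).map
          (fun b => PtP p ((b+1) ::ₘ ((a - k + 1) ::ₘ ((M.erase a).erase b))))).sum := by
      apply congrArg
      apply Multiset.map_congr rfl
      intro b hb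
      rw [erase_cons_mem _ b _ hb]
    have h12 : a - k + 1 + 1 = a - k + 2 := by omega
    rw [h12] at hsplit
    rw [hIHe, hsplit] at *
    rw [← hcongr]
    ring
  -- b5 : combine b1 and the exchanged double sum
  have b5 : F2P p N k (1 ::ₘ M)
      + (M.map (fun a => ((M.erase a).map (fun b => if k ≤ a then (a.choose k : ℝ) / C
          * PtP p ((b+1) ::ₘ ((a - k + 1) ::ₘ ((M.erase a).erase b))) else 0)).sum)).sum
      = (M.map (fun a => if k ≤ a then (a.choose k : ℝ) / C
          * (PtP p ((a - k + 1) ::ₘ M.erase a) - PtP p ((a - k + 2) ::ₘ M.erase a))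
          else 0)).sum := by
    rw [b1, ← Multiset.sum_map_add]
    apply congrArg
    apply Multiset.map_congr rfl
    intro a ha
    by_cases h : k ≤ a
    · have hinner : ((M.erase a).map (fun b => if k ≤ a then (a.choose k : ℝ) / C
            * PtP p ((b+1) ::ₘ ((a - k + 1) ::ₘ ((M.erase a).erase b))) else 0)).sum
          = (a.choose k : ℝ) / C
            * ((M.erase a).map (fun b =>
                PtP p ((b+1) ::ₘ ((a - k + 1) ::ₘ ((M.erase a).erase b))))).sum := by
        rw [← Multiset.sum_map_mul_left]
        apply congrArg
        apply Multiset.map_congr rfl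
        intro b _
        rw [if_pos h]
      rw [hinner, b4 a ha h, if_pos h, if_pos h]
      ring
    · have hinner : ((M.erase a).map (fun b => if k ≤ a then (a.choose k : ℝ) / C
            * PtP p ((b+1) ::ₘ ((a - k + 1) ::ₘ ((M.erase a).erase b))) else 0)).sum = 0 := by
        have : ((M.erase a).map (fun b => if k ≤ a then (a.choose k : ℝ) / C
            * PtP p ((b+1) ::ₘ ((a - k + 1) ::ₘ ((M.erase a).erase b))) else 0))
            = (M.erase a).map (fun _ => (0:ℝ)) := by
          apply Multiset.map_congr rfl
          intro b _
          rw [if_neg h]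
        rw [this]; simp
      rw [hinner, if_neg h, if_neg h]
      simp
  -- b6 : per-element recombination with Pascal's rule
  have b6 : ∀ a ∈ M,
      (if k ≤ a then (a.choose k : ℝ) / C
          * (PtP p ((a - k + 1) ::ₘ M.erase a) - PtP p ((a - k + 2) ::ₘ M.erase a)) else 0)
        + (if k ≤ a + 1 then ((a+1).choose k : ℝ) / C
            * PtP p ((a + 1 - k + 1) ::ₘ M.erase a) else 0)
      = (if k ≤ a then (a.choose k : ℝ) / C * PtP p ((a - k + 1) ::ₘ M.erase a) else 0)
        + (if k - 1 ≤ a then (a.choose (k-1) : ℝ) / C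
            * PtP p ((a - (k-1) + 1) ::ₘ M.erase a) else 0) := by
    intro a _
    obtain ⟨j, rfl⟩ : ∃ j, k = j + 1 := ⟨k - 1, by omega⟩
    have hj1 : j + 1 - 1 = j := by omega
    rw [hj1]
    by_cases h1 : j + 1 ≤ a
    · have h2 : j + 1 ≤ a + 1 := by omega
      have h3 : j ≤ a := by omega
      have e1 : a + 1 - (j+1) + 1 = a - (j+1) + 2 := by omega
      have e2 : a - j + 1 = a - (j+1) + 2 := by omega
      have hpas : ((a+1).choose (j+1) : ℝ) = (a.choose j : ℝ) + (a.choose (j+1) : ℝ) := by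
        rw [Nat.choose_succ_succ' a j]
        push_cast
        ring
      rw [if_pos h1, if_pos h2, if_pos h1, if_pos h3, e1, e2, hpas]
      ring
    · by_cases h2 : j + 1 ≤ a + 1
      · have ha : a = j := by omega
        subst ha
        have e1 : a + 1 - (a+1) + 1 = 1 := by omega
        have e2 : a - a + 1 = 1 := by omega
        simp only [if_neg h1, if_pos h2, if_pos (le_refl a), e1, e2, Nat.choose_self]
      · have h3 : ¬ j ≤ a := by omega
        rw [if_neg h1, if_neg h2, if_neg h1, if_neg h3]
  -- assemble
  calc F2P p N k (1 ::ₘ M) + (M.map (fun b => F2P p N k ((b+1) ::ₘ M.erase b))).sum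
      = (F2P p N k (1 ::ₘ M)
          + (M.map (fun a => ((M.erase a).map (fun b => if k ≤ a then (a.choose k : ℝ) / C
              * PtP p ((b+1) ::ₘ ((a - k + 1) ::ₘ ((M.erase a).erase b))) else 0)).sum)).sum)
        + (M.map (fun b => if k ≤ b + 1 then ((b+1).choose k : ℝ) / C
            * PtP p ((b + 1 - k + 1) ::ₘ M.erase b) else 0)).sum := by
        rw [b2, b3]; ring
    _ = (M.map (fun a => if k ≤ a then (a.choose k : ℝ) / C
            * (PtP p ((a - k + 1) ::ₘ M.erase a) - PtP p ((a - k + 2) ::ₘ M.erase a))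
            else 0)).sum
        + (M.map (fun a => if k ≤ a + 1 then ((a+1).choose k : ℝ) / C
            * PtP p ((a + 1 - k + 1) ::ₘ M.erase a) else 0)).sum := by rw [b5]
    _ = (M.map (fun a => (if k ≤ a then (a.choose k : ℝ) / C
            * PtP p ((a - k + 1) ::ₘ M.erase a) else 0)
          + (if k - 1 ≤ a then (a.choose (k-1) : ℝ) / C
            * PtP p ((a - (k-1) + 1) ::ₘ M.erase a) else 0))).sum := by
        rw [← Multiset.sum_map_add]
        apply congrArg
        apply Multiset.map_congr rfl
        intro a ha
        exact b6 a ha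
    _ = (GP p k M + GP p (k-1) M) / C := by
        rw [Multiset.sum_map_add, G_div, G_div, ← add_div]
end MohleAux
namespace MohleAux
set_option linter.unusedSectionVars false
set_option maxHeartbeats 3000000

noncomputable def EP (q : ℕ → ℕ → ℝ) (p : List ℕ → ℝ) (N : ℕ) (m : Multiset ℕ) : ℝ :=
  q N 1 / (N : ℝ) * (((m.count 1 : ℕ) : ℝ) * PtP p (m.erase 1))
    + ∑ k ∈ Finset.Icc 2 N, q N k * F2P p N k m

lemma conv_lemma' (q : ℕ → ℕ → ℝ) (p : List ℕ → ℝ) (d : List ℕ)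
    (hd : IsComposition d) (hs : 2 ≤ d.sum)
    (hrec : MohleRec q p d)
    (hsym : ∀ e, IsComposition e → e.sum < d.sum → ∀ e', List.Perm e e' → p e = p e') :
    p d = EP q p d.sum (d : Multiset ℕ) :=
  conv_lemma q p d hd hs hrec hsym

lemma set_succ_facts (d : List ℕ) (hd : IsComposition d) (i : ℕ) (hi : i < d.length) :
    IsComposition (d.set i (d.getD i 0 + 1)) ∧ (d.set i (d.getD i 0 + 1)).sum = d.sum + 1 ∧
      ((d.set i (d.getD i 0 + 1) : List ℕ) : Multiset ℕ)
        = (d.getD i 0 + 1) ::ₘ (d : Multiset ℕ).erase (d.getD i 0) := by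
  have hcoe := coe_set d i (d.getD i 0 + 1) hi
  have hmem : d.getD i 0 ∈ (d : Multiset ℕ) := by exact_mod_cast getD_mem d i hi
  have hesum := erase_sum (d : Multiset ℕ) (d.getD i 0) hmem
  have hsum : (d.set i (d.getD i 0 + 1)).sum = d.sum + 1 := by
    have h2 : ((d.set i (d.getD i 0 + 1) : List ℕ) : Multiset ℕ).sum
        = ((d.getD i 0 + 1) ::ₘ (d : Multiset ℕ).erase (d.getD i 0)).sum := by rw [hcoe]
    rw [Multiset.sum_coe, Multiset.sum_cons] at h2
    have h3 : (d : Multiset ℕ).sum = d.sum := Multiset.sum_coe d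
    omega
  refine ⟨⟨?_, ?_⟩, hsum, hcoe⟩
  · intro hnil
    have : (d.set i (d.getD i 0 + 1)).length = d.length := List.length_set
    rw [hnil] at this
    simp at this
    exact hd.1 (List.length_eq_zero_iff.mp this.symm)
  · intro x hx
    rcases List.mem_or_eq_of_mem_set hx with h' | h'
    · exact hd.2 x h'
    · omega

lemma append_one_facts (d : List ℕ) (hd : IsComposition d) :
    IsComposition (d ++ [1]) ∧ (d ++ [1]).sum = d.sum + 1 ∧
      ((d ++ [1] : List ℕ) : Multiset ℕ) = 1 ::ₘ (d : Multiset ℕ) := by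
  refine ⟨⟨by simp, ?_⟩, by simp, coe_append_singleton d 1⟩
  intro x hx
  rcases List.mem_append.mp hx with h | h
  · exact hd.2 x h
  · simp at h; omega

theorem core_key (q : ℕ → ℕ → ℝ) (r : ℕ → ℝ)
    (hq0 : ∀ n k, 0 ≤ q n k)
    (hq1 : q 2 1 + q 2 2 = 1)
    (hQ2 : ∀ n : ℕ, 1 ≤ n →
      q (n+1) 1 / ((n:ℝ)+1) + q (n+1) 2 * (n:ℝ) / (((n+1).choose 2 : ℕ) : ℝ) = 1 - r n)
    (hQ3 : ∀ n k : ℕ, 2 ≤ k → k ≤ n →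
      q (n+1) k / (((n+1).choose k : ℕ) : ℝ) + q (n+1) (k+1) / (((n+1).choose (k+1) : ℕ) : ℝ)
        = r n * q n k / ((n.choose k : ℕ) : ℝ))
    (hQ4 : ∀ n : ℕ, 1 ≤ n → q (n+1) 1 / ((n:ℝ)+1) = r n * q n 1 / (n:ℝ))
    (p : List ℕ → ℝ) (hp1 : p [1] = 1)
    (hM : ∀ c, IsComposition c → 2 ≤ c.sum → MohleRec q p c) :
    ∀ n : ℕ, ∀ c : List ℕ, IsComposition c → c.sum = n →
      0 ≤ p c ∧ (∀ c', List.Perm c c' → p c = p c') ∧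
        p c = p (c ++ [1]) + ∑ i ∈ Finset.range c.length, p (c.set i (c.getD i 0 + 1)) := by
  intro n
  induction n using Nat.strong_induction_on with
  | _ n IH =>
  intro c hc hcs
  rcases Nat.lt_or_ge n 2 with hn | hn2
  · -- n = 0 or 1
    have h1 := comp_sum_pos hc
    have hn1 : n = 1 := by omega
    subst hn1
    have hc1 : c = [1] := comp_of_sum_one hc hcs
    subst hc1
    refine ⟨by rw [hp1]; norm_num, ?_, ?_⟩
    · intro c' hperm
      rw [List.perm_singleton.mp hperm.symm]
    · -- p [1] = p [1,1] + p [2]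
      have h11 : p [1, 1] = q 2 1 := by
        have := hM [1,1] ⟨by simp, by intro x hx; simp at hx; omega⟩ (by simp)
        rw [MohleRec] at this
        rw [this]
        unfold mohleRHS
        simp [Finset.sum_range_succ, hp1]
        ring
      have h2 : p [2] = q 2 2 := by
        have := hM [2] ⟨by simp, by intro x hx; simp at hx; omega⟩ (by simp)
        rw [MohleRec] at this
        rw [this]
        unfold mohleRHS
        simp [Finset.sum_range_succ, hp1]
      show p [1] = p ([1] ++ [1]) + ∑ i ∈ Finset.range 1, p ([1].set i ([1].getD i 0 + 1))
      rw [Finset.sum_range_one]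
      show p [1] = p [1, 1] + p [2]
      rw [hp1, h11, h2, hq1]
  · -- main case : 2 ≤ n
    have SymLT : ∀ d, IsComposition d → d.sum < n → ∀ d', List.Perm d d' → p d = p d' :=
      fun d hd hlt => (IH d.sum hlt d hd rfl).2.1
    have NonLT : ∀ d, IsComposition d → d.sum < n → 0 ≤ p d :=
      fun d hd hlt => (IH d.sum hlt d hd rfl).1
    have AddLT : ∀ d, IsComposition d → d.sum < n →
        p d = p (d ++ [1]) + ∑ i ∈ Finset.range d.length, p (d.set i (d.getD i 0 + 1)) :=
      fun d hd hlt => (IH d.sum hlt d hd rfl).2.2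
    -- symmetry at level n
    have SymN : ∀ d, IsComposition d → d.sum = n → ∀ d', List.Perm d d' → p d = p d' := by
      intro d hd hdn d' hperm
      have hd' : IsComposition d' := by
        constructor
        · intro hnil
          subst hnil
          exact hd.1 (List.Perm.eq_nil hperm)
        · intro x hx
          exact hd.2 x (hperm.mem_iff.mpr hx)
      have hrec := hM d hd (by omega)
      have hrec' := hM d' hd' (by rw [← hperm.sum_eq]; omega)
      have hsym1 : ∀ e, IsComposition e → e.sum < d.sum → ∀ e', List.Perm e e' → p e = p e' :=
        fun e he hlt => SymLT e he (by omega)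
      have hsym2 : ∀ e, IsComposition e → e.sum < d'.sum → ∀ e', List.Perm e e' → p e = p e' :=
        fun e he hlt => SymLT e he (by rw [← hperm.sum_eq] at hlt; omega)
      rw [conv_lemma' q p d hd (by omega) hrec hsym1,
        conv_lemma' q p d' hd' (by rw [← hperm.sum_eq]; omega) hrec' hsym2,
        hperm.sum_eq, Multiset.coe_eq_coe.mpr hperm]
    have SymLE : ∀ d, IsComposition d → d.sum ≤ n → ∀ d', List.Perm d d' → p d = p d' := by
      intro d hd hle
      rcases Nat.lt_or_ge d.sum n with h | h
      · exact SymLT d hd h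
      · exact SymN d hd (by omega)
    have PtOf : ∀ (e : List ℕ) (m : Multiset ℕ), IsComposition e → e.sum ≤ n →
        (e : Multiset ℕ) = m → p e = PtP p m := by
      intro e m he hle hm
      apply SymLE e he hle
      rw [← Multiset.coe_eq_coe, hm, Multiset.coe_toList]
    have PtNonneg : ∀ m : Multiset ℕ, m ≠ 0 → (∀ x ∈ m, 0 < x) → m.sum < n → 0 ≤ PtP p m := by
      intro m h0 hp hlt
      exact NonLT m.toList (toList_comp m h0 hp) (by rwa [Multiset.sum_toList])
    -- convenient facts about c
    have hMsum : (c : Multiset ℕ).sum = n := by rw [Multiset.sum_coe]; exact hcs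
    have hMparts : ∀ a ∈ (c : Multiset ℕ), 1 ≤ a := by
      intro a ha
      exact hc.2 a (by exact_mod_cast ha)
    have hrec_c := hM c hc (by omega)
    have hconv_c := conv_lemma' q p c hc (by omega) hrec_c
      (fun e he hlt => SymLT e he (by omega))
    -- nonnegativity at level n
    have hNonneg : 0 ≤ p c := by
      rw [hconv_c]
      unfold EP
      apply add_nonneg
      · apply mul_nonneg
        · apply div_nonneg (hq0 _ _)
          exact_mod_cast Nat.zero_le _
        · rcases Nat.eq_zero_or_pos ((c : Multiset ℕ).count 1) with h0 | hpos
          · rw [h0]; simp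
          · apply mul_nonneg (by exact_mod_cast Nat.zero_le _)
            apply PtNonneg
            · intro he
              have h1m : (1:ℕ) ∈ (c : Multiset ℕ) := Multiset.count_pos.mp hpos
              have := erase_sum (c : Multiset ℕ) 1 h1m
              rw [he] at this
              simp at this
              omega
            · intro x hx
              have := hMparts x (Multiset.mem_of_mem_erase hx)
              omega
            · have h1m : (1:ℕ) ∈ (c : Multiset ℕ) := Multiset.count_pos.mp hpos
              have := erase_sum (c : Multiset ℕ) 1 h1m
              rw [hcs] at *
              omega
      · apply Finset.sum_nonneg
        intro k hk
        rw [Finset.mem_Icc, hcs] at hk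
        apply mul_nonneg (hq0 _ _)
        unfold F2P
        apply Multiset.sum_nonneg
        intro x hx
        rw [Multiset.mem_map] at hx
        obtain ⟨a, ha, rfl⟩ := hx
        by_cases h : k ≤ a
        · rw [if_pos h]
          apply mul_nonneg
          · apply div_nonneg <;> exact_mod_cast Nat.zero_le _
          · have hasum := erase_sum (c : Multiset ℕ) a ha
            have haS : a ≤ (c : Multiset ℕ).sum :=
              Multiset.single_le_sum (fun x _ => Nat.zero_le x) a ha
            apply PtNonneg
            · exact Multiset.cons_ne_zero
            · intro x hx
              rcases Multiset.mem_cons.mp hx with h' | h'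
              · omega
              · have := hMparts x (Multiset.mem_of_mem_erase h')
                omega
            · rw [Multiset.sum_cons]
              rw [hMsum] at *
              omega
        · rw [if_neg h]
    refine ⟨hNonneg, SymN c hc hcs, ?_⟩
    -- the addition rule at level n
    have IHP : ∀ m : Multiset ℕ, m ≠ 0 → (∀ a ∈ m, 1 ≤ a) → m.sum < (c : Multiset ℕ).sum →
        PtP p m = PtP p (1 ::ₘ m) + (m.map (fun b => PtP p ((b+1) ::ₘ m.erase b))).sum := by
      intro m h0 hpm hlt
      rw [hMsum] at hlt
      have hcomp := toList_comp m h0 (fun a ha => hpm a ha)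
      have htsum : m.toList.sum = m.sum := Multiset.sum_toList m
      have hadd := AddLT m.toList hcomp (by omega)
      have hap := append_one_facts m.toList hcomp
      have h1 : p (m.toList ++ [1]) = PtP p (1 ::ₘ m) := by
        apply PtOf _ _ hap.1 (by omega)
        rw [hap.2.2, Multiset.coe_toList]
      have h2 : ∑ i ∈ Finset.range m.toList.length, p (m.toList.set i (m.toList.getD i 0 + 1))
          = (m.map (fun b => PtP p ((b+1) ::ₘ m.erase b))).sum := by
        have hcg : ∀ i ∈ Finset.range m.toList.length,
            p (m.toList.set i (m.toList.getD i 0 + 1))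
              = (if True then PtP p ((m.toList.getD i 0 + 1) ::ₘ m.erase (m.toList.getD i 0))
                 else 0) := by
          intro i hi
          rw [Finset.mem_range] at hi
          have hsf := set_succ_facts m.toList hcomp i hi
          rw [if_pos trivial]
          apply PtOf _ _ hsf.1 (by omega)
          rw [hsf.2.2, Multiset.coe_toList]
        calc ∑ i ∈ Finset.range m.toList.length, p (m.toList.set i (m.toList.getD i 0 + 1))
            = ∑ i ∈ Finset.range m.toList.length,
                (if True then PtP p ((m.toList.getD i 0 + 1) ::ₘ m.erase (m.toList.getD i 0))
                 else 0) := Finset.sum_congr rfl hcg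
          _ = (m.toList.map (fun b => if True then PtP p ((b+1) ::ₘ m.erase b) else 0)).sum :=
              sum_range_getD (fun b => if True then PtP p ((b+1) ::ₘ m.erase b) else 0) m.toList
          _ = ((m.toList : Multiset ℕ).map
                (fun b => if True then PtP p ((b+1) ::ₘ m.erase b) else 0)).sum := rfl
          _ = (m.map (fun b => PtP p ((b+1) ::ₘ m.erase b))).sum := by
              rw [Multiset.coe_toList]
              simp only [if_true]
      rw [h1, h2] at hadd
      exact hadd
    -- now the assembly
    set M := (c : Multiset ℕ) with hMdef
    have hap := append_one_facts c hc
    have hA : p (c ++ [1]) = EP q p (n+1) (1 ::ₘ M) := by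
      have h := conv_lemma' q p (c++[1]) hap.1 (by rw [hap.2.1]; omega)
        (hM _ hap.1 (by rw [hap.2.1]; omega))
        (fun e he hlt => SymLE e he (by rw [hap.2.1] at hlt; omega))
      rw [h, hap.2.1, hap.2.2, hcs]
    have hB : ∀ i ∈ Finset.range c.length,
        p (c.set i (c.getD i 0 + 1))
          = EP q p (n+1) ((c.getD i 0 + 1) ::ₘ M.erase (c.getD i 0)) := by
      intro i hi
      rw [Finset.mem_range] at hi
      have hsf := set_succ_facts c hc i hi
      have h := conv_lemma' q p _ hsf.1 (by rw [hsf.2.1]; omega)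
        (hM _ hsf.1 (by rw [hsf.2.1]; omega))
        (fun e he hlt => SymLE e he (by rw [hsf.2.1] at hlt; omega))
      rw [h, hsf.2.1, hsf.2.2, hcs]
    have hBsum : ∑ i ∈ Finset.range c.length, p (c.set i (c.getD i 0 + 1))
        = (M.map (fun b => EP q p (n+1) ((b+1) ::ₘ M.erase b))).sum := by
      calc ∑ i ∈ Finset.range c.length, p (c.set i (c.getD i 0 + 1))
          = ∑ i ∈ Finset.range c.length,
              EP q p (n+1) ((c.getD i 0 + 1) ::ₘ M.erase (c.getD i 0)) :=
            Finset.sum_congr rfl hB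
        _ = (c.map (fun b => EP q p (n+1) ((b+1) ::ₘ M.erase b))).sum :=
            sum_range_getD (fun b => EP q p (n+1) ((b+1) ::ₘ M.erase b)) c
        _ = (M.map (fun b => EP q p (n+1) ((b+1) ::ₘ M.erase b))).sum := rfl
    have hs2 : 2 ≤ M.sum := by omega
    -- split EP into its two parts
    have hstep1 : EP q p (n+1) (1 ::ₘ M)
          + (M.map (fun b => EP q p (n+1) ((b+1) ::ₘ M.erase b))).sum
        = (q (n+1) 1 / (((n+1:ℕ)):ℝ)
              * ((((1 ::ₘ M).count 1 : ℕ):ℝ) * PtP p ((1 ::ₘ M).erase 1))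
            + (M.map (fun b => q (n+1) 1 / (((n+1:ℕ)):ℝ)
                * (((((b+1) ::ₘ M.erase b).count 1 : ℕ):ℝ)
                  * PtP p (((b+1) ::ₘ M.erase b).erase 1)))).sum)
          + (∑ k ∈ Finset.Icc 2 (n+1), q (n+1) k * F2P p (n+1) k (1 ::ₘ M)
            + ∑ k ∈ Finset.Icc 2 (n+1),
                (M.map (fun b => q (n+1) k * F2P p (n+1) k ((b+1) ::ₘ M.erase b))).sum) := by
      unfold EP
      rw [Multiset.sum_map_add, map_sum_exchange]
      push_cast
      ring
    -- first part via groupA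
    have hstep2 : q (n+1) 1 / (((n+1:ℕ)):ℝ)
            * ((((1 ::ₘ M).count 1 : ℕ):ℝ) * PtP p ((1 ::ₘ M).erase 1))
          + (M.map (fun b => q (n+1) 1 / (((n+1:ℕ)):ℝ)
              * (((((b+1) ::ₘ M.erase b).count 1 : ℕ):ℝ)
                * PtP p (((b+1) ::ₘ M.erase b).erase 1)))).sum
        = q (n+1) 1 / (((n+1:ℕ)):ℝ)
            * (PtP p M + ((M.count 1 : ℕ):ℝ) * PtP p (M.erase 1)) := by
      rw [Multiset.sum_map_mul_left, ← mul_add, groupA p M IHP hMparts hs2]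
    -- second part via groupB
    have hgB : ∀ k ∈ Finset.Icc 2 (n+1),
        F2P p (n+1) k (1 ::ₘ M) + (M.map (fun b => F2P p (n+1) k ((b+1) ::ₘ M.erase b))).sum
          = (GP p k M + GP p (k-1) M) / (((n+1).choose k : ℕ) : ℝ) := by
      intro k hk
      rw [Finset.mem_Icc] at hk
      have h := groupB p M IHP hMparts hs2 k hk.1
      rwa [show M.sum + 1 = n + 1 by omega] at h
    have hstep3 : ∑ k ∈ Finset.Icc 2 (n+1), q (n+1) k * F2P p (n+1) k (1 ::ₘ M)
          + ∑ k ∈ Finset.Icc 2 (n+1),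
              (M.map (fun b => q (n+1) k * F2P p (n+1) k ((b+1) ::ₘ M.erase b))).sum
        = ∑ k ∈ Finset.Icc 2 (n+1), (q (n+1) k / (((n+1).choose k : ℕ) : ℝ)) * GP p k M
          + ∑ k ∈ Finset.Icc 2 (n+1),
              (q (n+1) k / (((n+1).choose k : ℕ) : ℝ)) * GP p (k-1) M := by
      rw [← Finset.sum_add_distrib, ← Finset.sum_add_distrib]
      apply Finset.sum_congr rfl
      intro k hk
      rw [Multiset.sum_map_mul_left, ← mul_add, hgB k hk]
      ring
    have hIccsplit : Finset.Icc 2 (n+1) = insert (n+1) (Finset.Icc 2 n) := by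
      ext x; simp only [Finset.mem_Icc, Finset.mem_insert]; omega
    have hnotmem : (n+1) ∉ Finset.Icc 2 n := by simp
    have hstep4 : ∑ k ∈ Finset.Icc 2 (n+1), (q (n+1) k / (((n+1).choose k : ℕ) : ℝ)) * GP p k M
        = ∑ k ∈ Finset.Icc 2 n, (q (n+1) k / (((n+1).choose k : ℕ) : ℝ)) * GP p k M := by
      rw [hIccsplit, Finset.sum_insert hnotmem, GP_top p (n+1) M (by omega)]
      ring
    have hstep5 : ∑ k ∈ Finset.Icc 2 (n+1),
          (q (n+1) k / (((n+1).choose k : ℕ) : ℝ)) * GP p (k-1) M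
        = ∑ k ∈ Finset.Icc 1 n, (q (n+1) (k+1) / (((n+1).choose (k+1) : ℕ) : ℝ)) * GP p k M := by
      apply Finset.sum_nbij' (fun k => k - 1) (fun k => k + 1)
      · intro a ha; simp only [Finset.mem_Icc] at *; omega
      · intro a ha; simp only [Finset.mem_Icc] at *; omega
      · intro a ha; simp only [Finset.mem_Icc] at ha; omega
      · intro a ha; omega
      · intro a ha
        simp only [Finset.mem_Icc] at ha
        rw [show a - 1 + 1 = a by omega]
    have hIccsplit1 : Finset.Icc 1 n = insert 1 (Finset.Icc 2 n) := by
      ext x; simp only [Finset.mem_Icc, Finset.mem_insert]; omega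
    have hstep6 : ∑ k ∈ Finset.Icc 1 n,
          (q (n+1) (k+1) / (((n+1).choose (k+1) : ℕ) : ℝ)) * GP p k M
        = (q (n+1) 2 / (((n+1).choose 2 : ℕ) : ℝ)) * ((n:ℝ) * PtP p M)
          + ∑ k ∈ Finset.Icc 2 n,
              (q (n+1) (k+1) / (((n+1).choose (k+1) : ℕ) : ℝ)) * GP p k M := by
      rw [hIccsplit1, Finset.sum_insert (by simp), GP_one p M hMparts, hMsum]
    have hstep7 : ∑ k ∈ Finset.Icc 2 n, (q (n+1) k / (((n+1).choose k : ℕ) : ℝ)) * GP p k M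
          + ∑ k ∈ Finset.Icc 2 n,
              (q (n+1) (k+1) / (((n+1).choose (k+1) : ℕ) : ℝ)) * GP p k M
        = r n * ∑ k ∈ Finset.Icc 2 n, q n k * F2P p n k M := by
      rw [← Finset.sum_add_distrib, Finset.mul_sum]
      apply Finset.sum_congr rfl
      intro k hk
      rw [Finset.mem_Icc] at hk
      have h3 := hQ3 n k hk.1 hk.2
      rw [← add_mul, h3, F2_as_G p n k M]
      ring
    -- final algebra
    have hpc2 : p c = q n 1 / ((n:ℕ):ℝ)
          * (((M.count 1 : ℕ):ℝ) * PtP p (M.erase 1))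
        + ∑ k ∈ Finset.Icc 2 n, q n k * F2P p n k M := by
      rw [hconv_c, hcs]
      rfl
    have hPcM : p c = PtP p M := PtOf c M hc (le_of_eq hcs) rfl
    rw [hA, hBsum, hstep1, hstep2, hstep3, hstep4, hstep5, hstep6]
    have e1 := hQ4 n (by omega)
    have e2 := hQ2 n (by omega)
    have hcast : (((n+1:ℕ)):ℝ) = (n:ℝ)+1 := by push_cast; ring
    rw [hcast]
    rw [hPcM] at hpc2 ⊢
    linear_combination (-(PtP p M)) * e2
      + (-(((M.count 1 : ℕ):ℝ) * PtP p (M.erase 1))) * e1 + (r n) * hpc2 - hstep7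


end MohleAux
/-- For `Λ` a finite measure on `[0,1]` and `ρ > 0`, the unique solution of
Möhle's recursion with coefficients `q(n:k) = Φ(n:k)/Φ(n)` and `p(1) = 1` is an infinite EPPF. -/
theorem mohle_solution_is_infinite_eppf (Λ : Measure (Set.Icc (0:ℝ) 1))
    (hΛ : IsFiniteMeasure Λ) (ρ : ℝ) (hρ : 0 < ρ)
    (p : List ℕ → ℝ) (hp1 : p [1] = 1)
    (hM : ∀ c, IsComposition c → 2 ≤ c.sum →
      MohleRec (fun n k => coalPhiK Λ ρ n k / coalPhi Λ ρ n) p c) :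
    IsInfEPPF p := by
  haveI := hΛ
  have hphin : ∀ m : ℕ, 0 ≤ coalPhi Λ ρ m := fun m =>
    Finset.sum_nonneg (fun k _ => MohleAux.coalPhiK_nonneg Λ ρ hρ.le m k)
  have key := MohleAux.core_key (fun n k => coalPhiK Λ ρ n k / coalPhi Λ ρ n)
    (fun n => coalPhi Λ ρ n / coalPhi Λ ρ (n+1))
    (fun n k => div_nonneg (MohleAux.coalPhiK_nonneg Λ ρ hρ.le n k) (hphin n))
    (MohleAux.Q1 Λ ρ hρ)
    (fun n hn => MohleAux.Q2 Λ ρ hρ n hn)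
    (fun n k h2 hkn => MohleAux.Q3 Λ ρ hρ n k h2 hkn)
    (fun n hn => MohleAux.Q4 Λ ρ hρ n hn)
    p hp1 hM
  refine ⟨hp1, ?_, ?_, ?_⟩
  · exact fun c hc => (key c.sum c hc rfl).1
  · exact fun c c' hc hperm => (key c.sum c hc rfl).2.1 c' hperm
  · exact fun c hc => (key c.sum c hc rfl).2.2
end

section
/- Let q and q' be infinite decrement matrices, each satisfying the consistency recursion for all b ≥ 1, with q(2:1) > 0 and q'(2:1) > 0. If the unique solutions p and p' of Möhle's recursion with p(1) = p'(1) = 1, with coefficients from q and q' respectively, coincide on all compositions, then q = q'. -/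
open Finset MeasureTheory

/-! ### Auxiliary lemmas -/

lemma rep_erase (r i : ℕ) (h : i < r) :
    (List.replicate r (1:ℕ)).eraseIdx i = List.replicate (r-1) 1 := by
  have h1 : ((List.replicate r (1:ℕ)).eraseIdx i).length = r - 1 := by
    rw [List.length_eraseIdx]; simp; omega
  have h2 : ∀ x ∈ (List.replicate r (1:ℕ)).eraseIdx i, x = 1 := fun x hx =>
    List.eq_of_mem_replicate (List.mem_of_mem_eraseIdx hx)
  rw [List.eq_replicate_iff.mpr ⟨h1, h2⟩]

lemma rep_getD (i r : ℕ) (h : i < r) : (List.replicate r (1:ℕ)).getD i 0 = 1 := by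
  rw [List.getD_eq_getElem _ _ (by simpa using h)]; simp

lemma comp_cons (a r : ℕ) (ha : 0 < a) : IsComposition (a :: List.replicate r 1) := by
  refine ⟨by simp, ?_⟩
  intro x hx
  rcases List.mem_cons.1 hx with h | h
  · omega
  · have := List.eq_of_mem_replicate h; omega

lemma comp_rep (m : ℕ) (hm : 1 ≤ m) : IsComposition (List.replicate m 1) := by
  refine ⟨by simp; omega, ?_⟩
  intro x hx
  have := List.eq_of_mem_replicate hx; omega

lemma mohleRHS_ones (q : ℕ → ℕ → ℝ) (p : List ℕ → ℝ) (b : ℕ) (hb : 2 ≤ b) :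
    mohleRHS q p (List.replicate b 1) = q b 1 * p (List.replicate (b-1) 1) := by
  have hsum : (List.replicate b (1:ℕ)).sum = b := by simp
  have hlen : (List.replicate b (1:ℕ)).length = b := by simp
  have hb0 : ((b:ℝ)) ≠ 0 := by positivity
  calc mohleRHS q p (List.replicate b 1)
      = q b 1 / b * ∑ _j ∈ Finset.range b, p (List.replicate (b-1) 1)
          + ∑ k ∈ Finset.Icc 2 b, q b k * (0:ℝ) := by
        unfold mohleRHS
        simp only [hsum, hlen]
        congr 1
        · congr 1
          apply Finset.sum_congr rfl
          intro j hj
          rw [Finset.mem_range] at hj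
          rw [rep_getD j b hj, if_pos rfl, rep_erase b j hj]
        · apply Finset.sum_congr rfl
          intro k hk
          rw [Finset.mem_Icc] at hk
          congr 1
          apply Finset.sum_eq_zero
          intro j hj
          rw [Finset.mem_range] at hj
          rw [rep_getD j b hj]
          exact if_neg (by omega)
    _ = q b 1 * p (List.replicate (b-1) 1) := by
        rw [Finset.sum_const, Finset.card_range, nsmul_eq_mul]
        field_simp
        simp

lemma mohleRHS_eval (q : ℕ → ℕ → ℝ) (p : List ℕ → ℝ) (k r : ℕ) (hk : 2 ≤ k) :
    mohleRHS q p (k :: List.replicate r 1) =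
      q (k+r) 1 / (↑(k+r)) * (r * p (k :: List.replicate (r-1) 1)) +
      ∑ m ∈ Finset.Icc 2 (k+r), q (k+r) m *
        (if m ≤ k then ((k.choose m : ℝ) / ((k+r).choose m : ℝ)) *
            p ((k - m + 1) :: List.replicate r 1)
          else 0) := by
  have hsum : (k :: List.replicate r (1:ℕ)).sum = k + r := by simp
  have hlen : (k :: List.replicate r (1:ℕ)).length = r + 1 := by simp
  calc mohleRHS q p (k :: List.replicate r 1)
      = q (k+r) 1 / (↑(k+r)) *
          ∑ j ∈ Finset.range (r+1), (if j = 0 then 0 else p (k :: List.replicate (r-1) 1))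
        + ∑ m ∈ Finset.Icc 2 (k+r), q (k+r) m *
          ∑ j ∈ Finset.range (r+1),
            (if j = 0 then
              (if m ≤ k then ((k.choose m : ℝ) / ((k+r).choose m : ℝ)) *
                  p ((k - m + 1) :: List.replicate r 1)
                else 0)
              else 0) := by
        unfold mohleRHS
        simp only [hsum, hlen]
        congr 1
        · congr 1
          apply Finset.sum_congr rfl
          intro j hj
          rw [Finset.mem_range] at hj
          match j with
          | 0 =>
            rw [if_neg (by simp; omega), if_pos rfl]
          | (i+1) =>
            have hi : i < r := by omega
            rw [List.getD_cons_succ, rep_getD i r hi, if_pos rfl, if_neg (by omega),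
              List.eraseIdx_cons_succ, rep_erase r i hi]
        · apply Finset.sum_congr rfl
          intro m hm
          rw [Finset.mem_Icc] at hm
          congr 1
          apply Finset.sum_congr rfl
          intro j hj
          rw [Finset.mem_range] at hj
          match j with
          | 0 =>
            simp only [List.getD_cons_zero, List.set_cons_zero]
            simp
          | (i+1) =>
            have hi : i < r := by omega
            rw [List.getD_cons_succ, rep_getD i r hi, if_neg (by omega), if_neg (by omega)]
    _ = _ := by
        congr 1
        · congr 1
          rw [Finset.sum_range_succ']
          simp [Finset.sum_const, Finset.card_range]
        · apply Finset.sum_congr rfl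
          intro m hm
          congr 1
          rw [Finset.sum_ite_eq' (Finset.range (r+1)) 0]
          simp

lemma col1_pos (q : ℕ → ℕ → ℝ) (hq : IsDecrementMatrix q)
    (hc : ∀ b, 1 ≤ b → ConsistencyRec q b) (h21 : 0 < q 2 1) :
    ∀ b, 2 ≤ b → 0 < q b 1 := by
  intro b hb
  induction b, hb using Nat.le_induction with
  | base => exact h21
  | succ b hb IH =>
    have hrec := (hc b (by omega)).2
    have hb1 : 0 ≤ q (b+1) 1 := hq.1 _ _ le_rfl (by omega)
    have hb2 : 0 ≤ q (b+1) 2 := hq.1 _ _ (by omega) (by omega)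
    have hsum12 : q (b+1) 1 + q (b+1) 2 ≤ 1 := by
      have hrow := hq.2 (b+1) (by omega)
      have hle : ∑ k ∈ ({1,2} : Finset ℕ), q (b+1) k ≤ ∑ k ∈ Finset.Icc 1 (b+1), q (b+1) k := by
        apply Finset.sum_le_sum_of_subset_of_nonneg
        · intro x hx
          fin_cases hx <;> simp [Finset.mem_Icc] <;> omega
        · intro i hi _
          rw [Finset.mem_Icc] at hi
          exact hq.1 _ _ hi.1 hi.2
      rw [hrow] at hle
      simpa using hle
    have hbR : (2:ℝ) ≤ (b:ℝ) := by exact_mod_cast hb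
    have hbpos : (0:ℝ) < (b:ℝ) + 1 := by linarith
    have hne : ((b:ℝ)+1) ≠ 0 := ne_of_gt hbpos
    have key : ((b:ℝ)+1) * q b 1 = (b:ℝ) * q (b+1) 1 + q (b+1) 1 * q b 1
        + 2 * q (b+1) 2 * q b 1 := by
      field_simp at hrec
      linarith [hrec]
    have hfac : (0:ℝ) < (b:ℝ) + 1 - q (b+1) 1 - 2 * q (b+1) 2 := by nlinarith
    have : (0:ℝ) < (b:ℝ) * q (b+1) 1 := by nlinarith [mul_pos IH hfac]
    nlinarith

lemma ones_step (q : ℕ → ℕ → ℝ) (p : List ℕ → ℝ)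
    (hM : ∀ c, IsComposition c → 2 ≤ c.sum → MohleRec q p c) :
    ∀ m, 1 ≤ m → p (List.replicate (m+1) 1) = q (m+1) 1 * p (List.replicate m 1) := by
  intro m hm
  have h := hM (List.replicate (m+1) 1) (comp_rep _ (by omega)) (by simp; omega)
  rw [MohleRec, mohleRHS_ones q p (m+1) (by omega)] at h
  simpa using h

lemma ones_pos (q : ℕ → ℕ → ℝ) (p : List ℕ → ℝ)
    (hq : IsDecrementMatrix q) (hc : ∀ b, 1 ≤ b → ConsistencyRec q b) (h21 : 0 < q 2 1)
    (hp1 : p [1] = 1)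
    (hM : ∀ c, IsComposition c → 2 ≤ c.sum → MohleRec q p c) :
    ∀ m, 1 ≤ m → 0 < p (List.replicate m 1) := by
  intro m hm
  induction m, hm using Nat.le_induction with
  | base =>
    rw [show List.replicate 1 (1:ℕ) = [1] from rfl, hp1]
    norm_num
  | succ m hm IH =>
    rw [ones_step q p hM m hm]
    exact mul_pos (col1_pos q hq hc h21 (m+1) (by omega)) IH

/-- The correspondence `q ↦ p` from consistent infinite decrement matrices
with `q(2:1) > 0` to solutions of Möhle's recursion is injective. -/
theorem consistent_decrement_matrix_determined_by_eppf (q q' : ℕ → ℕ → ℝ)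
    (hq : IsDecrementMatrix q) (hq' : IsDecrementMatrix q')
    (hc : ∀ b, 1 ≤ b → ConsistencyRec q b) (hc' : ∀ b, 1 ≤ b → ConsistencyRec q' b)
    (h21 : 0 < q 2 1) (h21' : 0 < q' 2 1)
    (p p' : List ℕ → ℝ) (hp1 : p [1] = 1) (hp1' : p' [1] = 1)
    (hM : ∀ c, IsComposition c → 2 ≤ c.sum → MohleRec q p c)
    (hM' : ∀ c, IsComposition c → 2 ≤ c.sum → MohleRec q' p' c)
    (heq : ∀ c, IsComposition c → p c = p' c) :
    ∀ b k, 1 ≤ k → k ≤ b → q b k = q' b k := by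
  have hcol1 : ∀ n, 2 ≤ n → q n 1 = q' n 1 := by
    intro n hn
    obtain ⟨m, rfl⟩ : ∃ m, n = m + 1 := ⟨n-1, by omega⟩
    have hm : 1 ≤ m := by omega
    have e1 := ones_step q p hM m hm
    have e2 := ones_step q' p' hM' m hm
    have h3 := heq (List.replicate (m+1) 1) (comp_rep _ (by omega))
    have h4 := heq (List.replicate m 1) (comp_rep _ hm)
    have h5 := ones_pos q p hq hc h21 hp1 hM m hm
    rw [e1, e2, ← h4] at h3
    exact mul_right_cancel₀ (ne_of_gt h5) h3
  have hmain : ∀ k, 2 ≤ k → ∀ b, k ≤ b → q b k = q' b k := by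
    intro k
    induction k using Nat.strong_induction_on with
    | _ k IH =>
      intro hk2 b hkb
      have hb2 : 2 ≤ b := le_trans hk2 hkb
      set r := b - k with hrdef
      have hbr : k + r = b := by omega
      have hcomp : IsComposition (k :: List.replicate r 1) := comp_cons k r (by omega)
      have hcsum : (k :: List.replicate r (1:ℕ)).sum = k + r := by simp
      have e1 := hM _ hcomp (by rw [hcsum]; omega)
      have e2 := hM' _ hcomp (by rw [hcsum]; omega)
      rw [MohleRec, mohleRHS_eval q p k r hk2] at e1
      rw [MohleRec, mohleRHS_eval q' p' k r hk2] at e2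
      simp only [hbr] at e1 e2
      have hA : q b 1 / (b:ℝ) * ((r:ℝ) * p (k :: List.replicate (r-1) 1))
          = q' b 1 / (b:ℝ) * ((r:ℝ) * p' (k :: List.replicate (r-1) 1)) := by
        rw [hcol1 b hb2, heq _ (comp_cons k (r-1) (by omega))]
      have hpc : p (k :: List.replicate r 1) = p' (k :: List.replicate r 1) := heq _ hcomp
      have hT' : ∑ m ∈ Finset.Icc 2 b, q' b m *
            (if m ≤ k then ((k.choose m : ℝ) / ((b.choose m : ℝ))) *
              p' ((k - m + 1) :: List.replicate r 1) else 0)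
          = ∑ m ∈ Finset.Icc 2 b, q' b m *
            (if m ≤ k then ((k.choose m : ℝ) / ((b.choose m : ℝ))) *
              p ((k - m + 1) :: List.replicate r 1) else 0) := by
        apply Finset.sum_congr rfl
        intro m hm
        congr 1
        split_ifs with h
        · rw [heq _ (comp_cons (k - m + 1) r (by omega))]
        · rfl
      have hzero : ∑ m ∈ Finset.Icc 2 b, (q b m - q' b m) *
            (if m ≤ k then ((k.choose m : ℝ) / ((b.choose m : ℝ))) *
              p ((k - m + 1) :: List.replicate r 1) else 0) = 0 := by
        simp only [sub_mul]
        rw [Finset.sum_sub_distrib]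
        linarith [e1, e2, hA, hpc, hT']
      have hmem : k ∈ Finset.Icc 2 b := by rw [Finset.mem_Icc]; omega
      have hside : ∀ m ∈ Finset.Icc 2 b, m ≠ k → (q b m - q' b m) *
            (if m ≤ k then ((k.choose m : ℝ) / ((b.choose m : ℝ))) *
              p ((k - m + 1) :: List.replicate r 1) else 0) = 0 := by
        intro m hm hne
        rw [Finset.mem_Icc] at hm
        by_cases hmk : m ≤ k
        · have hlt : m < k := by omega
          rw [IH m hlt (by omega) b hm.2, sub_self, zero_mul]
        · rw [if_neg hmk, mul_zero]
      have hsingle : (q b k - q' b k) *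
            (if k ≤ k then ((k.choose k : ℝ) / ((b.choose k : ℝ))) *
              p ((k - k + 1) :: List.replicate r 1) else 0) = 0 :=
        (Finset.sum_eq_single_of_mem k hmem hside).symm.trans hzero
      rw [if_pos le_rfl, Nat.choose_self, Nat.sub_self, Nat.cast_one] at hsingle
      have hch : (0:ℝ) < (b.choose k : ℝ) := by
        exact_mod_cast Nat.choose_pos hkb
      have hpp : 0 < p ((0 + 1) :: List.replicate r 1) := by
        rw [show ((0 + 1) :: List.replicate r 1) = List.replicate (r+1) 1 by
          simp [List.replicate_succ]]
        exact ones_pos q p hq hc h21 hp1 hM (r+1) (by omega)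
      have h6 : (1:ℝ) / (b.choose k : ℝ) * p ((0 + 1) :: List.replicate r 1) ≠ 0 :=
        ne_of_gt (mul_pos (div_pos one_pos hch) hpp)
      have h7 := (mul_eq_zero.1 hsingle).resolve_right h6
      linarith [sub_eq_zero.1 h7]
  intro b k hk1 hkb
  by_cases hk : k = 1
  · subst hk
    by_cases hb : b = 1
    · subst hb
      have h1 : q 1 1 = 1 := by simpa using hq.2 1 le_rfl
      have h2 : q' 1 1 = 1 := by simpa using hq'.2 1 le_rfl
      rw [h1, h2]
    · exact hcol1 b (by omega)
  · exact hmain k (by omega) b hkb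
end

section
/- Let ρ > 0 and let (Φ(n))_{n≥1} be a sequence of positive real numbers with Φ(1) = ρ, such that every entry Φ(n:1) = ρ·n and Φ(n:m) = −C(n,m)·∇^{m−2}Ψ(n−m+1), 2 ≤ m ≤ n, is nonnegative, where Ψ(n) = (Φ̄(n) − Φ̄(n+1))/n and Φ̄(n) = Φ(n) − ρ·n. Then the triangular array q(n:m) = Φ(n:m)/Φ(n), 1 ≤ m ≤ n, is an infinite decrement matrix satisfying the consistency recursion for all b ≥ 1. -/
open Finset MeasureTheory

/-! The entries satisfy the Pascal-type rule
`(k+1) Φ(b+1:k+1) + (b+1-k) Φ(b+1:k) = (b+1) Φ(b:k)` for `2 ≤ k ≤ b`, a consequence of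
`(k+1) C(b+1,k+1) = (b+1-k) C(b+1,k) = (b+1) C(b,k)` and `∇^{j+1} c(n) = ∇^j c(n) - ∇^j c(n+1)`;
moreover `2 Φ(b+1:2) = (b+1) (Φ̄(b+1) - Φ̄(b))`. Summing the Pascal rule over `k` and using the
second identity gives, by induction on `n`, `∑_{m ≥ 2} Φ(n:m) = Φ̄(n)`, i.e. the rows of `Φ(n:m)`
sum to `Φ(n)`. With `Φ(b+1:1) = ρ (b+1)` this also yields
`(b+1) Φ(b+1) = (b+1) Φ(b) + Φ(b+1:1) + 2 Φ(b+1:2)`, and the consistency recursion is the Pascal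
rule with both sides divided by these totals. -/

lemma nablaIter_eq_neg_one_pow_mul_fwdDiff_iter (c : ℕ → ℝ) (j n : ℕ) :
    nablaIter c j n = (-1) ^ j * (fwdDiff 1)^[j] c n := by
  rw [fwdDiff_iter_eq_sum_shift, nablaIter, mul_sum]
  refine sum_congr rfl fun i hi => ?_
  have hij : i ≤ j := Nat.lt_succ_iff.mp (mem_range.mp hi)
  have hsign : (-1 : ℝ) ^ j * (-1) ^ (j - i) = (-1) ^ i := by
    rw [← pow_add, show j + (j - i) = i + 2 * (j - i) by omega, pow_add, pow_mul]
    norm_num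
  simp only [zsmul_eq_mul, smul_eq_mul, mul_one]
  push_cast
  rw [← mul_assoc, ← mul_assoc, hsign]

lemma nablaIter_succ (c : ℕ → ℝ) (j n : ℕ) :
    nablaIter c (j + 1) n = nablaIter c j n - nablaIter c j (n + 1) := by
  simp only [nablaIter_eq_neg_one_pow_mul_fwdDiff_iter, Function.iterate_succ_apply', fwdDiff]
  ring

lemma sum_Icc_add_one_eq_add_sum_Icc {M : Type*} [AddCommMonoid M] (f : ℕ → M) {a b : ℕ}
    (h : a ≤ b + 1) : ∑ m ∈ Icc a (b + 1), f m = f a + ∑ k ∈ Icc a b, f (k + 1) := by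
  rw [← add_sum_Ioc_eq_sum_Icc h, ← Icc_add_one_left_eq_Ioc, ← map_add_right_Icc, sum_map]
  rfl

lemma succ_mul_sum_Icc_two_of_pascal (a : ℕ → ℕ → ℝ) {b : ℕ} (hb : 1 ≤ b)
    (hpascal : ∀ k, 2 ≤ k → k ≤ b →
      (k + 1) * a (b + 1) (k + 1) + (b + 1 - k) * a (b + 1) k = (b + 1) * a b k) :
    (b + 1) * ∑ m ∈ Icc 2 (b + 1), a (b + 1) m
      = (b + 1) * ∑ m ∈ Icc 2 b, a b m + 2 * a (b + 1) 2 := by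
  have hweighted : ∑ m ∈ Icc 2 (b + 1), (m : ℝ) * a (b + 1) m
      = 2 * a (b + 1) 2 + ∑ k ∈ Icc 2 b, (k + 1) * a (b + 1) (k + 1) := by
    rw [sum_Icc_add_one_eq_add_sum_Icc _ (by omega)]
    push_cast
    rfl
  have hcoweighted : ∑ m ∈ Icc 2 (b + 1), ((b : ℝ) + 1 - m) * a (b + 1) m
      = ∑ k ∈ Icc 2 b, (b + 1 - k) * a (b + 1) k := by
    rw [sum_Icc_succ_top (by omega)]
    push_cast
    ring
  calc (b + 1) * ∑ m ∈ Icc 2 (b + 1), a (b + 1) m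
      = ∑ m ∈ Icc 2 (b + 1), (m : ℝ) * a (b + 1) m
        + ∑ m ∈ Icc 2 (b + 1), ((b : ℝ) + 1 - m) * a (b + 1) m := by
        rw [mul_sum, ← sum_add_distrib]
        exact sum_congr rfl fun m _ => by ring
    _ = 2 * a (b + 1) 2 + ∑ k ∈ Icc 2 b,
          ((k + 1) * a (b + 1) (k + 1) + (b + 1 - k) * a (b + 1) k) := by
        rw [hweighted, hcoweighted, sum_add_distrib, add_assoc]
    _ = (b + 1) * ∑ m ∈ Icc 2 b, a b m + 2 * a (b + 1) 2 := by
        rw [sum_congr rfl fun k hk => hpascal k (mem_Icc.mp hk).1 (mem_Icc.mp hk).2, ← mul_sum,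
          add_comm]

lemma consistencyRec_div {a : ℕ → ℕ → ℝ} {T : ℕ → ℝ} {b : ℕ} (hTb : T b ≠ 0)
    (hTb' : T (b + 1) ≠ 0)
    (hpascal : ∀ k, 2 ≤ k → k ≤ b →
      (k + 1) * a (b + 1) (k + 1) + (b + 1 - k) * a (b + 1) k = (b + 1) * a b k)
    (hone : b * a (b + 1) 1 = (b + 1) * a b 1)
    (htotal : (b + 1) * T (b + 1) = (b + 1) * T b + a (b + 1) 1 + 2 * a (b + 1) 2) :
    ConsistencyRec (fun n m => a n m / T n) b := by
  refine ⟨fun k hk hkb => ?_, ?_⟩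
  · have := hpascal k hk hkb
    field_simp
    linear_combination -T b * this + a b k * htotal
  · field_simp
    linear_combination -T b * hone + a b 1 * htotal

section RateArray

variable (Φ : ℕ → ℝ) (ρ : ℝ)

lemma phiNM_one (n : ℕ) : phiNM Φ ρ n 1 = ρ * n := if_pos rfl

lemma phiNM_of_two_le {n m : ℕ} (hm : 2 ≤ m) :
    phiNM Φ ρ n m = -(n.choose m : ℝ) * nablaIter (psiOf Φ ρ) (m - 2) (n - m + 1) :=
  if_neg (by omega)

lemma two_mul_phiNM_two {b : ℕ} (hb : 1 ≤ b) :
    2 * phiNM Φ ρ (b + 1) 2 = (b + 1) * (phiBar Φ ρ (b + 1) - phiBar Φ ρ b) := by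
  have hchoose : ((b + 1).choose 2 : ℝ) = (b + 1) * b / 2 := by
    rw [Nat.cast_choose_two]; push_cast; ring
  have hb0 : (b : ℝ) ≠ 0 := by positivity
  rw [phiNM_of_two_le Φ ρ le_rfl, show b + 1 - 2 + 1 = b by omega, hchoose]
  simp only [nablaIter, Nat.sub_self, zero_add, sum_range_one, pow_zero, Nat.choose_self,
    Nat.cast_one, one_mul, add_zero, psiOf]
  field_simp
  ring

lemma phiNM_pascal {b k : ℕ} (hk : 2 ≤ k) (hkb : k ≤ b) :
    (k + 1) * phiNM Φ ρ (b + 1) (k + 1) + (b + 1 - k) * phiNM Φ ρ (b + 1) k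
      = (b + 1) * phiNM Φ ρ b k := by
  have hup : ((k : ℝ) + 1) * (b + 1).choose (k + 1) = (b + 1) * b.choose k := by
    have h := congrArg (Nat.cast (R := ℝ)) (Nat.add_one_mul_choose_eq b k)
    push_cast at h
    linarith
  have hsame : ((b : ℝ) + 1 - k) * (b + 1).choose k = (b + 1) * b.choose k := by
    have h := congrArg (Nat.cast (R := ℝ)) (Nat.choose_mul_succ_eq b k)
    push_cast [Nat.cast_sub (by omega : k ≤ b + 1)] at h
    linarith
  rw [phiNM_of_two_le Φ ρ (by omega : 2 ≤ k + 1), phiNM_of_two_le Φ ρ hk,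
    phiNM_of_two_le Φ ρ hk, show b + 1 - (k + 1) + 1 = b - k + 1 by omega,
    show k + 1 - 2 = k - 2 + 1 by omega, show b + 1 - k + 1 = b - k + 1 + 1 by omega,
    nablaIter_succ]
  linear_combination (nablaIter (psiOf Φ ρ) (k - 2) (b - k + 1 + 1)
    - nablaIter (psiOf Φ ρ) (k - 2) (b - k + 1)) * hup
    - nablaIter (psiOf Φ ρ) (k - 2) (b - k + 1 + 1) * hsame

lemma sum_Icc_two_phiNM (hΦ1 : Φ 1 = ρ) {n : ℕ} (hn : 1 ≤ n) :
    ∑ m ∈ Icc 2 n, phiNM Φ ρ n m = phiBar Φ ρ n := by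
  induction n, hn using Nat.le_induction with
  | base => simp [phiBar, hΦ1]
  | succ b hb ih =>
    apply mul_left_cancel₀ (by positivity : (b : ℝ) + 1 ≠ 0)
    rw [succ_mul_sum_Icc_two_of_pascal _ hb fun k hk hkb => phiNM_pascal Φ ρ hk hkb, ih]
    linear_combination two_mul_phiNM_two Φ ρ hb

lemma sum_Icc_one_phiNM (hΦ1 : Φ 1 = ρ) {n : ℕ} (hn : 1 ≤ n) :
    ∑ m ∈ Icc 1 n, phiNM Φ ρ n m = Φ n := by
  rw [← add_sum_Ioc_eq_sum_Icc hn, ← Icc_add_one_left_eq_Ioc, one_add_one_eq_two,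
    sum_Icc_two_phiNM Φ ρ hΦ1 hn, phiNM_one, phiBar]
  ring

end RateArray

theorem positivity_gives_consistent_decrement_matrix_general (ρ : ℝ) (Φ : ℕ → ℝ)
    (hΦpos : ∀ n, 1 ≤ n → 0 < Φ n) (hΦ1 : Φ 1 = ρ)
    (hnn : ∀ n m, 1 ≤ m → m ≤ n → 0 ≤ phiNM Φ ρ n m) :
    IsDecrementMatrix (fun n m => phiNM Φ ρ n m / Φ n) ∧
    ∀ b, 1 ≤ b → ConsistencyRec (fun n m => phiNM Φ ρ n m / Φ n) b := by
  refine ⟨⟨fun b k hk hkb => div_nonneg (hnn b k hk hkb) (hΦpos b (hk.trans hkb)).le,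
    fun b hb => ?_⟩, fun b hb => ?_⟩
  · rw [← sum_div, sum_Icc_one_phiNM Φ ρ hΦ1 hb, div_self (hΦpos b hb).ne']
  · refine consistencyRec_div (hΦpos b hb).ne' (hΦpos (b + 1) (by omega)).ne'
      (fun k hk hkb => phiNM_pascal Φ ρ hk hkb) ?_ ?_
    · simp only [phiNM_one]
      push_cast
      ring
    · rw [phiNM_one, two_mul_phiNM_two Φ ρ hb, phiBar, phiBar]
      push_cast
      ring

/-- If `ρ > 0` and `(Φ(n))` is a positive sequence with `Φ(1) = ρ` whose
derived entries `Φ(n:m)` are all nonnegative, then `q(n:m) = Φ(n:m)/Φ(n)` is an infinite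
decrement matrix satisfying the consistency recursion for all `b ≥ 1`. -/
theorem positivity_gives_consistent_decrement_matrix (ρ : ℝ) (hρ : 0 < ρ) (Φ : ℕ → ℝ)
    (hΦpos : ∀ n, 1 ≤ n → 0 < Φ n) (hΦ1 : Φ 1 = ρ)
    (hnn : ∀ n m, 1 ≤ m → m ≤ n → 0 ≤ phiNM Φ ρ n m) :
    IsDecrementMatrix (fun n m => phiNM Φ ρ n m / Φ n) ∧
    ∀ b, 1 ≤ b → ConsistencyRec (fun n m => phiNM Φ ρ n m / Φ n) b :=
  positivity_gives_consistent_decrement_matrix_general ρ Φ hΦpos hΦ1 hnn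
end

section
/- Let ρ be a real number and (Φ(n))_{n≥1} a real sequence with Φ(1) = ρ. Define Φ̄(n) = Φ(n) − ρ·n, Ψ(n) = (Φ̄(n) − Φ̄(n+1))/n, Φ(n:1) = ρ·n and Φ(n:m) = −C(n,m)·∇^{m−2}Ψ(n−m+1) for 2 ≤ m ≤ n. Then for every n ≥ 1, Φ(n) = Φ(n:1) + Φ(n:2) + ⋯ + Φ(n:n). -/
open Finset MeasureTheory

/-!
Under the linear functional `X ^ k ↦ Ψ k` on real polynomials, `X ^ a * (1 - X) ^ j` goes to
`∇^j Ψ (a)`, so `∑_{m ≥ 2} Φ(n:m)` is minus the image of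
`∑_{m=2}^n C(n,m) X^(n-m+1) (1-X)^(m-2)`. After multiplication by `(1 - X)^2` the binomial
theorem for `((1 - X) + X)^n` shows this polynomial to be `∑_{k<n} k X^k`. Hence
`∑_{m ≥ 2} Φ(n:m) = -∑_{k<n} k Ψ(k)`, which telescopes to
`Φ̄(n) - Φ̄(1) = Φ(n) - ρ n`, as `Φ(1) = ρ`.
-/

open Polynomial

section Polynomial

variable {R : Type*} [CommRing R]

theorem one_sub_sq_mul_sum_mul_pow (x : R) (n : ℕ) :
    (1 - x) ^ 2 * ∑ k ∈ range n, (k : R) * x ^ k = x - n * x ^ n + (n - 1) * x ^ (n + 1) := by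
  induction n with
  | zero => simp
  | succ n ih =>
    rw [sum_range_succ, mul_add, ih]
    push_cast
    ring

theorem one_sub_sq_mul_sum_choose_mul_pow (x : R) (n : ℕ) :
    (1 - x) ^ 2 * ∑ m ∈ Icc 2 n, (n.choose m : R) * x ^ (n - m + 1) * (1 - x) ^ (m - 2)
      = x - n * x ^ n + (n - 1) * x ^ (n + 1) := by
  obtain _ | N := n
  · simp
  have hbinom := add_pow (1 - x) x (N + 1)
  rw [sub_add_cancel, one_pow, sum_range_succ', sum_range_succ'] at hbinom
  simp only [zero_add, pow_one, pow_zero, Nat.choose_one_right, Nat.choose_zero_right,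
    Nat.sub_zero, Nat.add_sub_add_right] at hbinom
  push_cast at hbinom
  have hshift : (1 - x) ^ 2 * ∑ m ∈ Icc 2 (N + 1),
        ((N + 1).choose m : R) * x ^ (N + 1 - m + 1) * (1 - x) ^ (m - 2)
      = x * ∑ k ∈ range N, (1 - x) ^ (k + 1 + 1) * x ^ (N - (k + 1))
          * ((N + 1).choose (k + 1 + 1) : R) := by
    rw [← Ico_add_one_right_eq_Icc, sum_Ico_eq_sum_range, Finset.mul_sum, Finset.mul_sum]
    refine sum_congr rfl fun k hk => ?_
    rw [mem_range] at hk
    rw [show N + 1 - (2 + k) + 1 = N - (k + 1) + 1 by omega, add_tsub_cancel_left,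
      add_comm 2 k]
    ring
  rw [hshift]
  push_cast
  linear_combination -x * hbinom

theorem sum_C_choose_mul_X_pow_mul_one_sub_X_pow [IsDomain R] (n : ℕ) :
    ∑ m ∈ Icc 2 n, C (n.choose m : R) * (X ^ (n - m + 1) * (1 - X) ^ (m - 2))
      = ∑ k ∈ range n, C (k : R) * X ^ k := by
  have hne : (1 - X : R[X]) ^ 2 ≠ 0 := pow_ne_zero 2 (sub_ne_zero.mpr (X_ne_C 1).symm)
  apply mul_left_cancel₀ hne
  simp only [map_natCast, ← mul_assoc]
  rw [one_sub_sq_mul_sum_choose_mul_pow, one_sub_sq_mul_sum_mul_pow]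

noncomputable def umbralEval (ψ : ℕ → R) : R[X] →ₗ[R] R :=
  Polynomial.lsum fun k => LinearMap.id.smulRight (ψ k)

theorem umbralEval_X_pow (ψ : ℕ → R) (k : ℕ) : umbralEval ψ (X ^ k) = ψ k := by
  simp [umbralEval, ← monomial_one_right_eq_X_pow]

theorem umbralEval_C_mul (ψ : ℕ → R) (c : R) (p : R[X]) :
    umbralEval ψ (C c * p) = c * umbralEval ψ p := by
  rw [← smul_eq_C_mul, map_smul, smul_eq_mul]

end Polynomial

theorem umbralEval_X_pow_mul_one_sub_X_pow (ψ : ℕ → ℝ) (a j : ℕ) :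
    umbralEval ψ (X ^ a * (1 - X) ^ j) = nablaIter ψ j a := by
  rw [sub_eq_neg_add, add_pow, Finset.mul_sum, map_sum, nablaIter]
  refine sum_congr rfl fun i _ => ?_
  have hterm : (X : ℝ[X]) ^ a * ((-X) ^ i * 1 ^ (j - i) * (j.choose i : ℝ[X]))
      = C ((-1) ^ i * (j.choose i : ℝ)) * X ^ (a + i) := by
    simp only [map_mul, map_pow, map_neg, map_one, map_natCast]
    ring
  rw [hterm, umbralEval_C_mul, umbralEval_X_pow]

theorem sum_choose_mul_nablaIter (ψ : ℕ → ℝ) (n : ℕ) :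
    ∑ m ∈ Icc 2 n, (n.choose m : ℝ) * nablaIter ψ (m - 2) (n - m + 1)
      = ∑ k ∈ range n, k * ψ k := by
  simpa only [map_sum, umbralEval_C_mul, umbralEval_X_pow, umbralEval_X_pow_mul_one_sub_X_pow]
    using congrArg (umbralEval ψ) (sum_C_choose_mul_X_pow_mul_one_sub_X_pow (R := ℝ) n)

theorem sum_mul_psiOf (Φ : ℕ → ℝ) (ρ : ℝ) {n : ℕ} (hn : 1 ≤ n) :
    ∑ k ∈ range n, k * psiOf Φ ρ k = phiBar Φ ρ 1 - phiBar Φ ρ n := by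
  induction n, hn using Nat.le_induction with
  | base => simp
  | succ n hn ih =>
    have hn0 : (n : ℝ) ≠ 0 := by positivity
    rw [sum_range_succ, ih, psiOf, mul_div_cancel₀ _ hn0]
    ring

theorem phiNM_of_ne_one (Φ : ℕ → ℝ) (ρ : ℝ) (n : ℕ) {m : ℕ} (hm : m ≠ 1) :
    phiNM Φ ρ n m = -((n.choose m : ℝ) * nablaIter (psiOf Φ ρ) (m - 2) (n - m + 1)) := by
  rw [phiNM, if_neg hm, neg_mul]

/-- For any real `ρ` and real sequence `Φ` with `Φ(1) = ρ`, one has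
`Φ(n) = Φ(n:1) + Φ(n:2) + ⋯ + Φ(n:n)` for every `n ≥ 1`. -/
theorem phi_eq_sum_phiNM (ρ : ℝ) (Φ : ℕ → ℝ) (hΦ1 : Φ 1 = ρ) :
    ∀ n, 1 ≤ n → Φ n = ∑ m ∈ Finset.Icc 1 n, phiNM Φ ρ n m := by
  intro n hn
  have hphiBar_one : phiBar Φ ρ 1 = 0 := by simp [phiBar, hΦ1]
  have htail : ∑ m ∈ Icc 2 n, phiNM Φ ρ n m = phiBar Φ ρ n := by
    rw [sum_congr rfl fun m hm => phiNM_of_ne_one Φ ρ n (by rw [mem_Icc] at hm; omega),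
      sum_neg_distrib, sum_choose_mul_nablaIter, sum_mul_psiOf Φ ρ hn, hphiBar_one]
    ring
  rw [← insert_Icc_add_one_left_eq_Icc hn, sum_insert (by simp), one_add_one_eq_two, htail, phiNM, if_pos rfl,
    phiBar]
  ring
end

section
/- Let ρ be a real number and (Φ(n))_{n≥1} a real sequence. Define Φ̄(n) = Φ(n) − ρ·n, Ψ(n) = (Φ̄(n) − Φ̄(n+1))/n and Φ(n:m) = −C(n,m)·∇^{m−2}Ψ(n−m+1) for 2 ≤ m ≤ n. Then the Pascal-type recursion Φ(n:m) = ((m+1)/(n+1))·Φ(n+1:m+1) + ((n−m+1)/(n+1))·Φ(n+1:m) holds for all 2 ≤ m ≤ n. -/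
open Finset MeasureTheory

lemma nabla_eq_aux (c : ℕ → ℝ) (j n : ℕ) :
    nablaIter c j n = (-1 : ℝ)^j * (fwdDiff 1)^[j] c n := by
  rw [fwdDiff_iter_eq_sum_shift, nablaIter, Finset.mul_sum]
  refine Finset.sum_congr rfl fun i hi => ?_
  rw [Finset.mem_range] at hi
  have hij : i ≤ j := Nat.lt_succ_iff.mp hi
  rw [zsmul_eq_mul]
  push_cast
  rw [smul_eq_mul, mul_one]
  have h1 : (-1:ℝ)^j * (-1:ℝ)^(j-i) = (-1:ℝ)^i := by
    rw [← pow_add]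
    have : j + (j - i) = i + 2 * (j - i) := by omega
    rw [this, pow_add, pow_mul]
    simp
  rw [← mul_assoc, ← mul_assoc, h1]

lemma nabla_succ_aux (c : ℕ → ℝ) (j n : ℕ) :
    nablaIter c (j+1) n = nablaIter c j n - nablaIter c j (n+1) := by
  rw [nabla_eq_aux, nabla_eq_aux, nabla_eq_aux, Function.iterate_succ_apply', fwdDiff]
  ring_nf

/-- The array `Φ(n:m)`, `2 ≤ m ≤ n`, satisfies the Pascal-type recursion
`Φ(n:m) = ((m+1)/(n+1)) Φ(n+1:m+1) + ((n-m+1)/(n+1)) Φ(n+1:m)`. -/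
theorem phiNM_pascal_recursion (ρ : ℝ) (Φ : ℕ → ℝ) :
    ∀ n m, 2 ≤ m → m ≤ n →
      phiNM Φ ρ n m = ((m : ℝ) + 1) / ((n : ℝ) + 1) * phiNM Φ ρ (n + 1) (m + 1)
        + ((n : ℝ) - (m : ℝ) + 1) / ((n : ℝ) + 1) * phiNM Φ ρ (n + 1) m := by
  intro n m hm hmn
  obtain ⟨k, rfl⟩ : ∃ k, m = k + 2 := ⟨m - 2, by omega⟩
  obtain ⟨d, rfl⟩ : ∃ d, n = k + 2 + d := ⟨n - (k+2), by omega⟩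
  rw [phiNM, phiNM, phiNM, if_neg (by omega), if_neg (by omega), if_neg (by omega)]
  have e1 : k + 2 - 2 = k := by omega
  have e2 : k + 2 + d - (k+2) + 1 = d + 1 := by omega
  have e3 : k + 2 + 1 - 2 = k + 1 := by omega
  have e4 : k + 2 + d + 1 - (k + 2 + 1) + 1 = d + 1 := by omega
  have e5 : k + 2 + d + 1 - (k + 2) + 1 = d + 2 := by omega
  rw [e1, e2, e3, e4, e5, nabla_succ_aux]
  set A := nablaIter (psiOf Φ ρ) k (d+1) with hA
  set B := nablaIter (psiOf Φ ρ) k (d+1+1) with hB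
  have c1 : ((k+2+d+1) * (k+2+d).choose (k+2) : ℕ) = ((k+2+d+1).choose (k+3) * (k+3) : ℕ) := by
    have := Nat.add_one_mul_choose_eq (k+2+d) (k+2)
    simpa [Nat.succ_eq_add_one] using this
  have c2 : ((k+2+d).choose (k+2) * (k+2+d+1) : ℕ) = ((k+2+d+1).choose (k+2) * (d+1) : ℕ) := by
    have h := Nat.choose_mul_succ_eq (k+2+d) (k+2)
    rw [show k+2+d+1-(k+2) = d+1 by omega] at h
    exact h
  have hne : ((k:ℝ)+2+(d:ℝ)+1) ≠ 0 := by positivity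
  have c1' : ((k:ℝ)+2+(d:ℝ)+1) * ((k+2+d).choose (k+2) : ℝ) = ((k+2+d+1).choose (k+3) : ℝ) * ((k:ℝ)+3) := by
    exact_mod_cast congrArg (Nat.cast : ℕ → ℝ) c1
  have c2' : ((k+2+d).choose (k+2) : ℝ) * ((k:ℝ)+2+(d:ℝ)+1) = ((k+2+d+1).choose (k+2) : ℝ) * ((d:ℝ)+1) := by
    exact_mod_cast congrArg (Nat.cast : ℕ → ℝ) c2
  push_cast
  rw [div_mul_eq_mul_div, div_mul_eq_mul_div, ← add_div, eq_div_iff hne]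
  linear_combination (B - A) * c1' - B * c2'
end
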